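/- arXiv:math/0601022 — 9 statements merged into one kernel-verified Lean document; each statement's English description precedes it below -/
import Mathlib

section
/- Let S be a submodule of F[x,y]_l (polynomials of y-degree at most l, viewed as a free F[x]-module with basis 1, y, ..., y^l) equipped with a monomial order >. If {g₀, g₁, ..., g_s} generates S and the y-degrees of the leading terms of the gᵢ are pairwise distinct, then {g₀, g₁, ..., g_s} is a Gröbner basis of S with respect to >. -/
open Polynomial

/-- Key of the leading monomial of `f ∈ F[x][y]` with respect to the `(1,u)`-weighted
order `>_u`: the pair (weighted degree, y-degree), compared lexicographically. -/
noncomputable def lmKey (F : Type*) [Field F] (u : ℕ) (f : Polynomial (Polynomial F)) : Lex (ℕ × ℕ) :=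
  f.support.sup (fun j => toLex ((f.coeff j).natDegree + u * j, j))

/-- `y`-degree of the leading term of `f` with respect to `>_u`. -/
noncomputable def lmY (F : Type*) [Field F] (u : ℕ) (f : Polynomial (Polynomial F)) : ℕ :=
  (ofLex (lmKey F u f)).2

/-- `x`-degree of the leading term of `f` with respect to `>_u`. -/
noncomputable def lmX (F : Type*) [Field F] (u : ℕ) (f : Polynomial (Polynomial F)) : ℕ :=
  (ofLex (lmKey F u f)).1 - u * lmY F u f

section aux

variable {F : Type*} [Field F] (u : ℕ)

/-- Any monomial actually appearing in `f` has key at most `lmKey f`. -/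
lemma coeff_le_lmKey (f : Polynomial (Polynomial F)) (j e : ℕ)
    (h : (f.coeff j).coeff e ≠ 0) : toLex (e + u * j, j) ≤ lmKey F u f := by
  have hj : j ∈ f.support := by
    rw [Polynomial.mem_support_iff]
    intro h0; rw [h0] at h; simp at h
  have he : e ≤ (f.coeff j).natDegree := Polynomial.le_natDegree_of_ne_zero h
  calc toLex (e + u * j, j) ≤ toLex ((f.coeff j).natDegree + u * j, j) := by
        rw [Prod.Lex.le_iff]; simp only [ofLex_toLex]; omega
    _ ≤ lmKey F u f :=
        Finset.le_sup (f := fun j => toLex ((f.coeff j).natDegree + u * j, j)) hj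

lemma lm_spec (f : Polynomial (Polynomial F)) (hf : f ≠ 0) :
    lmKey F u f = toLex ((f.coeff (lmY F u f)).natDegree + u * lmY F u f, lmY F u f)
    ∧ f.coeff (lmY F u f) ≠ 0
    ∧ lmX F u f = (f.coeff (lmY F u f)).natDegree := by
  obtain ⟨j, hj, hkey⟩ := Finset.exists_mem_eq_sup f.support
    (Polynomial.support_nonempty.mpr hf) (fun j => toLex ((f.coeff j).natDegree + u * j, j))
  have hkey' : lmKey F u f = toLex ((f.coeff j).natDegree + u * j, j) := hkey
  have hY : lmY F u f = j := by
    unfold lmY; rw [hkey']; rfl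
  refine ⟨by rw [hY]; exact hkey', by rw [hY]; exact Polynomial.mem_support_iff.mp hj, ?_⟩
  unfold lmX
  rw [hY, hkey']
  simp only [ofLex_toLex]
  omega

lemma lm_lead_ne_zero (f : Polynomial (Polynomial F)) (hf : f ≠ 0) :
    (f.coeff (lmY F u f)).coeff (lmX F u f) ≠ 0 := by
  obtain ⟨_, h2, h3⟩ := lm_spec u f hf
  rw [h3]
  exact mt Polynomial.leadingCoeff_eq_zero.mp h2

lemma coeff_smul' (a : Polynomial F) (g : Polynomial (Polynomial F)) (j : ℕ) :
    (a • g).coeff j = a * g.coeff j := by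
  rw [Polynomial.coeff_smul, smul_eq_mul]

lemma smul_ne_zero' (a : Polynomial F) (ha : a ≠ 0) (g : Polynomial (Polynomial F))
    (hg : g ≠ 0) : a • g ≠ 0 := by
  intro h
  have := congrArg (fun p => Polynomial.coeff p g.natDegree) h
  simp only [coeff_smul' a g, Polynomial.coeff_zero] at this
  exact mul_ne_zero ha (mt Polynomial.leadingCoeff_eq_zero.mp hg) this

lemma lmKey_smul (a : Polynomial F) (ha : a ≠ 0) (g : Polynomial (Polynomial F)) (hg : g ≠ 0) :
    lmKey F u (a • g) =
      toLex (a.natDegree + (g.coeff (lmY F u g)).natDegree + u * lmY F u g, lmY F u g) := by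
  obtain ⟨hk, hc, _⟩ := lm_spec u g hg
  apply le_antisymm
  · apply Finset.sup_le
    intro j hj
    have hcj : g.coeff j ≠ 0 := by
      have := Polynomial.mem_support_iff.mp hj
      rw [coeff_smul'] at this
      intro h0; rw [h0, mul_zero] at this; exact this rfl
    rw [coeff_smul', Polynomial.natDegree_mul ha hcj]
    have hle : toLex ((g.coeff j).natDegree + u * j, j) ≤ lmKey F u g :=
      Finset.le_sup (f := fun j => toLex ((g.coeff j).natDegree + u * j, j))
        (Polynomial.mem_support_iff.mpr hcj)
    rw [hk, Prod.Lex.le_iff] at hle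
    rw [Prod.Lex.le_iff]
    simp only [ofLex_toLex] at hle ⊢
    omega
  · have hj0 : lmY F u g ∈ (a • g).support := by
      rw [Polynomial.mem_support_iff, coeff_smul']
      exact mul_ne_zero ha hc
    have := Finset.le_sup (f := fun j => toLex (((a • g).coeff j).natDegree + u * j, j)) hj0
    refine le_trans (le_of_eq ?_) this
    rw [coeff_smul', Polynomial.natDegree_mul ha hc]

lemma lmY_smul (a : Polynomial F) (ha : a ≠ 0) (g : Polynomial (Polynomial F)) (hg : g ≠ 0) :
    lmY F u (a • g) = lmY F u g := by
  unfold lmY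
  rw [lmKey_smul u a ha g hg]
  rfl

lemma lmX_smul (a : Polynomial F) (ha : a ≠ 0) (g : Polynomial (Polynomial F)) (hg : g ≠ 0) :
    lmX F u (a • g) = a.natDegree + lmX F u g := by
  obtain ⟨_, hcg, h3⟩ := lm_spec u g hg
  obtain ⟨_, _, h3'⟩ := lm_spec u (a • g) (smul_ne_zero' a ha g hg)
  rw [h3', lmY_smul u a ha g hg, coeff_smul', Polynomial.natDegree_mul ha hcg, h3]

end aux

/-- If `g₀,…,g_s` generate a submodule `S` of `F[x,y]_l` and the `y`-degrees of their
leading terms (w.r.t. a weighted monomial order `>_u`) are pairwise distinct, then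
`{g₀,…,g_s}` is a Gröbner basis of `S`: the leading monomial of every nonzero `f ∈ S`
is divisible by the leading monomial of some `gᵢ` (same `y`-degree, smaller or equal
`x`-degree). -/
theorem stmt5 {F : Type*} [Field F] (u l : ℕ) (hl : 1 ≤ l)
    (S : Submodule (Polynomial F) (Polynomial (Polynomial F)))
    (hS : S ≤ Polynomial.degreeLE (Polynomial F) (l : WithBot ℕ))
    (s : ℕ) (g : Fin (s + 1) → Polynomial (Polynomial F))
    (hg0 : ∀ i, g i ≠ 0)
    (hspan : Submodule.span (Polynomial F) (Set.range g) = S)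
    (hdist : Function.Injective fun i => lmY F u (g i)) :
    ∀ f ∈ S, f ≠ 0 → ∃ i, lmY F u (g i) = lmY F u f ∧ lmX F u (g i) ≤ lmX F u f := by
  intro f hf hf0
  rw [← hspan] at hf
  obtain ⟨c, hc⟩ := (Submodule.mem_span_range_iff_exists_fun (Polynomial F)).mp hf
  classical
  set T : Finset (Fin (s + 1)) := Finset.univ.filter (fun i => c i ≠ 0) with hT
  have hfT : f = ∑ i ∈ T, c i • g i := by
    rw [← hc, hT]
    rw [Finset.sum_filter]
    congr 1; funext i
    by_cases h : c i = 0 <;> simp [h]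
  have hTne : T.Nonempty := by
    rcases Finset.eq_empty_or_nonempty T with h | h
    · rw [h, Finset.sum_empty] at hfT; exact absurd hfT hf0
    · exact h
  obtain ⟨i0, hi0T, hmax⟩ := Finset.exists_mem_eq_sup T hTne (fun i => lmKey F u (c i • g i))
  have hci0 : c i0 ≠ 0 := (Finset.mem_filter.mp hi0T).2
  have hh0 : ∀ i ∈ T, c i • g i ≠ 0 := fun i hi =>
    smul_ne_zero' (c i) (Finset.mem_filter.mp hi).2 (g i) (hg0 i)
  set j0 := lmY F u (g i0) with hj0def
  set d0 := (c i0).natDegree + lmX F u (g i0) with hd0def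
  have hYi0 : lmY F u (c i0 • g i0) = j0 := lmY_smul u _ hci0 _ (hg0 i0)
  have hXi0 : lmX F u (c i0 • g i0) = d0 := lmX_smul u _ hci0 _ (hg0 i0)
  have hki0 : lmKey F u (c i0 • g i0) = toLex (d0 + u * j0, j0) := by
    obtain ⟨h1, _, h3⟩ := lm_spec u (c i0 • g i0) (hh0 i0 hi0T)
    rw [h1, hYi0]
    rw [hYi0, hXi0] at h3
    rw [← h3]
  -- coefficient of f at (j0, d0)
  have hcoeff_sum : ∀ j, f.coeff j = ∑ i ∈ T, (c i • g i).coeff j := by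
    intro j; rw [hfT, Polynomial.finset_sum_coeff]
  have hcoeff2 : ∀ j e, (f.coeff j).coeff e = ∑ i ∈ T, ((c i • g i).coeff j).coeff e := by
    intro j e; rw [hcoeff_sum j, Polynomial.finset_sum_coeff]
  have hlt : ∀ i ∈ T, i ≠ i0 → lmKey F u (c i • g i) < lmKey F u (c i0 • g i0) := by
    intro i hi hne
    refine lt_of_le_of_ne (hmax ▸ Finset.le_sup (f := fun i => lmKey F u (c i • g i)) hi) (fun heq => hne ?_)
    have hYi : lmY F u (c i • g i) = lmY F u (g i) :=
      lmY_smul u _ (Finset.mem_filter.mp hi).2 _ (hg0 i)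
    have : lmY F u (c i • g i) = lmY F u (c i0 • g i0) := by
      unfold lmY; rw [heq]
    rw [hYi, hYi0, hj0def] at this
    exact hdist this
  have hzero : ∀ i ∈ T, i ≠ i0 → ((c i • g i).coeff j0).coeff d0 = 0 := by
    intro i hi hne
    by_contra hne0
    have h1 := coeff_le_lmKey u (c i • g i) j0 d0 hne0
    have h2 := hlt i hi hne
    rw [hki0] at h2
    exact absurd (lt_of_le_of_lt h1 h2) (lt_irrefl _)
  have hlead : ((c i0 • g i0).coeff j0).coeff d0 ≠ 0 := by
    have := lm_lead_ne_zero u (c i0 • g i0) (hh0 i0 hi0T)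
    rwa [hYi0, hXi0] at this
  have hfc : (f.coeff j0).coeff d0 ≠ 0 := by
    rw [hcoeff2, Finset.sum_eq_single i0 hzero (fun h => absurd hi0T h)]
    exact hlead
  -- upper bound on lmKey f
  have hup : lmKey F u f ≤ toLex (d0 + u * j0, j0) := by
    rw [← hki0]
    apply Finset.sup_le
    intro j hj
    have hcj : f.coeff j ≠ 0 := Polynomial.mem_support_iff.mp hj
    have hlc : (f.coeff j).coeff ((f.coeff j).natDegree) ≠ 0 :=
      mt Polynomial.leadingCoeff_eq_zero.mp hcj
    rw [hcoeff2] at hlc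
    obtain ⟨i, hiT, hi⟩ := Finset.exists_ne_zero_of_sum_ne_zero hlc
    calc toLex ((f.coeff j).natDegree + u * j, j) ≤ lmKey F u (c i • g i) :=
          coeff_le_lmKey u _ j _ hi
      _ ≤ lmKey F u (c i0 • g i0) := hmax ▸ Finset.le_sup (f := fun i => lmKey F u (c i • g i)) hiT
  -- lower bound
  have hlow : toLex (d0 + u * j0, j0) ≤ lmKey F u f := by
    have hj0mem : j0 ∈ f.support := by
      rw [Polynomial.mem_support_iff]
      intro h0; rw [h0] at hfc; simp at hfc
    have hd0le : d0 ≤ (f.coeff j0).natDegree := Polynomial.le_natDegree_of_ne_zero hfc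
    calc toLex (d0 + u * j0, j0) ≤ toLex ((f.coeff j0).natDegree + u * j0, j0) := by
          rw [Prod.Lex.le_iff]; simp only [ofLex_toLex]; omega
      _ ≤ lmKey F u f :=
        Finset.le_sup (f := fun j => toLex ((f.coeff j).natDegree + u * j, j)) hj0mem
  have hkeyf : lmKey F u f = toLex (d0 + u * j0, j0) := le_antisymm hup hlow
  have hYf : lmY F u f = j0 := by unfold lmY; rw [hkeyf]; rfl
  have hXf : lmX F u f = d0 := by
    unfold lmX
    rw [hkeyf, hYf]
    simp only [ofLex_toLex]
    omega
  exact ⟨i0, by rw [hYf], by rw [hXf, hd0def]; omega⟩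
end

section
/- The ideal I_{v,m} of polynomials in F[x,y] having multiplicity at least m at each point Pᵢ = (αᵢ, vᵢ) equals ⟨y - h_v, η⟩^m = ⟨(y - h_v)^i η^{m-i} : 0 ≤ i ≤ m⟩, where η = ∏_{j=1}^n (x - α_j) and h_v is the unique polynomial of degree < n with h_v(αᵢ) = vᵢ. -/
open Polynomial

/-- `f(x+a, y+b)`: shift of a bivariate polynomial `f ∈ F[x][y]` by the point `(a,b)`. -/
noncomputable def shiftXY (F : Type*) [Field F] (f : Polynomial (Polynomial F)) (a b : F) :
    Polynomial (Polynomial F) :=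
  Polynomial.eval₂
    ((Polynomial.C : Polynomial F →+* Polynomial (Polynomial F)).comp
      (Polynomial.aeval (Polynomial.X + Polynomial.C a)).toRingHom)
    (Polynomial.X + Polynomial.C (Polynomial.C b)) f

/-- `f` has multiplicity at least `m` at the point `(a,b)`. -/
def multGE (F : Type*) [Field F] (f : Polynomial (Polynomial F)) (a b : F) (m : ℕ) : Prop :=
  ∀ i j : ℕ, i + j < m → ((shiftXY F f a b).coeff j).coeff i = 0

namespace Stmt6Aux

variable {F : Type*} [Field F]

/-! ### The shift automorphism -/

noncomputable def shiftHom (a b : F) : Polynomial (Polynomial F) →+* Polynomial (Polynomial F) :=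
  eval₂RingHom ((C : Polynomial F →+* Polynomial (Polynomial F)).comp
      (aeval (X + C a)).toRingHom) (X + C (C b))

lemma shiftHom_apply (a b : F) (f : Polynomial (Polynomial F)) :
    shiftHom a b f = shiftXY F f a b := rfl

lemma aeval_shift_eq (a : F) (p : F[X]) : aeval (X + C a) p = taylor a p := by
  rw [taylor_apply, aeval_def, algebraMap_eq]
  rfl

lemma shiftHom_C (a b : F) (p : F[X]) : shiftHom a b (C p) = C (taylor a p) := by
  rw [shiftHom, coe_eval₂RingHom, eval₂_C]
  simp [aeval_shift_eq]

lemma shiftHom_X (a b : F) : shiftHom a b (X : Polynomial (Polynomial F)) = X + C (C b) := by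
  rw [shiftHom, coe_eval₂RingHom, eval₂_X]

lemma shiftHom_comp (a b : F) :
    (shiftHom a b).comp (shiftHom (-a) (-b)) = RingHom.id _ := by
  apply Polynomial.ringHom_ext'
  · apply Polynomial.ringHom_ext
    · intro p
      simp only [RingHom.comp_apply, RingHom.coe_comp, Function.comp_apply, RingHom.id_apply]
      rw [shiftHom_C, shiftHom_C, taylor_taylor]
      simp
    · simp only [RingHom.comp_apply, RingHom.coe_comp, Function.comp_apply, RingHom.id_apply]
      rw [shiftHom_C, shiftHom_C, taylor_taylor]
      simp
  · simp only [RingHom.comp_apply, RingHom.coe_comp, Function.comp_apply, RingHom.id_apply]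
    rw [shiftHom_X, map_add, shiftHom_X, shiftHom_C]
    simp [taylor_C]

noncomputable def shiftEquiv (a b : F) :
    Polynomial (Polynomial F) ≃+* Polynomial (Polynomial F) :=
  RingEquiv.ofRingHom (shiftHom a b) (shiftHom (-a) (-b)) (shiftHom_comp a b)
    (by simpa using shiftHom_comp (-a) (-b))

lemma shiftEquiv_apply (a b : F) (f : Polynomial (Polynomial F)) :
    shiftEquiv a b f = shiftXY F f a b := rfl

/-! ### The ideal of polynomials with small coefficients vanishing -/

def lowSet (F : Type*) [Field F] (m : ℕ) : Set (Polynomial (Polynomial F)) :=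
  {g | ∀ i j : ℕ, i + j < m → (g.coeff j).coeff i = 0}

lemma mul_mem_lowSet {p q : ℕ} {r s : Polynomial (Polynomial F)}
    (hr : r ∈ lowSet F p) (hs : s ∈ lowSet F q) : r * s ∈ lowSet F (p + q) := by
  intro i j hij
  rw [coeff_mul, finset_sum_coeff]
  refine Finset.sum_eq_zero fun x hx => ?_
  rw [coeff_mul]
  refine Finset.sum_eq_zero fun y hy => ?_
  have hx' := Finset.HasAntidiagonal.mem_antidiagonal.mp hx
  have hy' := Finset.HasAntidiagonal.mem_antidiagonal.mp hy
  rcases lt_or_ge (y.1 + x.1) p with h | h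
  · rw [hr _ _ h, zero_mul]
  · rw [hs y.2 x.2 (by omega), mul_zero]

noncomputable def lowIdeal (F : Type*) [Field F] (m : ℕ) : Ideal (Polynomial (Polynomial F)) where
  carrier := lowSet F m
  add_mem' := fun {a b} ha hb i j h => by simp [ha i j h, hb i j h]
  zero_mem' := fun i j h => by simp
  smul_mem' := fun c x hx => by
    have := mul_mem_lowSet (p := 0) (q := m) (r := c) (s := x)
      (fun i j h => absurd h (by omega)) hx
    simpa using this

lemma mem_lowIdeal {m : ℕ} {g : Polynomial (Polynomial F)} :
    g ∈ lowIdeal F m ↔ ∀ i j : ℕ, i + j < m → (g.coeff j).coeff i = 0 := Iff.rfl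

noncomputable def NId (F : Type*) [Field F] : Ideal (Polynomial (Polynomial F)) :=
  Ideal.span {X, C X}

lemma X_mem_NId : (X : Polynomial (Polynomial F)) ∈ NId F :=
  Ideal.subset_span (by simp)

lemma CX_mem_NId : (C X : Polynomial (Polynomial F)) ∈ NId F :=
  Ideal.subset_span (by simp)

lemma ideal_pow_add {R : Type*} [CommRing R] (I : Ideal R) (a b : ℕ) :
    I ^ (a + b) = I ^ a * I ^ b := by
  induction b with
  | zero => rw [Nat.add_zero, pow_zero, mul_one]
  | succ b ih =>
    rw [Nat.add_succ, Submodule.pow_succ, Submodule.pow_succ, ih, mul_assoc]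

lemma NId_le_low1 : NId F ≤ lowIdeal F 1 := by
  rw [NId, Ideal.span_le]
  rintro g (rfl | rfl) <;> intro i j h <;>
    · have hi : i = 0 := by omega
      have hj : j = 0 := by omega
      subst hi hj
      simp [coeff_X]

lemma NId_pow_le (m : ℕ) : NId F ^ m ≤ lowIdeal F m := by
  induction m with
  | zero => exact fun f _ i j h => absurd h (by omega)
  | succ m ih =>
    refine le_trans (le_of_eq (Submodule.pow_succ (NId F))) ?_
    refine Ideal.mul_le.mpr fun r hr s hs => ?_
    exact mul_mem_lowSet (ih hr) (NId_le_low1 hs)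

lemma low_le_NId_pow (m : ℕ) : lowIdeal F m ≤ NId F ^ m := by
  intro g hg
  rw [Polynomial.as_sum_support g]
  refine Submodule.sum_mem _ fun j hj => ?_
  rw [← C_mul_X_pow_eq_monomial]
  by_cases hjm : m ≤ j
  · have hX : (X : Polynomial (Polynomial F)) ^ j ∈ NId F ^ m :=
      Ideal.pow_le_pow_right hjm (Ideal.pow_mem_pow X_mem_NId j)
    exact Ideal.mul_mem_left _ _ hX
  · push_neg at hjm
    obtain ⟨q, hq⟩ := (X_pow_dvd_iff (n := m - j)).mpr fun d hd => hg d j (by omega)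
    rw [hq, map_mul, map_pow]
    have h1 : (C (X : F[X])) ^ (m - j) * (X : Polynomial (Polynomial F)) ^ j
        ∈ NId F ^ (m - j) * NId F ^ j :=
      Ideal.mul_mem_mul (Ideal.pow_mem_pow CX_mem_NId _) (Ideal.pow_mem_pow X_mem_NId j)
    rw [show NId F ^ (m - j) * NId F ^ j = NId F ^ m by
      rw [← ideal_pow_add, Nat.sub_add_cancel (le_of_lt hjm)]] at h1
    have heq : C (X : F[X]) ^ (m - j) * C q * X ^ j
        = C q * (C (X : F[X]) ^ (m - j) * X ^ j) := by ring
    rw [heq]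
    exact Ideal.mul_mem_left _ _ h1

lemma NId_pow_eq (m : ℕ) : NId F ^ m = lowIdeal F m :=
  le_antisymm (NId_pow_le m) (low_le_NId_pow m)

/-! ### The maximal ideal at a point -/

noncomputable def ptIdeal (a b : F) : Ideal (Polynomial (Polynomial F)) :=
  Ideal.span {X - C (C b), C (X - C a)}

noncomputable def epsHom (a b : F) : Polynomial (Polynomial F) →+* F :=
  eval₂RingHom (evalRingHom a) b

lemma epsHom_C (a b : F) (p : F[X]) : epsHom a b (C p) = p.eval a := by
  simp [epsHom]

lemma epsHom_X (a b : F) : epsHom a b (X : Polynomial (Polynomial F)) = b := by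
  simp [epsHom]

lemma epsHom_eval' (a : F) (p : F[X]) (f : Polynomial (Polynomial F)) :
    (f.eval p).eval a = epsHom a (p.eval a) f := by
  have h : epsHom a (p.eval a) = (evalRingHom a).comp (evalRingHom p) := by
    apply Polynomial.ringHom_ext <;> intros <;> simp [epsHom_C, epsHom_X]
  rw [h]
  simp

lemma epsHom_eval (a b : F) (f : Polynomial (Polynomial F)) :
    epsHom a b f = (f.eval (C b)).eval a := by
  rw [epsHom_eval' a (C b) f, eval_C]

lemma mem_ptIdeal_iff (a b : F) (f : Polynomial (Polynomial F)) :
    f ∈ ptIdeal a b ↔ epsHom a b f = 0 := by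
  constructor
  · intro hf
    have hle : ptIdeal a b ≤ RingHom.ker (epsHom a b) := by
      rw [ptIdeal, Ideal.span_le]
      rintro g (rfl | rfl) <;> simp [RingHom.mem_ker, epsHom_C, epsHom_X]
    exact hle hf
  · intro hf
    obtain ⟨q, hq⟩ := X_sub_C_dvd_sub_C_eval (a := C b) (p := f)
    have h1 : f - C (f.eval (C b)) ∈ ptIdeal a b := by
      rw [hq]
      exact Ideal.mul_mem_right _ _ (Ideal.subset_span (by simp))
    have h2 : C (f.eval (C b)) ∈ ptIdeal a b := by
      have hev : (f.eval (C b)).eval a = 0 := by rw [← epsHom_eval, hf]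
      obtain ⟨q', hq'⟩ : X - C a ∣ f.eval (C b) := by
        have := X_sub_C_dvd_sub_C_eval (a := a) (p := f.eval (C b))
        rwa [hev, map_zero, sub_zero] at this
      rw [hq', map_mul]
      exact Ideal.mul_mem_right _ _ (Ideal.subset_span (by simp))
    simpa using add_mem h1 h2

lemma map_shiftEquiv_ptIdeal (a b : F) :
    Ideal.map (shiftEquiv a b) (ptIdeal a b) = NId F := by
  rw [ptIdeal, Ideal.map_span, NId]
  congr 1
  rw [Set.image_insert_eq, Set.image_singleton]
  have e1 : (shiftEquiv a b) (X - C (C b)) = X := by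
    show shiftHom a b (X - C (C b)) = X
    rw [map_sub, shiftHom_X, shiftHom_C, taylor_C]
    ring
  have e2 : (shiftEquiv a b) (C (X - C a)) = C X := by
    show shiftHom a b (C (X - C a)) = C X
    rw [shiftHom_C, map_sub, taylor_X, taylor_C]
    congr 1
    ring
  rw [e1, e2]

lemma mem_ptIdeal_pow_iff (a b : F) (m : ℕ) (f : Polynomial (Polynomial F)) :
    f ∈ ptIdeal a b ^ m ↔ shiftXY F f a b ∈ NId F ^ m := by
  have h := Ideal.apply_mem_of_equiv_iff (I := ptIdeal a b ^ m) (f := shiftEquiv a b) (x := f)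
  rw [Ideal.map_pow, map_shiftEquiv_ptIdeal] at h
  rw [← h, shiftEquiv_apply]

lemma multGE_iff (a b : F) (m : ℕ) (f : Polynomial (Polynomial F)) :
    multGE F f a b m ↔ f ∈ ptIdeal a b ^ m := by
  rw [mem_ptIdeal_pow_iff, NId_pow_eq]
  exact Iff.rfl

/-! ### Coprimality and products -/

lemma prod_eq_inf_of_pairwise {R : Type*} [CommRing R] {ι : Type*} [DecidableEq ι]
    (s : Finset ι) (J : ι → Ideal R)
    (h : ∀ i ∈ s, ∀ j ∈ s, i ≠ j → J i ⊔ J j = ⊤) :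
    ∏ i ∈ s, J i = ⨅ i ∈ s, J i := by
  induction s using Finset.induction_on with
  | empty => simp [Ideal.one_eq_top]
  | @insert a s ha ih =>
    rw [Finset.prod_insert ha]
    have hcop : J a ⊔ (⨅ i ∈ s, J i) = ⊤ :=
      Ideal.sup_iInf_eq_top fun i hi =>
        h a (Finset.mem_insert_self a s) i (Finset.mem_insert_of_mem hi)
          (fun hai => ha (hai ▸ hi))
    rw [ih fun i hi j hj hij =>
      h i (Finset.mem_insert_of_mem hi) j (Finset.mem_insert_of_mem hj) hij]
    rw [Ideal.mul_eq_inf_of_coprime hcop]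
    exact (Finset.iInf_insert a s J).symm

lemma ptIdeal_coprime {a a' b b' : F} (hne : a ≠ a') :
    ptIdeal (F := F) a b ⊔ ptIdeal a' b' = ⊤ := by
  rw [Ideal.eq_top_iff_one]
  have h1 : (C (X - C a) : Polynomial (Polynomial F)) ∈ ptIdeal a b ⊔ ptIdeal a' b' :=
    Ideal.mem_sup_left (Ideal.subset_span (by simp))
  have h2 : (C (X - C a') : Polynomial (Polynomial F)) ∈ ptIdeal a b ⊔ ptIdeal a' b' :=
    Ideal.mem_sup_right (Ideal.subset_span (by simp))
  have h3 : (C (C (a' - a)) : Polynomial (Polynomial F)) ∈ ptIdeal a b ⊔ ptIdeal a' b' := by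
    have := sub_mem h1 h2
    convert this using 1
    rw [← map_sub]
    congr 1
    rw [map_sub]
    ring
  have h4 := Ideal.mul_mem_left _ (C (C (a' - a)⁻¹) : Polynomial (Polynomial F)) h3
  rwa [← map_mul, ← map_mul, inv_mul_cancel₀ (sub_ne_zero.mpr (Ne.symm hne)), map_one, map_one]
    at h4

/-! ### Binomial expansion of a span of a pair -/

lemma span_pair_pow {R : Type*} [CommRing R] (A B : R) (m : ℕ) :
    (Ideal.span {A, B}) ^ m
      = Ideal.span {g | ∃ i ≤ m, g = A ^ i * B ^ (m - i)} := by
  induction m with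
  | zero =>
    rw [pow_zero]
    symm
    rw [Ideal.one_eq_top, Ideal.eq_top_iff_one]
    exact Ideal.subset_span ⟨0, le_rfl, by simp⟩
  | succ m ih =>
    apply le_antisymm
    · refine le_trans (le_of_eq (Submodule.pow_succ (Ideal.span {A, B}))) ?_
      rw [ih]
      refine Ideal.mul_le.mpr fun r hr s hs => ?_
      have h1 : Ideal.span {g | ∃ i ≤ m, g = A ^ i * B ^ (m - i)} * Ideal.span {A, B}
          ≤ Ideal.span {g | ∃ i ≤ m + 1, g = A ^ i * B ^ (m + 1 - i)} := by
        rw [Ideal.span_mul_span]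
        rw [Ideal.span_le]
        rintro x hx
        simp only [Set.mem_mul] at hx
        obtain ⟨u, ⟨i, him, rfl⟩, w, hw, rfl⟩ := hx
        rcases hw with rfl | rfl
        · refine Ideal.subset_span ⟨i + 1, by omega, ?_⟩
          rw [show m + 1 - (i + 1) = m - i by omega]
          ring
        · refine Ideal.subset_span ⟨i, by omega, ?_⟩
          rw [show m + 1 - i = m - i + 1 by omega]
          ring
      exact h1 (Ideal.mul_mem_mul hr hs)
    · rw [Ideal.span_le]
      rintro g ⟨i, him, rfl⟩
      have h1 : A ^ i ∈ (Ideal.span {A, B}) ^ i :=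
        Ideal.pow_mem_pow (Ideal.subset_span (by simp)) i
      have h2 : B ^ (m + 1 - i) ∈ (Ideal.span {A, B}) ^ (m + 1 - i) :=
        Ideal.pow_mem_pow (Ideal.subset_span (by simp)) _
      have h3 := Ideal.mul_mem_mul h1 h2
      have he : (Ideal.span {A, B}) ^ i * (Ideal.span {A, B}) ^ (m + 1 - i)
          = (Ideal.span {A, B}) ^ (m + 1) := by
        rw [← ideal_pow_add]
        congr 1
        omega
      rwa [he] at h3

end Stmt6Aux

open Stmt6Aux in
/-- `I_{v,m} = ⟨y - h_v, η⟩^m = ⟨(y - h_v)^i η^{m-i} : 0 ≤ i ≤ m⟩`, where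
`η = ∏ⱼ (x - αⱼ)` and `h_v` is the Lagrange interpolant of `v`. -/
theorem stmt6 {F : Type*} [Field F] (n m : ℕ) (hm : 1 ≤ m)
    (α : Fin n → F) (hα : Function.Injective α) (v : Fin n → F)
    (hv : F[X]) (hhvdeg : hv.degree < n) (hhv : ∀ i, hv.eval (α i) = v i)
    (η : F[X]) (hη : η = ∏ i, (X - C (α i))) :
    {f : Polynomial (Polynomial F) | ∀ i, multGE F f (α i) (v i) m}
        = ((Ideal.span {X - Polynomial.C hv, Polynomial.C η} ^ m : Ideal (Polynomial (Polynomial F)))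
            : Set (Polynomial (Polynomial F)))
      ∧ {f : Polynomial (Polynomial F) | ∀ i, multGE F f (α i) (v i) m}
        = ((Ideal.span {g | ∃ i ≤ m, g = (X - Polynomial.C hv) ^ i * Polynomial.C η ^ (m - i)}
            : Ideal (Polynomial (Polynomial F))) : Set (Polynomial (Polynomial F))) := by
  set J : Ideal (Polynomial (Polynomial F)) := Ideal.span {X - Polynomial.C hv, Polynomial.C η}
    with hJ
  -- J equals the intersection of the maximal ideals at the points
  have hJinf : J = ⨅ i, ptIdeal (α i) (v i) := by
    apply le_antisymm
    · refine le_iInf fun i => ?_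
      rw [hJ, Ideal.span_le]
      rintro g (rfl | rfl)
      · rw [SetLike.mem_coe, mem_ptIdeal_iff]
        simp [epsHom_C, epsHom_X, hhv i]
      · rw [SetLike.mem_coe, mem_ptIdeal_iff]
        rw [epsHom_C, hη, eval_prod]
        exact Finset.prod_eq_zero (Finset.mem_univ i) (by simp)
    · intro f hf
      have hf' : ∀ i, epsHom (α i) (v i) f = 0 := fun i =>
        (mem_ptIdeal_iff _ _ _).mp (Submodule.mem_iInf _ |>.mp hf i)
      obtain ⟨q, hq⟩ := X_sub_C_dvd_sub_C_eval (a := hv) (p := f)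
      have h1 : f - C (f.eval hv) ∈ J := by
        rw [hq]
        exact Ideal.mul_mem_right _ _ (Ideal.subset_span (by simp))
      have hroot : ∀ i, (f.eval hv).eval (α i) = 0 := by
        intro i
        rw [epsHom_eval', hhv i, hf' i]
      have hdvd : η ∣ f.eval hv := by
        rw [hη]
        exact Fintype.prod_dvd_of_coprime (Polynomial.pairwise_coprime_X_sub_C hα)
          (fun i => dvd_iff_isRoot.mpr (hroot i))
      obtain ⟨w, hw⟩ := hdvd
      have h2 : C (f.eval hv) ∈ J := by
        rw [hw, map_mul]
        exact Ideal.mul_mem_right _ _ (Ideal.subset_span (by simp))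
      simpa using add_mem h1 h2
  have hpair : ∀ i j : Fin n, i ≠ j → ptIdeal (α i) (v i) ⊔ ptIdeal (α j) (v j) = ⊤ :=
    fun i j hij => ptIdeal_coprime fun h => hij (hα h)
  have hprod : ∏ i, ptIdeal (α i) (v i) = ⨅ i, ptIdeal (α i) (v i) := by
    rw [prod_eq_inf_of_pairwise Finset.univ _ fun i _ j _ hij => hpair i j hij]
    simp
  have hprodm : ∏ i, ptIdeal (α i) (v i) ^ m = ⨅ i, ptIdeal (α i) (v i) ^ m := by
    rw [prod_eq_inf_of_pairwise Finset.univ _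
      fun i _ j _ hij => Ideal.pow_sup_pow_eq_top (hpair i j hij)]
    simp
  have hJm : J ^ m = ⨅ i, ptIdeal (α i) (v i) ^ m := by
    rw [hJinf, ← hprod, ← Finset.prod_pow, hprodm]
  have hmain : {f : Polynomial (Polynomial F) | ∀ i, multGE F f (α i) (v i) m}
      = ((J ^ m : Ideal (Polynomial (Polynomial F))) : Set (Polynomial (Polynomial F))) := by
    ext f
    simp only [Set.mem_setOf_eq, SetLike.mem_coe]
    rw [hJm]
    rw [Submodule.mem_iInf]
    exact forall_congr' fun i => multGE_iff (α i) (v i) m f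
  refine ⟨hmain, ?_⟩
  rw [← span_pair_pow]
  exact hmain
end

section
/- If f ∈ F[x,y] has multiplicity at least m at the point (α, v), and f = g·(y - h)^d + f₁ where g ∈ F[x], h ∈ F[x] satisfies h(α) = v, d is the y-degree of f, and y-deg(f₁) < d, then (x - α)^{m-d} divides g (assuming d ≤ m). -/
/-!
Shifting `x ↦ x + α` and `y ↦ y + v` does not change the top `y`-coefficient of `f` other than by
the Taylor shift `g ↦ g(x + α)`, since `(y + v)^d` is monic. Multiplicity `≥ m` at `(α, v)` forces
that coefficient to have no monomial `x^i` with `i + d < m`, i.e. `x^(m-d) ∣ g(x + α)`, and shifting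
back gives `(x - α)^(m-d) ∣ g`.
-/

open Polynomial

lemma coeff_C_mul_X_sub_C_pow_add_of_degree_lt {R : Type*} [CommRing R] (g h : R) (n : ℕ)
    {f₁ : R[X]} (hf₁ : f₁.degree < n) :
    (C g * (X - C h) ^ n + f₁).coeff n = g := by
  have hlead : ((X - C h) ^ n).coeff n = 1 := by
    rw [sub_eq_add_neg, ← C_neg, coeff_X_add_C_pow, Nat.sub_self, pow_zero, Nat.choose_self,
      Nat.cast_one, mul_one]
  rw [coeff_add, coeff_C_mul, coeff_eq_zero_of_degree_lt hf₁, add_zero, hlead, mul_one]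

lemma X_sub_C_pow_dvd_of_X_pow_dvd_taylor {R : Type*} [CommRing R] {a : R} {p : R[X]} {k : ℕ}
    (hk : X ^ k ∣ taylor a p) : (X - C a) ^ k ∣ p := by
  have := map_dvd (taylorAlgHom (-a)) hk
  simpa [taylor_taylor, sub_eq_add_neg] using this

section Shift

variable {F : Type*} [Field F]

lemma shiftXY_eq_taylor (f : F[X][X]) (a b : F) :
    shiftXY F f a b = taylor (C b) (f.map (taylorAlgHom a : F[X] →+* F[X])) := by
  rw [shiftXY, taylor_apply, comp, eval₂_map]
  rfl

lemma coeff_natDegree_shiftXY (f : F[X][X]) (a b : F) :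
    (shiftXY F f a b).coeff f.natDegree = taylor a f.leadingCoeff := by
  have hinj : Function.Injective (taylorAlgHom a : F[X] →+* F[X]) := taylor_injective a
  rw [shiftXY_eq_taylor, ← natDegree_map_eq_of_injective hinj f, coeff_taylor_natDegree,
    leadingCoeff_map_of_injective hinj]
  rfl

lemma X_pow_dvd_coeff_shiftXY_of_multGE {f : F[X][X]} {a b : F} {m : ℕ}
    (hmult : multGE F f a b m) (j : ℕ) : X ^ (m - j) ∣ (shiftXY F f a b).coeff j := by
  rw [X_pow_dvd_iff]
  intro i hi
  exact hmult i j (by omega)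

end Shift

theorem stmt7_general {F : Type*} [Field F] (m : ℕ) (α v : F)
    (f : Polynomial (Polynomial F))
    (hmult : multGE F f α v m)
    (h : F[X])
    (g : F[X]) (f₁ : Polynomial (Polynomial F))
    (hsplit : f = Polynomial.C g * (X - Polynomial.C h) ^ f.natDegree + f₁)
    (hf₁ : f₁.degree < (f.natDegree : WithBot ℕ)) :
    (X - C α) ^ (m - f.natDegree) ∣ g := by
  have hg : f.leadingCoeff = g :=
    calc f.coeff f.natDegree
        = (C g * (X - C h) ^ f.natDegree + f₁).coeff f.natDegree := by rw [← hsplit]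
      _ = g := coeff_C_mul_X_sub_C_pow_add_of_degree_lt g h _ hf₁
  apply X_sub_C_pow_dvd_of_X_pow_dvd_taylor
  rw [← hg, ← coeff_natDegree_shiftXY f α v]
  exact X_pow_dvd_coeff_shiftXY_of_multGE hmult _

/-- If `f ≠ 0` has multiplicity `≥ m` at `(α, v)`, `h(α) = v`, and
`f = g·(y-h)^d + f₁` with `d = y-deg(f) ≤ m`, `g ∈ F[x]`, `y-deg(f₁) < d`,
then `(x - α)^{m-d}` divides `g`. -/
theorem stmt7 {F : Type*} [Field F] (m : ℕ) (α v : F)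
    (f : Polynomial (Polynomial F)) (hf : f ≠ 0) (hdm : f.natDegree ≤ m)
    (hmult : multGE F f α v m)
    (h : F[X]) (hh : h.eval α = v)
    (g : F[X]) (f₁ : Polynomial (Polynomial F))
    (hsplit : f = Polynomial.C g * (X - Polynomial.C h) ^ f.natDegree + f₁)
    (hf₁ : f₁.degree < (f.natDegree : WithBot ℕ)) :
    (X - C α) ^ (m - f.natDegree) ∣ g :=
  stmt7_general m α v f hmult h g f₁ hsplit hf₁
end

section
/- For l ≥ m, the module I_{v,m,l} = I_{v,m} ∩ F[x,y]_l is generated as an F[x]-submodule of F[x,y]_l by the l+1 elements (y - h_v)^i η^{m-i} for 0 ≤ i ≤ m, together with y^{i-m}(y - h_v)^m for m < i ≤ l, where η = ∏_{j=1}^n (x - α_j). -/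
open Polynomial

section auxCR
variable {R : Type*} [CommRing R]

lemma stmt8_taylor_shift_dvd {p w : R} (hpw : p ∣ w) (g : R[X]) (m : ℕ)
    (h : ∀ j < m, p ^ (m - j) ∣ g.coeff j) :
    ∀ j < m, p ^ (m - j) ∣ ((taylor w) g).coeff j := by
  intro j hj
  rw [taylor_coeff, hasseDeriv_apply, Polynomial.sum, eval_finset_sum]
  apply Finset.dvd_sum
  intro i _
  rw [eval_monomial]
  rcases lt_or_ge i j with hij | hij
  · rw [Nat.choose_eq_zero_of_lt hij]
    simp
  rcases lt_or_ge i m with him | him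
  · have h1 : p ^ (m - i) ∣ g.coeff i := h i him
    have h2 : p ^ (i - j) ∣ w ^ (i - j) := pow_dvd_pow_of_dvd hpw _
    have h3 : p ^ (m - j) ∣ g.coeff i * w ^ (i - j) := by
      have := mul_dvd_mul h1 h2
      rwa [← pow_add, show m - i + (i - j) = m - j by omega] at this
    rw [mul_assoc]
    exact Dvd.dvd.mul_left h3 _
  · have h2 : p ^ (m - j) ∣ w ^ (i - j) :=
      (pow_dvd_pow p (by omega)).trans (pow_dvd_pow_of_dvd hpw _)
    rw [mul_assoc]
    exact ((h2.mul_left _)).mul_left _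

lemma stmt8_taylor_shift_dvd_iff {p w : R} (hpw : p ∣ w) (g : R[X]) (m : ℕ) :
    (∀ j < m, p ^ (m - j) ∣ ((taylor w) g).coeff j) ↔ (∀ j < m, p ^ (m - j) ∣ g.coeff j) := by
  constructor
  · intro h
    have := stmt8_taylor_shift_dvd (p := p) (w := -w) (by simpa using hpw.neg_right)
      ((taylor w) g) m h
    rwa [taylor_taylor, neg_add_cancel, taylor_zero] at this
  · exact stmt8_taylor_shift_dvd hpw g m

end auxCR

section auxF
variable {F : Type*} [Field F]

lemma stmt8_aeval_eq_comp (s w : F[X]) : aeval s w = w.comp s := by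
  rw [aeval_def, Polynomial.algebraMap_eq]; rfl

lemma stmt8_aeval_shift_cancel (a : F) (u : F[X]) :
    aeval (X - C a) (aeval (X + C a) u) = u := by
  rw [stmt8_aeval_eq_comp, stmt8_aeval_eq_comp, Polynomial.comp_assoc]
  simp [Polynomial.add_comp, Polynomial.sub_comp]

lemma stmt8_dvd_shift_iff (a : F) (k : ℕ) (u : F[X]) :
    (X : F[X]) ^ k ∣ aeval (X + C a) u ↔ (X - C a) ^ k ∣ u := by
  constructor
  · rintro ⟨q, hq⟩
    refine ⟨aeval (X - C a) q, ?_⟩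
    have := congrArg (aeval (X - C a) : F[X] →ₐ[F] F[X]) hq
    rw [stmt8_aeval_shift_cancel] at this
    rw [this]
    simp [mul_comm]
  · rintro ⟨q, hq⟩
    refine ⟨aeval (X + C a) q, ?_⟩
    rw [hq]
    simp

lemma stmt8_shiftXY_eq (f : Polynomial (Polynomial F)) (a b : F) :
    shiftXY F f a b
      = Polynomial.map (Polynomial.aeval (X + C a) : F[X] →ₐ[F] F[X]).toRingHom
          (taylor (C b : F[X]) f) := by
  rw [taylor_apply, Polynomial.map_comp]
  have h2 : Polynomial.map (Polynomial.aeval (X + C a) : F[X] →ₐ[F] F[X]).toRingHom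
      (X + Polynomial.C (C b : F[X])) = X + Polynomial.C (C b : F[X]) := by
    simp
  rw [h2]
  unfold shiftXY
  rw [Polynomial.comp, Polynomial.eval₂_map]

lemma stmt8_multGE_iff_dvd (f : Polynomial (Polynomial F)) (a b : F) (m : ℕ) :
    multGE F f a b m ↔ ∀ j < m, (X : F[X]) ^ (m - j) ∣ (shiftXY F f a b).coeff j := by
  constructor
  · intro h j hj
    rw [X_pow_dvd_iff]
    intro d hd
    exact h d j (by omega)
  · intro h i j hij
    exact X_pow_dvd_iff.mp (h j (by omega)) i (by omega)

lemma stmt8_multGE_iff (f : Polynomial (Polynomial F)) (a b : F) (m : ℕ) (hv : F[X])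
    (hab : hv.eval a = b) :
    multGE F f a b m ↔ ∀ j < m, (X - C a) ^ (m - j) ∣ ((taylor (hv : F[X])) f).coeff j := by
  rw [stmt8_multGE_iff_dvd]
  have step1 : (∀ j < m, (X : F[X]) ^ (m - j) ∣ (shiftXY F f a b).coeff j)
      ↔ ∀ j < m, (X - C a) ^ (m - j) ∣ ((taylor (C b : F[X])) f).coeff j := by
    refine forall₂_congr fun j hj => ?_
    rw [stmt8_shiftXY_eq, coeff_map]
    exact stmt8_dvd_shift_iff a (m - j) _
  rw [step1]
  have step2 : (taylor (C b : F[X])) f = (taylor (C b - hv)) ((taylor (hv : F[X])) f) := by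
    rw [taylor_taylor, sub_add_cancel]
  rw [step2]
  exact stmt8_taylor_shift_dvd_iff (p := X - C a) (w := C b - hv)
    (dvd_iff_isRoot.mpr (by simp [IsRoot, hab])) _ m

lemma stmt8_eta_dvd_iff {n : ℕ} (α : Fin n → F) (hα : Function.Injective α) (k : ℕ) (u : F[X]) :
    (∀ i, (X - C (α i)) ^ k ∣ u) ↔ (∏ i, (X - C (α i))) ^ k ∣ u := by
  rw [← Finset.prod_pow]
  constructor
  · intro h
    refine Finset.prod_dvd_of_coprime ?_ fun i _ => h i
    have hpair : Pairwise (Function.onFun IsCoprime fun i => (X - C (α i)) ^ k) :=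
      fun i j hij => ((pairwise_coprime_X_sub_C hα) hij).pow
    exact hpair.set_pairwise _
  · intro h i
    exact (Finset.dvd_prod_of_mem (fun i => (X - C (α i)) ^ k) (Finset.mem_univ i)).trans h

end auxF

/-- For `l ≥ m`, `I_{v,m,l} = I_{v,m} ∩ F[x,y]_l` is generated as an `F[x]`-submodule of
`F[x,y]_l` by `(y - h_v)^i η^{m-i}` for `0 ≤ i ≤ m` and `y^{i-m}(y - h_v)^m` for
`m < i ≤ l`, where `η = ∏ⱼ (x - αⱼ)`. -/
theorem stmt8 {F : Type*} [Field F] (n m l : ℕ) (hm : 1 ≤ m) (hl : m ≤ l)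
    (α : Fin n → F) (hα : Function.Injective α) (v : Fin n → F)
    (hv : F[X]) (hhvdeg : hv.degree < n) (hhv : ∀ i, hv.eval (α i) = v i)
    (η : F[X]) (hη : η = ∏ i, (X - C (α i))) :
    ∀ f : Polynomial (Polynomial F),
      (f.degree ≤ (l : WithBot ℕ) ∧ ∀ i, multGE F f (α i) (v i) m)
        ↔ f ∈ Submodule.span (Polynomial F)
            {g : Polynomial (Polynomial F) |
              (∃ i ≤ m, g = (X - Polynomial.C hv) ^ i * Polynomial.C η ^ (m - i))
              ∨ (∃ i, m < i ∧ i ≤ l ∧ g = X ^ (i - m) * (X - Polynomial.C hv) ^ m)} := by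
  intro f
  have char : (f.degree ≤ (l : WithBot ℕ) ∧ ∀ i, multGE F f (α i) (v i) m)
      ↔ (((taylor (hv : F[X])) f).natDegree ≤ l ∧
          ∀ j < m, η ^ (m - j) ∣ ((taylor (hv : F[X])) f).coeff j) := by
    apply and_congr
    · rw [natDegree_taylor, natDegree_le_iff_degree_le]
    · have h1 : ∀ i : Fin n, multGE F f (α i) (v i) m ↔
          ∀ j < m, (X - C (α i)) ^ (m - j) ∣ ((taylor (hv : F[X])) f).coeff j :=
        fun i => stmt8_multGE_iff f (α i) (v i) m hv (hhv i)
      constructor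
      · intro h j hj
        rw [hη]
        exact (stmt8_eta_dvd_iff α hα (m - j) _).mp (fun i => (h1 i).mp (h i) j hj)
      · intro h i
        refine (h1 i).mpr fun j hj => ?_
        refine dvd_trans ?_ (h j hj)
        rw [hη, ← Finset.prod_pow]
        exact Finset.dvd_prod_of_mem (fun i => (X - C (α i)) ^ (m - j)) (Finset.mem_univ i)
  rw [char]
  constructor
  · rintro ⟨hdeg, hdvd⟩
    have hfeq : f = ∑ j ∈ Finset.range (l + 1),
        Polynomial.C (((taylor (hv : F[X])) f).coeff j) * (X - Polynomial.C hv) ^ j := by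
      have h1 : f = (taylor (-hv : F[X])) ((taylor (hv : F[X])) f) := by
        rw [taylor_taylor, neg_add_cancel, taylor_zero]
      have hdeg' : ((taylor (hv : F[X])) f).natDegree < l + 1 := Nat.lt_succ_of_le hdeg
      conv_lhs => rw [h1]
      rw [taylor_apply, Polynomial.comp, eval₂_eq_sum_range' _ hdeg']
      refine Finset.sum_congr rfl fun j _ => ?_
      rw [map_neg, ← sub_eq_add_neg]
    rw [hfeq]
    apply Submodule.sum_mem
    intro j hj
    have hjl : j ≤ l := by
      have := Finset.mem_range.mp hj; omega
    rcases lt_or_ge j m with hjm | hjm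
    · obtain ⟨e, he⟩ := hdvd j hjm
      have heq : Polynomial.C (((taylor (hv : F[X])) f).coeff j) * (X - Polynomial.C hv) ^ j
          = e • ((X - Polynomial.C hv) ^ j * Polynomial.C η ^ (m - j)) := by
        rw [smul_eq_C_mul, he, map_mul, ← map_pow]
        ring
      rw [heq]
      exact Submodule.smul_mem _ _ (Submodule.subset_span (Or.inl ⟨j, hjm.le, rfl⟩))
    · have hZ : (X - Polynomial.C hv) ^ j ∈ Submodule.span (Polynomial F)
          {g : Polynomial (Polynomial F) |
            (∃ i ≤ m, g = (X - Polynomial.C hv) ^ i * Polynomial.C η ^ (m - i))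
            ∨ (∃ i, m < i ∧ i ≤ l ∧ g = X ^ (i - m) * (X - Polynomial.C hv) ^ m)} := by
        have hdZ : ((X - Polynomial.C hv) ^ (j - m)).natDegree < j - m + 1 :=
          Nat.lt_succ_of_le (natDegree_pow_le.trans (by rw [natDegree_X_sub_C, mul_one]))
        have hsum : (X - Polynomial.C hv) ^ j = ∑ k ∈ Finset.range (j - m + 1),
            (((X - Polynomial.C hv) ^ (j - m)).coeff k) • (X ^ k * (X - Polynomial.C hv) ^ m) := by
          conv_lhs => rw [show j = (j - m) + m by omega, pow_add,
            as_sum_range' _ _ hdZ]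
          rw [Finset.sum_mul]
          refine Finset.sum_congr rfl fun k _ => ?_
          rw [smul_eq_C_mul, ← C_mul_X_pow_eq_monomial, mul_assoc]
        rw [hsum]
        apply Submodule.sum_mem
        intro k hk
        apply Submodule.smul_mem
        apply Submodule.subset_span
        rcases Nat.eq_zero_or_pos k with rfl | hk0
        · exact Or.inl ⟨m, le_refl m, by simp⟩
        · refine Or.inr ⟨m + k, by omega, ?_, ?_⟩
          · have := Finset.mem_range.mp hk; omega
          · rw [Nat.add_sub_cancel_left]
      rw [show Polynomial.C (((taylor (hv : F[X])) f).coeff j) * (X - Polynomial.C hv) ^ j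
          = (((taylor (hv : F[X])) f).coeff j) • ((X - Polynomial.C hv) ^ j)
        from (smul_eq_C_mul _).symm]
      exact Submodule.smul_mem _ _ hZ
  · intro hf
    refine Submodule.span_induction
      (p := fun x _ => ((taylor (hv : F[X])) x).natDegree ≤ l ∧
        ∀ j < m, η ^ (m - j) ∣ ((taylor (hv : F[X])) x).coeff j)
      ?_ ?_ ?_ ?_ hf
    · rintro x (⟨i, him, rfl⟩ | ⟨i, hmi, hil, rfl⟩)
      · have htay : (taylor (hv : F[X])) ((X - Polynomial.C hv) ^ i * Polynomial.C η ^ (m - i))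
            = Polynomial.C (η ^ (m - i)) * X ^ i := by
          rw [taylor_apply, mul_comp, pow_comp, sub_comp, X_comp, C_comp,
            add_sub_cancel_right, pow_comp, C_comp, ← map_pow, mul_comm]
        rw [htay]
        constructor
        · refine natDegree_mul_le.trans ?_
          rw [natDegree_C, natDegree_X_pow]
          omega
        · intro j hj
          rw [coeff_C_mul, coeff_X_pow]
          by_cases hji : j = i
          · subst hji
            simp
          · simp [hji]
      · have htay : (taylor (hv : F[X])) (X ^ (i - m) * (X - Polynomial.C hv) ^ m)
            = (X + Polynomial.C hv) ^ (i - m) * X ^ m := by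
          rw [taylor_apply, mul_comp, pow_comp, X_comp, pow_comp, sub_comp, X_comp, C_comp,
            add_sub_cancel_right]
        rw [htay]
        constructor
        · refine natDegree_mul_le.trans ?_
          have h1 : ((X + Polynomial.C hv) ^ (i - m)).natDegree ≤ i - m :=
            natDegree_pow_le.trans (by rw [natDegree_X_add_C, mul_one])
          have h2 : ((X : Polynomial (Polynomial F)) ^ m).natDegree ≤ m := by
            rw [natDegree_X_pow]
          omega
        · intro j hj
          have hX : (X : Polynomial (Polynomial F)) ^ m ∣
              (X + Polynomial.C hv) ^ (i - m) * X ^ m := dvd_mul_left _ _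
          rw [X_pow_dvd_iff.mp hX j hj]
          exact dvd_zero _
    · simp
    · intro x y hx hy ⟨hx1, hx2⟩ ⟨hy1, hy2⟩
      rw [map_add]
      constructor
      · exact natDegree_add_le_of_degree_le hx1 hy1
      · intro j hj
        rw [coeff_add]
        exact dvd_add (hx2 j hj) (hy2 j hj)
    · intro c x hx ⟨hx1, hx2⟩
      rw [map_smul]
      constructor
      · exact (natDegree_smul_le c _).trans hx1
      · intro j hj
        rw [coeff_smul, smul_eq_mul]
        exact (hx2 j hj).mul_left c
end

section
/- The minimal polynomial Q of the ideal I_{v,m} with respect to the (1,k-1)-weighted monomial order >_{k-1} has y-degree strictly less than √(2N/(k-1) + 1/4) − 1/2, where N = n·(m+1 choose 2) + 1. -/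
open Polynomial

section AuxStmt10

variable {F : Type*} [Field F]

lemma shiftXY_add (f g : Polynomial (Polynomial F)) (a b : F) :
    shiftXY F (f + g) a b = shiftXY F f a b + shiftXY F g a b :=
  Polynomial.eval₂_add _ _

lemma shiftXY_smul (c : F) (f : Polynomial (Polynomial F)) (a b : F) :
    shiftXY F (c • f) a b = c • shiftXY F f a b := by
  have h : ∀ g : Polynomial (Polynomial F), c • g = Polynomial.C (Polynomial.C c) * g := by
    intro g
    rw [Algebra.smul_def, Polynomial.algebraMap_apply, Polynomial.algebraMap_apply]
    simp
  rw [h, h, shiftXY, shiftXY, Polynomial.eval₂_mul, Polynomial.eval₂_C]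
  congr 1
  simp

variable (F) in
noncomputable def phiM (u d : ℕ) :
    ((Σ j : Fin d, Fin (u * (d - (j : ℕ)))) → F) →ₗ[F] Polynomial (Polynomial F) where
  toFun c := ∑ p : Σ j : Fin d, Fin (u * (d - (j : ℕ))),
      c p • Polynomial.monomial (p.1 : ℕ) ((Polynomial.X : Polynomial F) ^ (p.2 : ℕ))
  map_add' c c' := by simp [add_smul, Finset.sum_add_distrib]
  map_smul' r c := by simp [Finset.smul_sum, smul_smul]

lemma phiM_coeff (u d : ℕ) (c : (Σ j : Fin d, Fin (u * (d - (j : ℕ)))) → F) (j i : ℕ) :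
    ((phiM F u d c).coeff j).coeff i
      = ∑ p : Σ j' : Fin d, Fin (u * (d - (j' : ℕ))),
          (if (p.1 : ℕ) = j ∧ (p.2 : ℕ) = i then c p else 0) := by
  rw [phiM]
  simp only [LinearMap.coe_mk, AddHom.coe_mk, Polynomial.finset_sum_coeff,
    Polynomial.coeff_smul, Polynomial.coeff_monomial]
  refine Finset.sum_congr rfl fun p _ => ?_
  by_cases h1 : (p.1 : ℕ) = j
  · simp [h1, Polynomial.coeff_X_pow, eq_comm, smul_ite]
  · simp [h1]

lemma phiM_coeff_self (u d : ℕ) (c : (Σ j : Fin d, Fin (u * (d - (j : ℕ)))) → F)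
    (p : Σ j : Fin d, Fin (u * (d - (j : ℕ)))) :
    ((phiM F u d c).coeff (p.1 : ℕ)).coeff (p.2 : ℕ) = c p := by
  rw [phiM_coeff]
  rw [Finset.sum_eq_single p]
  · simp
  · rintro ⟨q1, q2⟩ _ hq
    obtain ⟨p1, p2⟩ := p
    by_cases h1 : (q1 : ℕ) = (p1 : ℕ)
    · have : q1 = p1 := Fin.ext h1
      subst this
      by_cases h2 : (q2 : ℕ) = (p2 : ℕ)
      · exact absurd (by rw [Fin.ext h2]) hq
      · simp [h2]
    · simp [h1]
  · simp

lemma phiM_coeff_eq_zero (u d : ℕ) (c : (Σ j : Fin d, Fin (u * (d - (j : ℕ)))) → F)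
    {j i : ℕ} (h : u * d ≤ i + u * j) :
    ((phiM F u d c).coeff j).coeff i = 0 := by
  rw [phiM_coeff]
  refine Finset.sum_eq_zero fun p _ => ?_
  rw [if_neg]
  rintro ⟨h1, h2⟩
  have hp2 := p.2.isLt
  rw [h2] at hp2
  rw [h1] at hp2
  have hj : j < d := by
    rcases Nat.lt_or_ge j d with hh | hh
    · exact hh
    · simp [Nat.sub_eq_zero_of_le hh] at hp2
  have : i + u * j < u * (d - j) + u * j := by omega
  rw [← Nat.mul_add, Nat.sub_add_cancel hj.le] at this
  omega

lemma twice_sum_sub (d : ℕ) : 2 * ∑ j ∈ Finset.range d, (d - j) = d * (d + 1) := by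
  induction d with
  | zero => simp
  | succ e ih =>
    have h2 : ∀ j ∈ Finset.range e, e + 1 - j = (e - j) + 1 := fun j hj => by
      have := Finset.mem_range.mp hj; omega
    rw [Finset.sum_range_succ, Finset.sum_congr rfl h2, Finset.sum_add_distrib,
      Finset.sum_const, Finset.card_range, smul_eq_mul, mul_one]
    have h3 : (e + 1) * (e + 1 + 1) = e * (e + 1) + 2 * (e + 1) := by ring
    have h4 : e + 1 - e = 1 := by omega
    rw [h4, h3, ← ih]
    ring

lemma two_mul_choose (m : ℕ) : 2 * Nat.choose (m + 1) 2 = m * (m + 1) := by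
  induction m with
  | zero => simp
  | succ e ih =>
    rw [Nat.choose_succ_succ, Nat.choose_one_right, Nat.mul_add, ih]
    ring

lemma key_count (u d n m : ℕ) (hm : 1 ≤ m) (P : Fin n → F × F)
    (hlt : 2 * (n * Nat.choose (m + 1) 2) < u * (d * (d + 1))) :
    ∃ f : Polynomial (Polynomial F), f ≠ 0 ∧ (∀ t, multGE F f (P t).1 (P t).2 m) ∧
      ∀ j ∈ f.support, (f.coeff j).natDegree + u * j < u * d := by
  classical
  set ι := Σ j : Fin d, Fin (u * (d - (j : ℕ))) with hι
  set T := Fin n × Σ i : Fin m, Fin (m - (i : ℕ)) with hT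
  have hcardι : 2 * Fintype.card ι = u * (d * (d + 1)) := by
    rw [Fintype.card_sigma]
    simp only [Fintype.card_fin]
    rw [Fin.sum_univ_eq_sum_range (fun j => u * (d - j)) d, ← Finset.mul_sum,
      ← Nat.mul_assoc, Nat.mul_comm 2 u, Nat.mul_assoc, twice_sum_sub]
  have hcardT : Fintype.card T = n * Nat.choose (m + 1) 2 := by
    have hS : ∑ i ∈ Finset.range m, (m - i) = Nat.choose (m + 1) 2 :=
      Nat.eq_of_mul_eq_mul_left (by norm_num)
        ((twice_sum_sub m).trans (two_mul_choose m).symm)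
    rw [Fintype.card_prod, Fintype.card_sigma]
    simp only [Fintype.card_fin]
    rw [Fin.sum_univ_eq_sum_range (fun i => m - i) m, hS]
  have hcard : Fintype.card T < Fintype.card ι := by
    refine Nat.lt_of_mul_lt_mul_left (a := 2) ?_
    rw [hcardι, hcardT]
    exact hlt
  -- the linear map of interaction conditions
  let L : (ι → F) →ₗ[F] (T → F) :=
    { toFun := fun c w =>
        ((shiftXY F (phiM F u d c) (P w.1).1 (P w.1).2).coeff (w.2.2 : ℕ)).coeff (w.2.1 : ℕ)
      map_add' := fun c c' => by
        funext w
        simp [map_add, shiftXY_add]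
      map_smul' := fun r c => by
        funext w
        simp [map_smul, shiftXY_smul] }
  have hni : ¬ Function.Injective L := by
    intro hinj
    have := LinearMap.finrank_le_finrank_of_injective hinj
    rw [Module.finrank_fintype_fun_eq_card, Module.finrank_fintype_fun_eq_card] at this
    omega
  rw [Function.not_injective_iff] at hni
  obtain ⟨a, b, hab, hne⟩ := hni
  set c := a - b with hc
  have hc0 : c ≠ 0 := sub_ne_zero.mpr hne
  have hLc : L c = 0 := by rw [hc, map_sub, hab, sub_self]
  refine ⟨phiM F u d c, ?_, ?_, ?_⟩
  · intro h0
    apply hc0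
    funext p
    have := phiM_coeff_self u d c p
    rw [h0] at this
    simpa using this.symm
  · intro t i j hij
    have hi : i < m := by omega
    have hj : j < m - i := by omega
    have := congrFun hLc (⟨t, ⟨⟨i, hi⟩, ⟨j, hj⟩⟩⟩ : T)
    simpa [L] using this
  · intro j hj
    by_contra hge
    push_neg at hge
    have hne0 : (phiM F u d c).coeff j ≠ 0 := Polynomial.mem_support_iff.mp hj
    have hz : ((phiM F u d c).coeff j).coeff ((phiM F u d c).coeff j).natDegree = 0 :=
      phiM_coeff_eq_zero u d c (by omega)
    exact hne0 (Polynomial.leadingCoeff_eq_zero.mp hz)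

end AuxStmt10

/-- The minimal polynomial `Q` of `I_{v,m}` with respect to `>_{k-1}` has `y`-degree
strictly less than `√(2N/(k-1) + 1/4) − 1/2`, where `N = n·(m+1 choose 2) + 1`. -/
theorem stmt10 {F : Type*} [Field F] (n m k : ℕ) (hm : 1 ≤ m) (hk : 2 ≤ k)
    (P : Fin n → F × F)
    (Q : Polynomial (Polynomial F)) (hQ0 : Q ≠ 0)
    (hQI : ∀ t, multGE F Q (P t).1 (P t).2 m)
    (hQmin : ∀ f : Polynomial (Polynomial F), f ≠ 0 → (∀ t, multGE F f (P t).1 (P t).2 m) →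
      lmKey F (k - 1) Q ≤ lmKey F (k - 1) f) :
    (Q.natDegree : ℝ)
      < Real.sqrt (2 * (n * Nat.choose (m + 1) 2 + 1) / (k - 1) + 1 / 4) - 1 / 2 := by
  set u := k - 1 with hu
  have hu1 : 1 ≤ u := by omega
  set d := Q.natDegree with hd
  have hkey : u * (d * (d + 1)) ≤ 2 * (n * Nat.choose (m + 1) 2) := by
    by_contra hlt
    push_neg at hlt
    obtain ⟨f, hf0, hfI, hfs⟩ := key_count u d n m hm P hlt
    have hmin := hQmin f hf0 hfI
    have hd1 : 1 ≤ d := by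
      by_contra h
      push_neg at h
      have hd0 : d = 0 := by omega
      rw [hd0] at hlt
      simp at hlt
    have hQge : toLex (u * d, d) ≤ lmKey F u Q := by
      have hmem : d ∈ Q.support := Polynomial.natDegree_mem_support_of_nonzero hQ0
      refine le_trans ?_ (Finset.le_sup (f := fun j => toLex ((Q.coeff j).natDegree + u * j, j)) hmem)
      rw [Prod.Lex.le_iff]
      rcases Nat.eq_zero_or_pos ((Q.coeff d).natDegree) with h | h
      · right
        simp [h]
      · left
        simp only [ofLex_toLex]
        omega
    have hbot : (⊥ : Lex (ℕ × ℕ)) < toLex (u * d, d) := by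
      refine lt_of_le_of_lt (bot_le (a := toLex (0, 0))) ?_
      rw [Prod.Lex.lt_iff]
      left
      exact Nat.mul_pos hu1 hd1
    have hflt : lmKey F u f < toLex (u * d, d) := by
      rw [lmKey, Finset.sup_lt_iff hbot]
      intro j hj
      rw [Prod.Lex.lt_iff]
      left
      exact hfs j hj
    exact absurd hmin (not_le.mpr (lt_of_lt_of_le hflt hQge))
  have hu' : ((k : ℝ) - 1) = (u : ℝ) := by
    rw [hu, Nat.cast_sub (by omega)]
    simp
  rw [hu', lt_sub_iff_add_lt]
  have h0 : (0 : ℝ) ≤ (d : ℝ) + 1 / 2 := by positivity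
  refine (Real.lt_sqrt h0).mpr ?_
  have hupos : (0 : ℝ) < (u : ℝ) := by exact_mod_cast hu1
  have key' : ((u : ℝ)) * ((d : ℝ) * ((d : ℝ) + 1)) ≤ 2 * ((n : ℝ) * (Nat.choose (m + 1) 2 : ℝ)) := by
    exact_mod_cast hkey
  have h1 : ((d : ℝ) + 1 / 2) ^ 2 - 1 / 4 < 2 * ((n : ℝ) * (Nat.choose (m + 1) 2 : ℝ) + 1) / (u : ℝ) := by
    rw [lt_div_iff₀ hupos]
    nlinarith [key']
  linarith
end

section
/- Algorithm G terminates: given generators g₀,...,g_l of a submodule S of F[x,y]_l with y-deg(gᵢ) = i, and fixing r with y-deg(lt(gᵢ)) = i for 0 ≤ i < r, after finitely many updates of the forms (a) g_r ← g_r − c x^d g_s (when d ≥ 0) and (b) (g_s, g_r) ← (g_r, x^{-d} g_r − c g_s) (when d < 0), where s = y-deg(lt(g_r)) < r, d = deg(a_{rs}) − deg(a_{ss}), and c = lc(a_{rs})/lc(a_{ss}), it eventually holds that y-deg(lt(gᵢ)) = i for all 0 ≤ i ≤ r. -/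
open Polynomial

section Aux

open Finset

variable {F : Type*} [Field F] {u : ℕ}

lemma keyAt_le_lmKey {f : Polynomial (Polynomial F)} {j : ℕ} (h : f.coeff j ≠ 0) :
    toLex ((f.coeff j).natDegree + u * j, j) ≤ lmKey F u f :=
  Finset.le_sup (f := fun j => toLex ((f.coeff j).natDegree + u * j, j)) (mem_support_iff.mpr h)

lemma lmKey_attained {f : Polynomial (Polynomial F)} (hf : f ≠ 0) :
    f.coeff (lmY F u f) ≠ 0 ∧
      lmKey F u f = toLex ((f.coeff (lmY F u f)).natDegree + u * lmY F u f, lmY F u f) := by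
  obtain ⟨j, hj, hsup⟩ := Finset.exists_mem_eq_sup f.support (support_nonempty.mpr hf)
    (fun j => toLex ((f.coeff j).natDegree + u * j, j))
  have hk : lmKey F u f = toLex ((f.coeff j).natDegree + u * j, j) := hsup
  have hY : lmY F u f = j := by simp [lmY, hk]
  rw [hY]
  exact ⟨mem_support_iff.mp hj, hk⟩

lemma lmY_le_natDegree (f : Polynomial (Polynomial F)) : lmY F u f ≤ f.natDegree := by
  by_cases hf : f = 0
  · simp only [hf, lmY, lmKey, Polynomial.support_zero, Finset.sup_empty]
    rfl
  · obtain ⟨h1, _⟩ := lmKey_attained (u := u) hf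
    exact le_natDegree_of_ne_zero h1

lemma lmKey_lt_of_forall {f : Polynomial (Polynomial F)} (hf : f ≠ 0) {K : Lex (ℕ × ℕ)}
    (h : ∀ j, f.coeff j ≠ 0 → toLex ((f.coeff j).natDegree + u * j, j) < K) :
    lmKey F u f < K := by
  obtain ⟨h1, h2⟩ := lmKey_attained (u := u) hf
  rw [h2]; exact h _ h1

lemma cancel_key_lt {p q : Polynomial (Polynomial F)} {s : ℕ} {α β : Polynomial F}
    (hα : α ≠ 0) (hβ : β ≠ 0) (hps : p.coeff s ≠ 0) (hqs : q.coeff s ≠ 0)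
    (hkp : lmKey F u p = toLex ((p.coeff s).natDegree + u * s, s))
    (hkq : lmKey F u q = toLex ((q.coeff s).natDegree + u * s, s))
    (hdeg : α.natDegree + (p.coeff s).natDegree = β.natDegree + (q.coeff s).natDegree)
    (hlc : α.leadingCoeff * (p.coeff s).leadingCoeff
      = β.leadingCoeff * (q.coeff s).leadingCoeff)
    (h0 : C α * p - C β * q ≠ 0) :
    lmKey F u (C α * p - C β * q) < toLex (β.natDegree + (q.coeff s).natDegree + u * s, s) := by
  set D := β.natDegree + (q.coeff s).natDegree with hD
  apply lmKey_lt_of_forall h0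
  intro j hj
  have hcoeff : (C α * p - C β * q).coeff j = α * p.coeff j - β * q.coeff j := by
    simp [coeff_sub, coeff_C_mul]
  rw [hcoeff] at hj ⊢
  rcases eq_or_ne j s with rfl | hjs
  · -- top terms cancel
    have ha : α * p.coeff j ≠ 0 := mul_ne_zero hα hps
    have hb : β * q.coeff j ≠ 0 := mul_ne_zero hβ hqs
    have hda : (α * p.coeff j).natDegree = D := by
      rw [natDegree_mul hα hps, hdeg]
    have hdb : (β * q.coeff j).natDegree = D := natDegree_mul hβ hqs
    have hdeg' : (α * p.coeff j).degree = (β * q.coeff j).degree := by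
      rw [degree_eq_natDegree ha, degree_eq_natDegree hb, hda, hdb]
    have hlc' : (α * p.coeff j).leadingCoeff = (β * q.coeff j).leadingCoeff := by
      rw [leadingCoeff_mul, leadingCoeff_mul, hlc]
    have hlt : (α * p.coeff j - β * q.coeff j).natDegree < D := by
      have := degree_sub_lt hdeg' ha hlc'
      have h2 := natDegree_lt_natDegree hj this
      omega
    rw [Prod.Lex.lt_iff]
    left
    simpa using Nat.add_lt_add_right hlt (u * j)
  · -- j ≠ s
    have keyb : ∀ (γ : Polynomial F) (w : Polynomial (Polynomial F)), w.coeff j ≠ 0 →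
        γ.natDegree + (w.coeff s).natDegree = D →
        lmKey F u w = toLex ((w.coeff s).natDegree + u * s, s) →
        γ.natDegree + (w.coeff j).natDegree + u * j < D + u * s ∨
          (γ.natDegree + (w.coeff j).natDegree + u * j = D + u * s ∧ j < s) := by
      intro γ w hwj hd hk
      have h1 := keyAt_le_lmKey (u := u) hwj
      rw [hk, Prod.Lex.le_iff] at h1
      rcases h1 with h1 | ⟨h1, h2⟩
      · left; simp only [ofLex_toLex] at h1; omega
      · right
        simp only [ofLex_toLex] at h1 h2
        exact ⟨by omega, lt_of_le_of_ne h2 hjs⟩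
    have hnd : (α * p.coeff j - β * q.coeff j).natDegree
        ≤ max (α * p.coeff j).natDegree (β * q.coeff j).natDegree := by
      simpa using natDegree_sub_le (α * p.coeff j) (β * q.coeff j)
    have hgoal : (α * p.coeff j - β * q.coeff j).natDegree + u * j < D + u * s ∨
        ((α * p.coeff j - β * q.coeff j).natDegree + u * j = D + u * s ∧ j < s) := by
      rcases eq_or_ne (α * p.coeff j) 0 with ha | ha
      · rcases eq_or_ne (β * q.coeff j) 0 with hb | hb
        · exact absurd (by rw [ha, hb, sub_zero]) hj
        · have hqj : q.coeff j ≠ 0 := right_ne_zero_of_mul hb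
          have Pb := keyb β q hqj rfl hkq
          have e1 : (α * p.coeff j - β * q.coeff j).natDegree
              = (β * q.coeff j).natDegree := by rw [ha, zero_sub, natDegree_neg]
          have e2 : (β * q.coeff j).natDegree = β.natDegree + (q.coeff j).natDegree :=
            natDegree_mul hβ hqj
          omega
      · have hpj : p.coeff j ≠ 0 := right_ne_zero_of_mul ha
        have Pa := keyb α p hpj (by omega) hkp
        have e2 : (α * p.coeff j).natDegree = α.natDegree + (p.coeff j).natDegree :=
          natDegree_mul hα hpj
        rcases eq_or_ne (β * q.coeff j) 0 with hb | hb
        · have e1 : (α * p.coeff j - β * q.coeff j).natDegree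
              = (α * p.coeff j).natDegree := by rw [hb, sub_zero]
          omega
        · have hqj : q.coeff j ≠ 0 := right_ne_zero_of_mul hb
          have Pb := keyb β q hqj rfl hkq
          have e3 : (β * q.coeff j).natDegree = β.natDegree + (q.coeff j).natDegree :=
            natDegree_mul hβ hqj
          rcases le_max_iff.mp hnd with h | h
          · omega
          · omega
    rw [Prod.Lex.lt_iff]
    rcases hgoal with h | ⟨h1, h2⟩
    · left; simpa using h
    · right; exact ⟨by simpa using h1, h2⟩

lemma sum_split_two {ι : Type*} [Fintype ι] [DecidableEq ι] {M : Type*} [AddCommMonoid M]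
    (f : ι → M) {i j : ι} (hij : i ≠ j) :
    ∑ k, f k = f i + f j + ∑ k ∈ (Finset.univ.erase i).erase j, f k := by
  rw [← Finset.add_sum_erase _ _ (Finset.mem_univ i),
    ← Finset.add_sum_erase _ _ (Finset.mem_erase.mpr ⟨hij.symm, Finset.mem_univ j⟩), add_assoc]

lemma li_update {ι : Type*} [Fintype ι] [DecidableEq ι] {R M : Type*} [CommRing R] [IsDomain R]
    [AddCommGroup M] [Module R M] {g : ι → M} (hg : LinearIndependent R g) {i j : ι}
    (hij : j ≠ i) (a : R) {b : R} (hb : b ≠ 0) :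
    LinearIndependent R (Function.update g i (a • g j + b • g i)) := by
  rw [Fintype.linearIndependent_iff] at hg ⊢
  intro f hf
  set c : ι → R := Function.update (Function.update f i (f i * b)) j (f j + f i * a) with hc
  have hsum : ∑ k, c k • g k = ∑ k, f k • (Function.update g i (a • g j + b • g i)) k := by
    rw [sum_split_two (fun k => c k • g k) hij.symm,
      sum_split_two (fun k => f k • (Function.update g i (a • g j + b • g i)) k) hij.symm]
    congr 1
    · simp only [hc, Function.update_self, Function.update_of_ne hij,
        Function.update_of_ne hij.symm]
      simp only [smul_add, add_smul, smul_smul]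
      abel
    · apply Finset.sum_congr rfl
      intro k hk
      obtain ⟨hkj, hki⟩ := by simpa [Finset.mem_erase] using hk
      simp [hc, Function.update_of_ne hkj, Function.update_of_ne hki]
  have hz := hg c (by rw [hsum, hf])
  have hfi : f i = 0 := by
    have h1 := hz i
    rw [hc, Function.update_of_ne hij.symm, Function.update_self] at h1
    exact (mul_eq_zero.mp h1).resolve_right hb
  have hfj : f j = 0 := by
    have := hz j
    rw [hc, Function.update_self, hfi] at this
    simpa using this
  intro k
  rcases eq_or_ne k i with rfl | hki
  · exact hfi
  rcases eq_or_ne k j with rfl | hkj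
  · exact hfj
  · have := hz k
    rwa [hc, Function.update_of_ne hkj, Function.update_of_ne hki] at this

end Aux

/-- One iteration of steps G3–G5 of Algorithm G acting on `g₀,…,g_r`:
with `s = y-deg(lt(g_r))`, `d = deg(a_{rs}) − deg(a_{ss})`, `c = lc(a_{rs})/lc(a_{ss})`,
update `g_r ← g_r − c x^d g_s` if `d ≥ 0`, and `(g_s, g_r) ← (g_r, x^{-d} g_r − c g_s)`
if `d < 0`; do nothing if `s = r`. -/
noncomputable def stepG (F : Type*) [Field F] (u r : ℕ)
    (g : Fin (r + 1) → Polynomial (Polynomial F)) : Fin (r + 1) → Polynomial (Polynomial F) :=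
  let gr := g (Fin.last r)
  let s := lmY F u gr
  if hs : s < r then
    let gs := g ⟨s, Nat.lt_succ_of_lt hs⟩
    let ars := gr.coeff s
    let ass := gs.coeff s
    let d : ℤ := (ars.natDegree : ℤ) - (ass.natDegree : ℤ)
    let c : F := ars.leadingCoeff / ass.leadingCoeff
    if 0 ≤ d then
      Function.update g (Fin.last r)
        (gr - Polynomial.C (Polynomial.C c * (Polynomial.X : Polynomial F) ^ d.toNat) * gs)
    else
      Function.update (Function.update g ⟨s, Nat.lt_succ_of_lt hs⟩ gr) (Fin.last r)
        (Polynomial.C ((Polynomial.X : Polynomial F) ^ (-d).toNat) * gr - Polynomial.C (Polynomial.C c) * gs)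
  else g

/-- The invariant maintained by Algorithm G. -/
def SInv (F : Type*) [Field F] (u r : ℕ) (g : Fin (r + 1) → Polynomial (Polynomial F)) : Prop :=
  LinearIndependent (Polynomial F) g ∧ (∀ i, (g i).natDegree ≤ r) ∧
    ∀ i : Fin (r + 1), (i : ℕ) < r → lmY F u (g i) = i

/-- Sum of the weighted degrees of the leading monomials. -/
noncomputable def GS1 (F : Type*) [Field F] (u r : ℕ) (g : Fin (r + 1) → Polynomial (Polynomial F)) : ℕ :=
  ∑ i, (ofLex (lmKey F u (g i))).1

/-- Sum of the `y`-degrees of the leading monomials. -/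
noncomputable def GS2 (F : Type*) [Field F] (u r : ℕ) (g : Fin (r + 1) → Polynomial (Polynomial F)) : ℕ :=
  ∑ i, (ofLex (lmKey F u (g i))).2

section Step

variable {F : Type*} [Field F] {u r : ℕ}

lemma sum_split_one {ι : Type*} [Fintype ι] [DecidableEq ι] {M : Type*} [AddCommMonoid M]
    (f : ι → M) (i : ι) :
    ∑ k, f k = f i + ∑ k ∈ Finset.univ.erase i, f k :=
  (Finset.add_sum_erase _ f (Finset.mem_univ i)).symm

lemma lex_lt_iff {k1 k2 : Lex (ℕ × ℕ)} :
    k1 < k2 ↔ ((ofLex k1).1 < (ofLex k2).1 ∨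
      ((ofLex k1).1 = (ofLex k2).1 ∧ (ofLex k1).2 < (ofLex k2).2)) :=
  Prod.Lex.lt_iff

/-- Measure decrease for an update of the last entry only. -/
lemma measure_update_last {g : Fin (r + 1) → Polynomial (Polynomial F)}
    (hInv : SInv F u r g) {v : Polynomial (Polynomial F)}
    (hliu : LinearIndependent (Polynomial F) (Function.update g (Fin.last r) v))
    (hdv : v.natDegree ≤ r)
    (hlt : lmKey F u v < lmKey F u (g (Fin.last r))) :
    SInv F u r (Function.update g (Fin.last r) v) ∧
      (GS1 F u r (Function.update g (Fin.last r) v) < GS1 F u r g ∨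
        (GS1 F u r (Function.update g (Fin.last r) v) = GS1 F u r g ∧
          GS2 F u r (Function.update g (Fin.last r) v) < GS2 F u r g)) := by
  obtain ⟨hli, hdeg, hlow⟩ := hInv
  constructor
  · refine ⟨hliu, fun i => ?_, fun i hi => ?_⟩
    · rcases eq_or_ne i (Fin.last r) with rfl | hi
      · rwa [Function.update_self]
      · rw [Function.update_of_ne hi]; exact hdeg i
    · have hi' : i ≠ Fin.last r := by
        intro e
        rw [e] at hi
        simp only [Fin.val_last] at hi
        omega
      rw [Function.update_of_ne hi']; exact hlow i hi
  · have key : ∀ P : Lex (ℕ × ℕ) → ℕ,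
        (∑ i, P (lmKey F u (Function.update g (Fin.last r) v i)))
          = P (lmKey F u v) + ∑ k ∈ Finset.univ.erase (Fin.last r), P (lmKey F u (g k)) := by
      intro P
      rw [sum_split_one (fun k => P (lmKey F u (Function.update g (Fin.last r) v k))) (Fin.last r)]
      rw [Function.update_self]
      congr 1
      refine Finset.sum_congr rfl fun k hk => ?_
      rw [Function.update_of_ne (Finset.ne_of_mem_erase hk)]
    have e1 := key (fun k => (ofLex k).1)
    have e2 := key (fun k => (ofLex k).2)
    have e3 := sum_split_one (fun k => (ofLex (lmKey F u (g k))).1) (Fin.last r)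
    have e4 := sum_split_one (fun k => (ofLex (lmKey F u (g k))).2) (Fin.last r)
    simp only [GS1, GS2]
    rcases lex_lt_iff.mp hlt with h | ⟨h1, h2⟩
    · left; rw [e1, e3]; omega
    · right
      constructor
      · rw [e1, e3]; omega
      · rw [e2, e4]; omega

/-- Measure decrease for the swap-update of entries `s'` and `last`. -/
lemma measure_update_two {g : Fin (r + 1) → Polynomial (Polynomial F)}
    (hInv : SInv F u r g) {s' : Fin (r + 1)} (hne : s' ≠ Fin.last r)
    (hYlast : lmY F u (g (Fin.last r)) = (s' : ℕ)) {v : Polynomial (Polynomial F)}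
    (hliu : LinearIndependent (Polynomial F)
      (Function.update (Function.update g s' (g (Fin.last r))) (Fin.last r) v))
    (hdv : v.natDegree ≤ r)
    (hlt : lmKey F u v < lmKey F u (g s')) :
    SInv F u r (Function.update (Function.update g s' (g (Fin.last r))) (Fin.last r) v) ∧
      (GS1 F u r (Function.update (Function.update g s' (g (Fin.last r))) (Fin.last r) v)
          < GS1 F u r g ∨
        (GS1 F u r (Function.update (Function.update g s' (g (Fin.last r))) (Fin.last r) v)
            = GS1 F u r g ∧
          GS2 F u r (Function.update (Function.update g s' (g (Fin.last r))) (Fin.last r) v)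
            < GS2 F u r g)) := by
  obtain ⟨hli, hdeg, hlow⟩ := hInv
  have hs'r : (s' : ℕ) < r := by
    have h1 : (s' : ℕ) ≤ r := Nat.lt_succ_iff.mp s'.isLt
    rcases lt_or_eq_of_le h1 with h | h
    · exact h
    · exact absurd (Fin.ext (h.trans (Fin.val_last r).symm)) hne
  have hgsY : lmY F u (g s') = (s' : ℕ) := hlow s' hs'r
  have hupd_last : Function.update (Function.update g s' (g (Fin.last r))) (Fin.last r) v
      (Fin.last r) = v := Function.update_self _ _ _
  have hupd_s' : Function.update (Function.update g s' (g (Fin.last r))) (Fin.last r) v s'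
      = g (Fin.last r) := by
    rw [Function.update_of_ne hne, Function.update_self]
  have hupd_other : ∀ k, k ≠ s' → k ≠ Fin.last r →
      Function.update (Function.update g s' (g (Fin.last r))) (Fin.last r) v k = g k := by
    intro k h1 h2
    rw [Function.update_of_ne h2, Function.update_of_ne h1]
  constructor
  · refine ⟨hliu, fun i => ?_, fun i hi => ?_⟩
    · rcases eq_or_ne i (Fin.last r) with rfl | h2
      · rw [hupd_last]; exact hdv
      · rcases eq_or_ne i s' with rfl | h1
        · rw [hupd_s']; exact hdeg _
        · rw [hupd_other i h1 h2]; exact hdeg i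
    · have h2 : i ≠ Fin.last r := by
        intro e
        rw [e] at hi
        simp only [Fin.val_last] at hi
        omega
      rcases eq_or_ne i s' with rfl | h1
      · rw [hupd_s']; exact hYlast
      · rw [hupd_other i h1 h2]; exact hlow i hi
  · have key : ∀ P : Lex (ℕ × ℕ) → ℕ,
        (∑ i, P (lmKey F u (Function.update (Function.update g s' (g (Fin.last r)))
            (Fin.last r) v i)))
          = P (lmKey F u v) + P (lmKey F u (g (Fin.last r)))
            + ∑ k ∈ (Finset.univ.erase (Fin.last r)).erase s', P (lmKey F u (g k)) := by
      intro P
      rw [sum_split_two (fun k => P (lmKey F u (Function.update (Function.update g s'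
        (g (Fin.last r))) (Fin.last r) v k))) hne.symm]
      rw [hupd_last, hupd_s']
      congr 1
      refine Finset.sum_congr rfl fun k hk => ?_
      obtain ⟨hk1, hk2⟩ : k ≠ s' ∧ k ≠ Fin.last r := by
        simpa [Finset.mem_erase] using hk
      rw [hupd_other k hk1 hk2]
    have e1 := key (fun k => (ofLex k).1)
    have e2 := key (fun k => (ofLex k).2)
    have e3 := sum_split_two (fun k => (ofLex (lmKey F u (g k))).1) hne.symm
    have e4 := sum_split_two (fun k => (ofLex (lmKey F u (g k))).2) hne.symm
    beta_reduce at e1 e2 e3 e4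
    simp only [GS1, GS2]
    rcases lex_lt_iff.mp hlt with h | ⟨h1, h2⟩
    · left; rw [e1, e3]; omega
    · right
      constructor
      · rw [e1, e3]; omega
      · rw [e2, e4]; omega

/-- `g'` satisfies the invariant and the measure decreases from `g` to `g'`. -/
def Dec (F : Type*) [Field F] (u r : ℕ) (g g' : Fin (r + 1) → Polynomial (Polynomial F)) :
    Prop :=
  SInv F u r g' ∧ (GS1 F u r g' < GS1 F u r g ∨
    (GS1 F u r g' = GS1 F u r g ∧ GS2 F u r g' < GS2 F u r g))

/-- Case (a) of one step of Algorithm G. -/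
lemma stepA {g : Fin (r + 1) → Polynomial (Polynomial F)} (hInv : SInv F u r g)
    {s : ℕ} (hs : s < r) (hsY : lmY F u (g (Fin.last r)) = s)
    (hd : ((g ⟨s, Nat.lt_succ_of_lt hs⟩).coeff s).natDegree
      ≤ ((g (Fin.last r)).coeff s).natDegree) :
    Dec F u r g (Function.update g (Fin.last r) (g (Fin.last r) -
      C (C (((g (Fin.last r)).coeff s).leadingCoeff
          / ((g ⟨s, Nat.lt_succ_of_lt hs⟩).coeff s).leadingCoeff)
        * (X : Polynomial F) ^ (((g (Fin.last r)).coeff s).natDegree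
          - ((g ⟨s, Nat.lt_succ_of_lt hs⟩).coeff s).natDegree))
      * g ⟨s, Nat.lt_succ_of_lt hs⟩)) := by
  have hgr : g (Fin.last r) ≠ 0 := hInv.1.ne_zero _
  obtain ⟨hars, hkr⟩ := lmKey_attained (u := u) hgr
  rw [hsY] at hars hkr
  set s' : Fin (r + 1) := ⟨s, Nat.lt_succ_of_lt hs⟩ with hs'def
  have hss' : (s' : ℕ) = s := rfl
  have hne : s' ≠ Fin.last r := by
    intro e
    have h1 := congrArg Fin.val e
    rw [hss', Fin.val_last] at h1
    omega
  have hgs : g s' ≠ 0 := hInv.1.ne_zero _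
  have hYs : lmY F u (g s') = s := by
    rw [hInv.2.2 s' (by rw [hss']; exact hs), hss']
  obtain ⟨hass, hks⟩ := lmKey_attained (u := u) hgs
  rw [hYs] at hass hks
  set c : F := ((g (Fin.last r)).coeff s).leadingCoeff
      / ((g s').coeff s).leadingCoeff with hcdef
  set e : ℕ := ((g (Fin.last r)).coeff s).natDegree
      - ((g s').coeff s).natDegree with hedef
  have hcne : c ≠ 0 :=
    div_ne_zero (leadingCoeff_ne_zero.mpr hars) (leadingCoeff_ne_zero.mpr hass)
  have hβ : (C c * X ^ e : Polynomial F) ≠ 0 :=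
    mul_ne_zero (C_ne_zero.mpr hcne) (pow_ne_zero _ X_ne_zero)
  have hβdeg : (C c * X ^ e : Polynomial F).natDegree = e := by
    rw [natDegree_mul (C_ne_zero.mpr hcne) (pow_ne_zero _ X_ne_zero), natDegree_C,
      natDegree_X_pow, zero_add]
  have hβlc : (C c * X ^ e : Polynomial F).leadingCoeff = c := by
    rw [leadingCoeff_mul, leadingCoeff_C, leadingCoeff_X_pow, mul_one]
  have hliu : LinearIndependent (Polynomial F) (Function.update g (Fin.last r)
      (g (Fin.last r) - C (C c * X ^ e) * g s')) := by
    have hv : g (Fin.last r) - C (C c * X ^ e) * g s'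
        = (-(C c * X ^ e)) • g s' + (1 : Polynomial F) • g (Fin.last r) := by
      rw [smul_eq_C_mul, smul_eq_C_mul, map_neg, map_one]
      ring
    rw [hv]
    exact li_update hInv.1 hne _ one_ne_zero
  have h0 : g (Fin.last r) - C (C c * X ^ e) * g s' ≠ 0 := by
    have h1 := hliu.ne_zero (Fin.last r)
    rwa [Function.update_self] at h1
  have hlt : lmKey F u (g (Fin.last r) - C (C c * X ^ e) * g s')
      < lmKey F u (g (Fin.last r)) := by
    have h1 : C (1 : Polynomial F) * g (Fin.last r) - C (C c * X ^ e) * g s' ≠ 0 := by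
      rwa [map_one, one_mul]
    have hkey := cancel_key_lt (u := u) one_ne_zero hβ hars hass hkr hks
      (by rw [natDegree_one, hβdeg]; omega)
      (by rw [leadingCoeff_one, one_mul, hβlc, hcdef]
          exact (div_mul_cancel₀ _ (leadingCoeff_ne_zero.mpr hass)).symm)
      h1
    rw [map_one, one_mul] at hkey
    have h2 : (C c * X ^ e : Polynomial F).natDegree + ((g s').coeff s).natDegree + u * s
        = ((g (Fin.last r)).coeff s).natDegree + u * s := by
      rw [hβdeg]; omega
    rw [h2] at hkey
    rw [hkr]
    exact hkey
  have hdv : (g (Fin.last r) - C (C c * X ^ e) * g s').natDegree ≤ r := by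
    refine le_trans (natDegree_sub_le _ _)
      (max_le (hInv.2.1 _) (le_trans natDegree_mul_le ?_))
    rw [natDegree_C, zero_add]
    exact hInv.2.1 s'
  exact measure_update_last hInv hliu hdv hlt

/-- Case (b) of one step of Algorithm G. -/
lemma stepB {g : Fin (r + 1) → Polynomial (Polynomial F)} (hInv : SInv F u r g)
    {s : ℕ} (hs : s < r) (hsY : lmY F u (g (Fin.last r)) = s)
    (hd : ((g (Fin.last r)).coeff s).natDegree
      < ((g ⟨s, Nat.lt_succ_of_lt hs⟩).coeff s).natDegree) :
    Dec F u r g (Function.update (Function.update g ⟨s, Nat.lt_succ_of_lt hs⟩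
        (g (Fin.last r))) (Fin.last r)
      (C ((X : Polynomial F) ^ (((g ⟨s, Nat.lt_succ_of_lt hs⟩).coeff s).natDegree
          - ((g (Fin.last r)).coeff s).natDegree)) * g (Fin.last r)
        - C (C (((g (Fin.last r)).coeff s).leadingCoeff
            / ((g ⟨s, Nat.lt_succ_of_lt hs⟩).coeff s).leadingCoeff))
          * g ⟨s, Nat.lt_succ_of_lt hs⟩)) := by
  have hgr : g (Fin.last r) ≠ 0 := hInv.1.ne_zero _
  obtain ⟨hars, hkr⟩ := lmKey_attained (u := u) hgr
  rw [hsY] at hars hkr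
  set s' : Fin (r + 1) := ⟨s, Nat.lt_succ_of_lt hs⟩ with hs'def
  have hss' : (s' : ℕ) = s := rfl
  have hne : s' ≠ Fin.last r := by
    intro e
    have h1 := congrArg Fin.val e
    rw [hss', Fin.val_last] at h1
    omega
  have hgs : g s' ≠ 0 := hInv.1.ne_zero _
  have hYs : lmY F u (g s') = s := by
    rw [hInv.2.2 s' (by rw [hss']; exact hs), hss']
  obtain ⟨hass, hks⟩ := lmKey_attained (u := u) hgs
  rw [hYs] at hass hks
  set c : F := ((g (Fin.last r)).coeff s).leadingCoeff
      / ((g s').coeff s).leadingCoeff with hcdef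
  set e : ℕ := ((g s').coeff s).natDegree
      - ((g (Fin.last r)).coeff s).natDegree with hedef
  have hcne : c ≠ 0 :=
    div_ne_zero (leadingCoeff_ne_zero.mpr hars) (leadingCoeff_ne_zero.mpr hass)
  have hliu : LinearIndependent (Polynomial F) (Function.update (Function.update g s'
      (g (Fin.last r))) (Fin.last r) (C (X ^ e) * g (Fin.last r) - C (C c) * g s')) := by
    have hswap : Function.update (Function.update g s' (g (Fin.last r))) (Fin.last r)
        (C (X ^ e) * g (Fin.last r) - C (C c) * g s')
        = Function.update (g ∘ (Equiv.swap s' (Fin.last r))) (Fin.last r)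
          ((X ^ e : Polynomial F) • (g ∘ (Equiv.swap s' (Fin.last r))) s'
            + (-(C c)) • (g ∘ (Equiv.swap s' (Fin.last r))) (Fin.last r)) := by
      funext k
      rcases eq_or_ne k (Fin.last r) with rfl | hk
      · rw [Function.update_self, Function.update_self]
        simp only [Function.comp_apply, Equiv.swap_apply_left, Equiv.swap_apply_right]
        rw [smul_eq_C_mul, smul_eq_C_mul, map_neg]
        ring
      · rw [Function.update_of_ne hk, Function.update_of_ne hk]
        rcases eq_or_ne k s' with rfl | hk2
        · rw [Function.update_self]
          simp [Equiv.swap_apply_left]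
        · rw [Function.update_of_ne hk2]
          simp [Equiv.swap_apply_of_ne_of_ne hk2 hk]
    rw [hswap]
    exact li_update (hInv.1.comp _ (Equiv.injective _)) hne (X ^ e)
      (neg_ne_zero.mpr (C_ne_zero.mpr hcne))
  have h0 : C (X ^ e : Polynomial F) * g (Fin.last r) - C (C c) * g s' ≠ 0 := by
    have h1 := hliu.ne_zero (Fin.last r)
    rwa [Function.update_self] at h1
  have hlt : lmKey F u (C (X ^ e : Polynomial F) * g (Fin.last r) - C (C c) * g s')
      < lmKey F u (g s') := by
    have hkey := cancel_key_lt (u := u) (pow_ne_zero e (X_ne_zero (R := F)))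
      (C_ne_zero.mpr hcne) hars hass hkr hks
      (by rw [natDegree_X_pow, natDegree_C]; omega)
      (by rw [leadingCoeff_X_pow, one_mul, leadingCoeff_C, hcdef]
          exact (div_mul_cancel₀ _ (leadingCoeff_ne_zero.mpr hass)).symm)
      h0
    have h2 : (C c : Polynomial F).natDegree + ((g s').coeff s).natDegree + u * s
        = ((g s').coeff s).natDegree + u * s := by
      rw [natDegree_C, zero_add]
    rw [h2] at hkey
    rw [hks]
    exact hkey
  have hdv : (C (X ^ e : Polynomial F) * g (Fin.last r) - C (C c) * g s').natDegree ≤ r := by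
    refine le_trans (natDegree_sub_le _ _) (max_le (le_trans natDegree_mul_le ?_)
      (le_trans natDegree_mul_le ?_))
    · rw [natDegree_C, zero_add]; exact hInv.2.1 _
    · rw [natDegree_C, zero_add]; exact hInv.2.1 s'
  have hYlast : lmY F u (g (Fin.last r)) = (s' : ℕ) := by rw [hss']; exact hsY
  exact measure_update_two hInv hne hYlast hliu hdv hlt

/-- One step of Algorithm G preserves the invariant and decreases the measure. -/
lemma stepG_dec (g : Fin (r + 1) → Polynomial (Polynomial F)) (hInv : SInv F u r g)
    (hs : lmY F u (g (Fin.last r)) < r) :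
    Dec F u r g (stepG F u r g) := by
  rcases le_or_gt
    (((g ⟨lmY F u (g (Fin.last r)), Nat.lt_succ_of_lt hs⟩).coeff
      (lmY F u (g (Fin.last r)))).natDegree)
    (((g (Fin.last r)).coeff (lmY F u (g (Fin.last r)))).natDegree) with hd | hd
  · have hd' : (0:ℤ) ≤ (((g (Fin.last r)).coeff (lmY F u (g (Fin.last r)))).natDegree : ℤ)
        - (((g ⟨lmY F u (g (Fin.last r)), Nat.lt_succ_of_lt hs⟩).coeff
          (lmY F u (g (Fin.last r)))).natDegree : ℤ) := by omega
    rw [stepG, dif_pos hs, if_pos hd', Int.toNat_sub]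
    exact stepA hInv hs rfl hd
  · have hd' : ¬ (0:ℤ) ≤ (((g (Fin.last r)).coeff (lmY F u (g (Fin.last r)))).natDegree : ℤ)
        - (((g ⟨lmY F u (g (Fin.last r)), Nat.lt_succ_of_lt hs⟩).coeff
          (lmY F u (g (Fin.last r)))).natDegree : ℤ) := by omega
    rw [stepG, dif_pos hs, if_neg hd',
      show (-((((g (Fin.last r)).coeff (lmY F u (g (Fin.last r)))).natDegree : ℤ)
          - (((g ⟨lmY F u (g (Fin.last r)), Nat.lt_succ_of_lt hs⟩).coeff
            (lmY F u (g (Fin.last r)))).natDegree : ℤ))).toNat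
        = ((g ⟨lmY F u (g (Fin.last r)), Nat.lt_succ_of_lt hs⟩).coeff
            (lmY F u (g (Fin.last r)))).natDegree
          - ((g (Fin.last r)).coeff (lmY F u (g (Fin.last r)))).natDegree from by omega]
    exact stepB hInv hs rfl hd

end Step

/-- Termination of Algorithm G: if `g₀,…,g_r` are `F[x]`-linearly independent, have
`y`-degrees at most `r`, and `y-deg(lt(gᵢ)) = i` for `i < r`, then after finitely many
updates it holds that `y-deg(lt(gᵢ)) = i` for all `0 ≤ i ≤ r`. -/
theorem stmt13 {F : Type*} [Field F] (u r : ℕ) (hr : 0 < r)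
    (g : Fin (r + 1) → Polynomial (Polynomial F))
    (hind : LinearIndependent (Polynomial F) g)
    (hydeg : ∀ i, (g i).natDegree ≤ r)
    (hlow : ∀ i : Fin (r + 1), (i : ℕ) < r → lmY F u (g i) = i) :
    ∃ N : ℕ, ∀ i : Fin (r + 1), lmY F u ((stepG F u r)^[N] g i) = i := by
  suffices H : ∀ n (g : Fin (r + 1) → Polynomial (Polynomial F)),
      GS1 F u r g * ((r + 1) * r + 1) + GS2 F u r g = n → SInv F u r g →
      ∃ N : ℕ, ∀ i : Fin (r + 1), lmY F u ((stepG F u r)^[N] g i) = i by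
    exact H _ g rfl ⟨hind, hydeg, hlow⟩
  intro n
  induction n using Nat.strong_induction_on with
  | _ n IH =>
    intro g hn hInv
    rcases eq_or_ne (lmY F u (g (Fin.last r))) r with hY | hY
    · refine ⟨0, fun i => ?_⟩
      simp only [Function.iterate_zero, id_eq]
      rcases lt_or_ge (i : ℕ) r with h | h
      · exact hInv.2.2 i h
      · have hlt := i.isLt
        have hi : i = Fin.last r := by
          apply Fin.ext
          rw [Fin.val_last]
          omega
        rw [hi, Fin.val_last]
        exact hY
    · have hs : lmY F u (g (Fin.last r)) < r :=
        lt_of_le_of_ne (le_trans (lmY_le_natDegree _) (hInv.2.1 _)) hY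
      obtain ⟨hInv', hdec⟩ := stepG_dec g hInv hs
      have hS2 : GS2 F u r (stepG F u r g) ≤ (r + 1) * r := by
        rw [GS2]
        calc ∑ i, (ofLex (lmKey F u (stepG F u r g i))).2
            ≤ ∑ _i : Fin (r + 1), r :=
              Finset.sum_le_sum fun i _ =>
                le_trans (lmY_le_natDegree _) (hInv'.2.1 i)
          _ = (r + 1) * r := by
              simp [Finset.sum_const, Finset.card_univ, mul_comm]
      have hμ : GS1 F u r (stepG F u r g) * ((r + 1) * r + 1)
          + GS2 F u r (stepG F u r g) < n := by
        rcases hdec with h | ⟨h1, h2⟩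
        · calc GS1 F u r (stepG F u r g) * ((r + 1) * r + 1)
                + GS2 F u r (stepG F u r g)
              < GS1 F u r (stepG F u r g) * ((r + 1) * r + 1) + ((r + 1) * r + 1) := by
                omega
            _ = (GS1 F u r (stepG F u r g) + 1) * ((r + 1) * r + 1) := by ring
            _ ≤ GS1 F u r g * ((r + 1) * r + 1) :=
                Nat.mul_le_mul_right _ (by omega)
            _ ≤ n := by omega
        · rw [h1]; omega
      obtain ⟨N, hN⟩ := IH _ hμ (stepG F u r g) rfl hInv'
      exact ⟨N + 1, fun i => by rw [Function.iterate_succ_apply]; exact hN i⟩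
end

section
/- During Algorithm G, the diagonal degree sum is strictly dominant: writing gᵢ = Σⱼ a_{ij} y^j for the state after any update step, for every non-identity permutation π of {0,...,r} one has Σᵢ deg(a_{ii}) > Σᵢ deg(a_{iπ(i)}) (with deg(0) = −∞), provided this held before the update. -/
open Polynomial

open Finset

lemma sum_split2 {n : ℕ} {M : Type*} [AddCommMonoid M] (f : Fin n → M) {s r : Fin n} (h : s ≠ r) :
    ∑ i, f i = (∑ i ∈ (univ.erase s).erase r, f i) + f s + f r := by
  rw [← Finset.add_sum_erase univ f (mem_univ s),
      ← Finset.add_sum_erase _ f (Finset.mem_erase.mpr ⟨h.symm, mem_univ r⟩)]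
  abel

lemma coreZ {n : ℕ} (b : Fin n → Fin n → ℤ) (s r : Fin n) (hsr : s ≠ r)
    (W : ∀ i k, i ≠ r → b i k ≤ b i i)
    (Wst : ∀ i k, i ≠ r → i < k → b i k < b i i)
    (P : ∀ k, b r k ≤ b r s) (Pst : ∀ k, s < k → b r k < b r s)
    (H : ∀ π : Equiv.Perm (Fin n), π ≠ 1 → ∑ i, b i (π i) < ∑ i, b i i)
    (p q : Fin n) (hor : (p = s ∧ q = r) ∨ (p = r ∧ q = s))
    (ρ : Equiv.Perm (Fin n)) (hρq : ρ q ≠ s) (hswap : p = r → ρ ≠ Equiv.swap s r) :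
    (∑ i ∈ (univ.erase s).erase r, b i (ρ i)) + b p (ρ s) + b p (ρ r) + b q s
      < (∑ i, b i i) + b p s := by
  have hpq : p ≠ q := by
    rcases hor with ⟨hp, hq⟩ | ⟨hp, hq⟩ <;> rw [hp, hq] <;> first | exact hsr | exact hsr.symm
  have hps : p = s ∨ p = r := by
    rcases hor with ⟨hp, _⟩ | ⟨hp, _⟩ <;> [exact Or.inl hp; exact Or.inr hp]
  have hqs : q = s ∨ q = r := by
    rcases hor with ⟨_, hq⟩ | ⟨_, hq⟩ <;> [exact Or.inr hq; exact Or.inl hq]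
  have hpP : ∀ k, b p k ≤ b p s := by
    rcases hor with ⟨hp, _⟩ | ⟨hp, _⟩
    · intro k; rw [hp]; exact W s k hsr
    · intro k; rw [hp]; exact P k
  have hpPst : ∀ k, s < k → b p k < b p s := by
    rcases hor with ⟨hp, _⟩ | ⟨hp, _⟩
    · intro k hk; rw [hp]; exact Wst s k hsr hk
    · intro k hk; rw [hp]; exact Pst k hk
  by_cases hA : ρ p = s
  · -- Case A: a single hdom application suffices
    set σ : Equiv.Perm (Fin n) := ρ * Equiv.swap p q with hσdef
    have hσ1 : σ ≠ 1 := by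
      intro h
      have hρeq : ρ = Equiv.swap p q := by
        have h2 := congrArg (· * (Equiv.swap p q)⁻¹) h
        simpa [hσdef, mul_assoc] using h2
      rcases hor with ⟨hp, hq⟩ | ⟨hp, hq⟩
      · exact hρq (by rw [hρeq, Equiv.swap_apply_right, hp])
      · exact hswap hp (by rw [hρeq, hp, hq, Equiv.swap_comm])
    have hH := H σ hσ1
    have hσee : ∀ i ∈ (univ.erase s).erase r, (fun i => b i (σ i)) i = (fun i => b i (ρ i)) i := by
      intro i hi
      rcases Finset.mem_erase.mp hi with ⟨hir, hi2⟩
      rcases Finset.mem_erase.mp hi2 with ⟨his, _⟩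
      have hip : i ≠ p := by rcases hps with h | h <;> rw [h] <;> assumption
      have hiq : i ≠ q := by rcases hqs with h | h <;> rw [h] <;> assumption
      simp only [hσdef, Equiv.Perm.mul_apply, Equiv.swap_apply_of_ne_of_ne hip hiq]
    rw [sum_split2 (fun i => b i (σ i)) hsr, Finset.sum_congr rfl hσee] at hH
    rcases hor with ⟨hp, hq⟩ | ⟨hp, hq⟩
    · have h1 : σ s = ρ r := by
        show ρ (Equiv.swap p q s) = ρ r
        rw [← hp, Equiv.swap_apply_left, hq]
      have h2 : σ r = s := by
        show ρ (Equiv.swap p q r) = s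
        rw [← hq, Equiv.swap_apply_right, hA]
      rw [h1, h2] at hH
      have e1 : b p (ρ s) = b p s := by rw [hp] at hA ⊢; rw [hA]
      have e2 : b p (ρ r) = b s (ρ r) := by rw [hp]
      have e3 : b q s = b r s := by rw [hq]
      rw [e1, e2, e3]
      linarith
    · have h1 : σ s = s := by
        show ρ (Equiv.swap p q s) = s
        have hqs' : Equiv.swap p q s = p := by rw [← hq]; exact Equiv.swap_apply_right p q
        rw [hqs']; exact hA
      have h2 : σ r = ρ s := by
        show ρ (Equiv.swap p q r) = ρ s
        rw [← hp, Equiv.swap_apply_left, hq]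
      rw [h1, h2] at hH
      have e1 : b p (ρ r) = b p s := by rw [hp] at hA ⊢; rw [hA]
      have e2 : b p (ρ s) = b r (ρ s) := by rw [hp]
      have e3 : b q s = b s s := by rw [hq]
      rw [e1, e2, e3]
      linarith
  · -- Case B: walk construction
    have hρs : ρ s ≠ s := by
      rcases hor with ⟨hp, hq⟩ | ⟨hp, hq⟩
      · intro h; exact hA (by rw [hp]; exact h)
      · intro h; exact hρq (by rw [hq]; exact h)
    have hρr : ρ r ≠ s := by
      rcases hor with ⟨hp, hq⟩ | ⟨hp, hq⟩
      · intro h; exact hρq (by rw [hq]; exact h)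
      · intro h; exact hA (by rw [hp]; exact h)
    set t : ℕ → Fin n := fun m => ((ρ⁻¹) ^ m) s with htdef
    have ht0 : t 0 = s := rfl
    have htsucc : ∀ m, t (m + 1) = ρ⁻¹ (t m) := by
      intro m
      show ((ρ⁻¹) ^ (m + 1)) s = ρ⁻¹ (((ρ⁻¹) ^ m) s)
      rw [pow_succ']
      rfl
    have hρt : ∀ m, ρ (t (m + 1)) = t m := by
      intro m; rw [htsucc]; exact ρ.apply_symm_apply (t m)
    have hex : ∃ m, 0 < m ∧ (t m = s ∨ t m = r) := by
      refine ⟨orderOf ρ⁻¹, orderOf_pos ρ⁻¹, Or.inl ?_⟩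
      show ((ρ⁻¹) ^ orderOf ρ⁻¹) s = s
      rw [pow_orderOf_eq_one]; rfl
    set K := Nat.find hex with hKdef
    have hspec := Nat.find_spec hex
    rw [← hKdef] at hspec
    obtain ⟨hK0, hKsr⟩ := hspec
    have hmid : ∀ m, 0 < m → m < K → t m ≠ s ∧ t m ≠ r := by
      intro m hm hmK
      have h2 := Nat.find_min hex (hKdef ▸ hmK)
      push_neg at h2
      exact h2 hm
    have hρt1 : ρ (t 1) = s := by
      have h2 := hρt 0
      rw [ht0] at h2
      simpa using h2
    have ht1 : t 1 ≠ s ∧ t 1 ≠ r := by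
      constructor
      · intro h; exact hρs (h ▸ hρt1)
      · intro h; exact hρr (h ▸ hρt1)
    have hK2 : 2 ≤ K := by
      rcases Nat.lt_or_ge K 2 with h | h
      · exfalso
        have hK1 : K = 1 := by omega
        rw [hK1] at hKsr
        rcases hKsr with h' | h'
        · exact ht1.1 h'
        · exact ht1.2 h'
      · exact h
    have hKK : K - 1 + 1 = K := by omega
    have hρtK : ρ (t K) = t (K - 1) := by
      have h2 := hρt (K - 1); rwa [hKK] at h2
    set Wk : Finset (Fin n) := (Finset.range (K - 1)).image (fun m => t (m + 1)) with hWkdef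
    have hWk_mem : ∀ w : Fin n, w ∈ Wk ↔ ∃ m, m < K - 1 ∧ t (m + 1) = w := by
      intro w; simp [hWkdef]
    have hWksr : ∀ w ∈ Wk, w ≠ s ∧ w ≠ r := by
      intro w hw
      obtain ⟨m, hm, hrfl⟩ := (hWk_mem w).mp hw
      rw [← hrfl]
      exact hmid (m + 1) (Nat.succ_pos m) (by omega)
    have hsWk : s ∉ Wk := fun h => (hWksr s h).1 rfl
    have hrWk : r ∉ Wk := fun h => (hWksr r h).2 rfl
    have hpWk : p ∉ Wk := by rcases hps with h | h <;> rw [h] <;> assumption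
    have hqWk : q ∉ Wk := by rcases hqs with h | h <;> rw [h] <;> assumption
    have htmem : ∀ m, 0 < m → m < K → t m ∈ Wk := by
      intro m hm hmK
      refine (hWk_mem _).mpr ⟨m - 1, by omega, ?_⟩
      congr 1; omega
    have htK1W : t (K - 1) ∈ Wk := htmem (K - 1) (by omega) (by omega)
    have hxpq : t K = p ∨ t K = q := by
      rcases hKsr with h | h <;> rcases hor with ⟨hp, hq⟩ | ⟨hp, hq⟩
      · exact Or.inl (by rw [h, hp])
      · exact Or.inr (by rw [h, hq])
      · exact Or.inr (by rw [h, hq])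
      · exact Or.inl (by rw [h, hp])
    set x' : Fin n := if t K = p then q else p with hx'def
    have hx'x : x' ≠ t K := by
      by_cases h : t K = p
      · rw [hx'def, if_pos h, h]; exact fun hh => hpq hh.symm
      · rw [hx'def, if_neg h]; exact fun hh => h hh.symm
    have hx'pq : x' = p ∨ x' = q := by
      by_cases h : t K = p <;> simp [hx'def, h]
    have hpre : ∀ y : Fin n, ρ y ∈ Wk → (y ∈ Wk ∨ y = t K) := by
      intro y hy
      obtain ⟨m, hm, hmy⟩ := (hWk_mem _).mp hy
      have hy2 : y = t (m + 2) := by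
        have h3 : t (m + 2) = ρ⁻¹ (t (m + 1)) := htsucc (m + 1)
        rw [h3, hmy, Equiv.Perm.inv_def, Equiv.symm_apply_apply]
      rcases Nat.lt_or_ge (m + 2) K with h | h
      · exact Or.inl (hy2 ▸ htmem (m + 2) (by omega) h)
      · have : m + 2 = K := by omega
        exact Or.inr (by rw [hy2, this])
    have hpres : ∀ y : Fin n, ρ y = s → y = t 1 := by
      intro y hy
      have h3 : t 1 = ρ⁻¹ s := by rw [htsucc 0, ht0]
      rw [h3, ← hy, Equiv.Perm.inv_def, Equiv.symm_apply_apply]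
    set f : Fin n → Fin n := fun i => if i ∈ Wk then i else if i = q then s else if i = p then ρ x' else ρ i with hfdef
    have hfW : ∀ w ∈ Wk, f w = w := fun w hw => by simp [hfdef, hw]
    have hfq : f q = s := by simp [hfdef, hqWk, hpq]
    have hfp : f p = ρ x' := by simp [hfdef, hpWk, hpq]
    have hfo : ∀ i, i ∉ Wk → i ≠ q → i ≠ p → f i = ρ i := fun i h1 h2 h3 => by
      simp [hfdef, h1, h2, h3]
    have hρx'Wk : ρ x' ∉ Wk := by
      intro h
      rcases hpre _ h with h' | h'
      · rcases hx'pq with hh | hh <;> rw [hh] at h'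
        · exact hpWk h'
        · exact hqWk h'
      · exact hx'x h'
    have hρx'ns : ρ x' ≠ s := by
      intro h
      have h2 := hpres _ h
      have h3 : t 1 = p ∨ t 1 = q := by
        rcases hx'pq with hh | hh <;> rw [hh] at h2
        · exact Or.inl h2.symm
        · exact Or.inr h2.symm
      rcases h3 with hh | hh
      · rcases hps with h4 | h4 <;> rw [h4] at hh
        · exact ht1.1 hh
        · exact ht1.2 hh
      · rcases hqs with h4 | h4 <;> rw [h4] at hh
        · exact ht1.1 hh
        · exact ht1.2 hh
    have hfnW : ∀ i, i ∉ Wk → f i ∉ Wk := by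
      intro i hi
      by_cases hiq : i = q
      · rw [hiq, hfq]; exact hsWk
      by_cases hip : i = p
      · rw [hip, hfp]; exact hρx'Wk
      · rw [hfo i hi hiq hip]
        intro h
        rcases hpre i h with h' | h'
        · exact hi h'
        · rcases hxpq with hh | hh <;> rw [h'] at hip hiq
          · exact hip hh
          · exact hiq hh
    have hinj : Function.Injective f := by
      intro i j hij
      by_cases hiW : i ∈ Wk <;> by_cases hjW : j ∈ Wk
      · rwa [hfW i hiW, hfW j hjW] at hij
      · exfalso; rw [hfW i hiW] at hij; exact (hfnW j hjW) (hij ▸ hiW)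
      · exfalso; rw [hfW j hjW] at hij; exact (hfnW i hiW) (hij.symm ▸ hjW)
      · by_cases hiq : i = q <;> by_cases hjq : j = q
        · rw [hiq, hjq]
        · exfalso
          rw [hiq, hfq] at hij
          by_cases hjp : j = p
          · rw [hjp, hfp] at hij; exact hρx'ns hij.symm
          · rw [hfo j hjW hjq hjp] at hij
            have := hpres j hij.symm
            exact hjW (this ▸ htmem 1 one_pos (by omega))
        · exfalso
          rw [hjq, hfq] at hij
          by_cases hip : i = p
          · rw [hip, hfp] at hij; exact hρx'ns hij
          · rw [hfo i hiW hiq hip] at hij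
            have := hpres i hij
            exact hiW (this ▸ htmem 1 one_pos (by omega))
        · by_cases hip : i = p <;> by_cases hjp : j = p
          · rw [hip, hjp]
          · exfalso
            rw [hip, hfp] at hij
            rw [hfo j hjW hjq hjp] at hij
            have hjx : j = x' := ρ.injective hij.symm
            rcases hx'pq with hh | hh <;> rw [hjx] at hjp hjq
            · exact hjp hh
            · exact hjq hh
          · exfalso
            rw [hjp, hfp] at hij
            rw [hfo i hiW hiq hip] at hij
            have hix : i = x' := ρ.injective hij
            rcases hx'pq with hh | hh <;> rw [hix] at hip hiq
            · exact hip hh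
            · exact hiq hh
          · rw [hfo i hiW hiq hip, hfo j hjW hjq hjp] at hij
            exact ρ.injective hij
    have hbij := Finite.injective_iff_bijective.mp hinj
    set σ : Equiv.Perm (Fin n) := Equiv.ofBijective f hbij with hσdef
    have hσap : ∀ i, σ i = f i := fun i => rfl
    have hSD : ∑ i, b i (σ i) ≤ ∑ i, b i i := by
      by_cases h1 : σ = 1
      · apply le_of_eq
        apply Finset.sum_congr rfl
        intro i _
        rw [h1]; rfl
      · exact (H σ h1).le
    set τ : Fin n → Fin n := fun i => if i = q then s else ρ i with hτdef
    set A' : Fin n → ℤ := fun i => b i (τ i) + (if i = p then b p (ρ q) else 0) with hA'def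
    set B' : Fin n → ℤ := fun i => b i (f i) + (if i = p then b p s else 0) with hB'def
    have hext : b p (ρ p) + b p (ρ q) ≤ b p (ρ x') + b p s ∧
        (s < t (K - 1) → b p (ρ p) + b p (ρ q) < b p (ρ x') + b p s) := by
      rcases hxpq with hxp | hxq
      · have hx'q : x' = q := by rw [hx'def, if_pos hxp]
        have hρp : ρ p = t (K - 1) := by rw [← hxp, hρtK]
        rw [hx'q, hρp]
        constructor
        · have := hpP (t (K - 1)); linarith
        · intro hlt; have := hpPst (t (K - 1)) hlt; linarith
      · have htKp : t K ≠ p := by rw [hxq]; exact fun h => hpq h.symm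
        have hx'p : x' = p := by rw [hx'def, if_neg htKp]
        have hρq2 : ρ q = t (K - 1) := by rw [← hxq, hρtK]
        rw [hx'p, hρq2]
        constructor
        · have := hpP (t (K - 1)); linarith
        · intro hlt; have := hpPst (t (K - 1)) hlt; linarith
    have hle : ∀ i ∈ univ, A' i ≤ B' i := by
      intro i _
      by_cases hiW : i ∈ Wk
      · have hip : i ≠ p := fun h => hpWk (h ▸ hiW)
        have hiq : i ≠ q := fun h => hqWk (h ▸ hiW)
        have hir : i ≠ r := (hWksr i hiW).2
        simp only [hA'def, hB'def, hτdef, if_neg hiq, if_neg hip, hfW i hiW, add_zero]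
        exact W i (ρ i) hir
      · by_cases hiq : i = q
        · rw [hiq]
          have hqp : q ≠ p := fun h => hpq h.symm
          simp [hA'def, hB'def, hτdef, hfq, hqp]
        · by_cases hip : i = p
          · rw [hip]
            simp only [hA'def, hB'def, hτdef, if_neg hpq, if_pos rfl, hfp]
            exact hext.1
          · simp only [hA'def, hB'def, hτdef, if_neg hiq, if_neg hip, hfo i hiW hiq hip, add_zero]
            exact le_rfl
    have hstrict : ∃ i ∈ univ, A' i < B' i := by
      by_cases hst : ∃ w ∈ Wk, b w (ρ w) < b w w
      · obtain ⟨w, hw, hlt⟩ := hst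
        refine ⟨w, mem_univ w, ?_⟩
        have hip : w ≠ p := fun h => hpWk (h ▸ hw)
        have hiq : w ≠ q := fun h => hqWk (h ▸ hw)
        simp only [hA'def, hB'def, hτdef, if_neg hiq, if_neg hip, hfW w hw, add_zero]
        exact hlt
      · push_neg at hst
        have hmono : ∀ w ∈ Wk, ρ w ≤ w := by
          intro w hw
          by_contra h
          exact absurd (Wst w (ρ w) (hWksr w hw).2 (lt_of_not_ge h)) (not_lt.mpr (hst w hw))
        have hchain : ∀ m, 0 < m → m < K → s < t m := by
          intro m
          induction m with
          | zero => intro h; omega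
          | succ m ih =>
            intro _ hmK
            have hWm : t (m + 1) ∈ Wk := htmem _ (Nat.succ_pos m) hmK
            have hmn := hmono _ hWm
            rw [hρt m] at hmn
            rcases Nat.eq_zero_or_pos m with h0 | hpos
            · rw [h0, ht0] at hmn
              have hne : t (0 + 1) ≠ s := (hmid 1 one_pos (by omega)).1
              rw [h0]
              exact lt_of_le_of_ne hmn (by simpa using hne.symm)
            · exact lt_of_lt_of_le (ih hpos (by omega)) hmn
        have hsK1 : s < t (K - 1) := hchain (K - 1) (by omega) (by omega)
        refine ⟨p, mem_univ p, ?_⟩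
        simp only [hA'def, hB'def, hτdef, if_neg hpq, if_pos rfl, hfp]
        exact hext.2 hsK1
    have hAB := Finset.sum_lt_sum hle hstrict
    have hsumA : ∑ i, A' i = (∑ i, b i (τ i)) + b p (ρ q) := by
      simp only [hA'def]
      rw [Finset.sum_add_distrib, Finset.sum_ite_eq' univ p (fun _ => b p (ρ q))]
      simp
    have hsumB : ∑ i, B' i = (∑ i, b i (f i)) + b p s := by
      simp only [hB'def]
      rw [Finset.sum_add_distrib, Finset.sum_ite_eq' univ p (fun _ => b p s)]
      simp
    have hsumτ : ∑ i, b i (τ i)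
        = (∑ i ∈ (univ.erase s).erase r, b i (ρ i)) + b s (τ s) + b r (τ r) := by
      rw [sum_split2 (fun i => b i (τ i)) hsr]
      have hee : ∑ i ∈ (univ.erase s).erase r, b i (τ i)
          = ∑ i ∈ (univ.erase s).erase r, b i (ρ i) := by
        apply Finset.sum_congr rfl
        intro i hi
        rcases Finset.mem_erase.mp hi with ⟨hir, hi2⟩
        rcases Finset.mem_erase.mp hi2 with ⟨his, _⟩
        have hiq : i ≠ q := by rcases hqs with h | h <;> rw [h] <;> assumption
        simp only [hτdef, if_neg hiq]
      rw [hee]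
    have hfB : ∑ i, b i (f i) = ∑ i, b i (σ i) := by
      apply Finset.sum_congr rfl; intro i _; rw [hσap]
    rw [hfB] at hsumB
    rcases hor with ⟨hp, hq⟩ | ⟨hp, hq⟩
    · have hτs : τ s = ρ s := by
        simp only [hτdef]
        rw [if_neg (by rw [hq]; exact hsr)]
      have hτr : τ r = s := by
        simp only [hτdef]
        rw [if_pos (by rw [hq])]
      have e1 : b p (ρ s) = b s (ρ s) := by rw [hp]
      have e2 : b p (ρ r) = b p (ρ q) := by rw [hq]
      have e3 : b q s = b r s := by rw [hq]
      rw [e1, e2, e3]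
      rw [hsumA, hsumτ, hτs, hτr] at hAB
      rw [hsumB] at hAB
      have e4 : b p s = b s s := by rw [hp]
      linarith [hSD, hAB]
    · have hτs : τ s = s := by
        simp only [hτdef]
        rw [if_pos (by rw [hq])]
      have hτr : τ r = ρ r := by
        simp only [hτdef]
        rw [if_neg (by rw [hq]; exact hsr.symm)]
      have e1 : b p (ρ s) = b p (ρ q) := by rw [hq]
      have e2 : b p (ρ r) = b r (ρ r) := by rw [hp]
      have e3 : b q s = b s s := by rw [hq]
      rw [e1, e2, e3]
      rw [hsumA, hsumτ, hτs, hτr] at hAB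
      rw [hsumB] at hAB
      have e4 : b p s = b r s := by rw [hp]
      linarith [hSD, hAB]

lemma lmY_spec {F : Type*} [Field F] (u : ℕ) (f : Polynomial (Polynomial F)) (hf : f ≠ 0) :
    f.coeff (lmY F u f) ≠ 0 ∧
    (∀ j, f.coeff j ≠ 0 →
      (f.coeff j).natDegree + u * j ≤ (f.coeff (lmY F u f)).natDegree + u * (lmY F u f)) ∧
    (∀ j, f.coeff j ≠ 0 → lmY F u f < j →
      (f.coeff j).natDegree + u * j < (f.coeff (lmY F u f)).natDegree + u * (lmY F u f)) := by
  obtain ⟨j0, hj0mem, hj0⟩ := Finset.exists_mem_eq_sup f.support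
    (nonempty_support_iff.mpr hf) (fun j => toLex ((f.coeff j).natDegree + u * j, j))
  have hY : lmY F u f = j0 := by
    rw [lmY, lmKey, hj0]; rfl
  have hle : ∀ j, f.coeff j ≠ 0 →
      toLex ((f.coeff j).natDegree + u * j, j) ≤ toLex ((f.coeff j0).natDegree + u * j0, j0) := by
    intro j hj
    rw [← hj0]
    exact Finset.le_sup (f := fun j => toLex ((f.coeff j).natDegree + u * j, j)) (mem_support_iff.mpr hj)
  rw [hY]
  refine ⟨mem_support_iff.mp hj0mem, ?_, ?_⟩
  · intro j hj
    rcases Prod.Lex.le_iff.mp (hle j hj) with h | ⟨h1, _⟩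
    · exact le_of_lt h
    · exact le_of_eq h1
  · intro j hj hlt
    rcases Prod.Lex.le_iff.mp (hle j hj) with h | ⟨h1, h2⟩
    · exact h
    · exact absurd h2 (not_le.mpr hlt)

set_option maxHeartbeats 3000000 in
/-- During Algorithm G the diagonal degree sum is strictly dominant: if, writing
`gᵢ = Σⱼ a_{ij} yʲ`, one has `Σᵢ deg(a_{iπ(i)}) < Σᵢ deg(a_{ii})` for every
non-identity permutation `π` (degrees in `WithBot ℕ`, so `deg 0 = ⊥`), and an update
actually occurs (`s = y-deg(lt(g_r)) < r`), then the same inequalities hold after the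
update. -/
theorem stmt14 {F : Type*} [Field F] (u r : ℕ)
    (g : Fin (r + 1) → Polynomial (Polynomial F))
    (hlow : ∀ i : Fin (r + 1), (i : ℕ) < r → lmY F u (g i) = i)
    (hs : lmY F u (g (Fin.last r)) < r)
    (hdom : ∀ π : Equiv.Perm (Fin (r + 1)), π ≠ 1 →
      ∑ i, ((g i).coeff (π i : ℕ)).degree < ∑ i, ((g i).coeff (i : ℕ)).degree) :
    ∀ π : Equiv.Perm (Fin (r + 1)), π ≠ 1 →
      ∑ i, ((stepG F u r g i).coeff (π i : ℕ)).degree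
        < ∑ i, ((stepG F u r g i).coeff (i : ℕ)).degree := by
  intro π hπ1
  classical
  set iR : Fin (r+1) := Fin.last r with hiRdef
  set sN : ℕ := lmY F u (g iR) with hsNdef
  set iS : Fin (r+1) := ⟨sN, Nat.lt_succ_of_lt hs⟩ with hiSdef
  have hiSval : (iS : ℕ) = sN := rfl
  have hiRval : (iR : ℕ) = r := rfl
  have hiSR : iS ≠ iR := by
    intro h
    have : (iS : ℕ) = (iR : ℕ) := by rw [h]
    rw [hiSval, hiRval] at this
    omega
  have hne1 : Equiv.swap iS iR ≠ 1 := by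
    intro h
    have h2 : Equiv.swap iS iR iS = iR := Equiv.swap_apply_left iS iR
    rw [h] at h2
    exact hiSR h2
  -- every diagonal entry is nonzero
  have hnz : ∀ i : Fin (r+1), (g i).coeff (i:ℕ) ≠ 0 := by
    intro i h0
    have hbot : ∑ j, ((g j).coeff (j:ℕ)).degree = (⊥ : WithBot ℕ) := by
      rw [← Finset.add_sum_erase univ (fun j => ((g j).coeff (j:ℕ)).degree) (mem_univ i)]
      rw [h0, degree_zero, WithBot.bot_add]
    have h2 := hdom (Equiv.swap iS iR) hne1
    rw [hbot] at h2
    exact not_lt_bot h2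
  have hgi : ∀ i : Fin (r+1), g i ≠ 0 := by
    intro i h
    exact hnz i (by rw [h]; simp)
  -- row facts
  obtain ⟨hars, hProw, hPstrow⟩ := lmY_spec u (g iR) (hgi iR)
  have hnzRr : (g iR).coeff r ≠ 0 := hnz iR
  rw [← hsNdef] at hars hProw hPstrow
  have hWrow : ∀ i : Fin (r+1), i ≠ iR → ∀ j, (g i).coeff j ≠ 0 →
      ((g i).coeff j).natDegree + u * j ≤ ((g i).coeff (i:ℕ)).natDegree + u * (i:ℕ) := by
    intro i hi
    obtain ⟨_, h2, _⟩ := lmY_spec u (g i) (hgi i)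
    rw [hlow i (Fin.val_lt_last hi)] at h2
    exact h2
  have hWstrow : ∀ i : Fin (r+1), i ≠ iR → ∀ j, (g i).coeff j ≠ 0 → (i:ℕ) < j →
      ((g i).coeff j).natDegree + u * j < ((g i).coeff (i:ℕ)).natDegree + u * (i:ℕ) := by
    intro i hi
    obtain ⟨_, _, h3⟩ := lmY_spec u (g i) (hgi i)
    rw [hlow i (Fin.val_lt_last hi)] at h3
    exact h3
  -- integer matrix
  set nd : Fin (r+1) → ℕ → ℕ := fun i k => ((g i).coeff k).natDegree with hnddef
  set C0 : ℕ := univ.sup (fun i : Fin (r+1) => if i = iR then nd iR sN + u * sN else nd i i + u * i)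
    with hC0def
  set Mz : ℤ := -(1 + (r+1) * (C0:ℤ)) with hMdef
  have hMneg : Mz < 0 := by
    rw [hMdef]
    have : (0:ℤ) ≤ (C0:ℤ) := Int.natCast_nonneg C0
    nlinarith
  set bZ : Fin (r+1) → Fin (r+1) → ℤ :=
    fun i k => if (g i).coeff (k:ℕ) = 0 then Mz else ((nd i (k:ℕ) + u * (k:ℕ) : ℕ) : ℤ) with hbZdef
  have hbZv : ∀ i k : Fin (r+1), (g i).coeff (k:ℕ) ≠ 0 →
      bZ i k = ((nd i (k:ℕ) + u * (k:ℕ) : ℕ) : ℤ) := by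
    intro i k h; rw [hbZdef]; exact if_neg h
  have hbZd : ∀ i : Fin (r+1), bZ i i = ((nd i (i:ℕ) + u * (i:ℕ) : ℕ) : ℤ) :=
    fun i => hbZv i i (hnz i)
  have hbZd0 : ∀ i : Fin (r+1), 0 ≤ bZ i i := by
    intro i; rw [hbZd i]; exact Int.natCast_nonneg _
  have harsS : (g iR).coeff (iS:ℕ) ≠ 0 := by rw [hiSval]; exact hars
  have hble : ∀ i k : Fin (r+1), bZ i k ≤ (C0:ℤ) := by
    intro i k
    by_cases h0 : (g i).coeff (k:ℕ) = 0
    · rw [hbZdef]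
      simp only [if_pos h0]
      have : (0:ℤ) ≤ (C0:ℤ) := Int.natCast_nonneg C0
      linarith
    · rw [hbZv i k h0]
      by_cases hi : i = iR
      · subst hi
        have h1 : nd iR (k:ℕ) + u * (k:ℕ) ≤ nd iR sN + u * sN := hProw (k:ℕ) h0
        have h2 : nd iR sN + u * sN ≤ C0 := by
          rw [hC0def]
          have := Finset.le_sup (f := fun i : Fin (r+1) =>
            if i = iR then nd iR sN + u * sN else nd i i + u * i) (mem_univ iR)
          simpa using this
        exact_mod_cast le_trans h1 h2
      · have h1 : nd i (k:ℕ) + u * (k:ℕ) ≤ nd i (i:ℕ) + u * (i:ℕ) := hWrow i hi (k:ℕ) h0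
        have h2 : nd i (i:ℕ) + u * (i:ℕ) ≤ C0 := by
          rw [hC0def]
          have := Finset.le_sup (f := fun j : Fin (r+1) =>
            if j = iR then nd iR sN + u * sN else nd j j + u * j) (mem_univ i)
          simp only [if_neg hi] at this
          exact this
        exact_mod_cast le_trans h1 h2
  have hW' : ∀ i k : Fin (r+1), i ≠ iR → bZ i k ≤ bZ i i := by
    intro i k hi
    rw [hbZd i]
    by_cases h0 : (g i).coeff (k:ℕ) = 0
    · rw [hbZdef]; simp only [if_pos h0]
      have := Int.natCast_nonneg (nd i (i:ℕ) + u * (i:ℕ))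
      linarith
    · rw [hbZv i k h0]
      exact_mod_cast hWrow i hi (k:ℕ) h0
  have hWst' : ∀ i k : Fin (r+1), i ≠ iR → i < k → bZ i k < bZ i i := by
    intro i k hi hik
    rw [hbZd i]
    by_cases h0 : (g i).coeff (k:ℕ) = 0
    · rw [hbZdef]; simp only [if_pos h0]
      have := Int.natCast_nonneg (nd i (i:ℕ) + u * (i:ℕ))
      linarith
    · rw [hbZv i k h0]
      exact_mod_cast hWstrow i hi (k:ℕ) h0 hik
  have hP' : ∀ k : Fin (r+1), bZ iR k ≤ bZ iR iS := by
    intro k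
    rw [hbZv iR iS harsS, hiSval]
    by_cases h0 : (g iR).coeff (k:ℕ) = 0
    · rw [hbZdef]; simp only [if_pos h0]
      have := Int.natCast_nonneg (nd iR sN + u * sN)
      linarith
    · rw [hbZv iR k h0]
      exact_mod_cast hProw (k:ℕ) h0
  have hPst' : ∀ k : Fin (r+1), iS < k → bZ iR k < bZ iR iS := by
    intro k hk
    rw [hbZv iR iS harsS, hiSval]
    by_cases h0 : (g iR).coeff (k:ℕ) = 0
    · rw [hbZdef]; simp only [if_pos h0]
      have := Int.natCast_nonneg (nd iR sN + u * sN)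
      linarith
    · rw [hbZv iR k h0]
      have hk2 : sN < (k:ℕ) := hk
      exact_mod_cast hPstrow (k:ℕ) h0 hk2
  have hH' : ∀ σ : Equiv.Perm (Fin (r+1)), σ ≠ 1 → ∑ i, bZ i (σ i) < ∑ i, bZ i i := by
    intro σ hσ
    by_cases hz : ∀ i : Fin (r+1), (g i).coeff (σ i : ℕ) ≠ 0
    · have h1 := hdom σ hσ
      have hL : ∀ i : Fin (r+1), ((g i).coeff (σ i : ℕ)).degree
          = ((nd i (σ i : ℕ) : ℕ) : WithBot ℕ) := fun i => degree_eq_natDegree (hz i)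
      have hR : ∀ i : Fin (r+1), ((g i).coeff (i:ℕ)).degree
          = ((nd i (i:ℕ) : ℕ) : WithBot ℕ) := fun i => degree_eq_natDegree (hnz i)
      rw [Finset.sum_congr rfl (fun i _ => hL i), Finset.sum_congr rfl (fun i _ => hR i),
        ← Nat.cast_sum, ← Nat.cast_sum] at h1
      have h2 : ∑ i, nd i (σ i : ℕ) < ∑ i, nd i (i:ℕ) := by exact_mod_cast h1
      have e1 : ∑ i, bZ i (σ i) = ((∑ i, (nd i (σ i : ℕ) + u * (σ i : ℕ)) : ℕ) : ℤ) := by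
        rw [Nat.cast_sum]
        exact Finset.sum_congr rfl (fun i _ => hbZv i (σ i) (hz i))
      have e2 : ∑ i, bZ i i = ((∑ i, (nd i (i:ℕ) + u * (i:ℕ)) : ℕ) : ℤ) := by
        rw [Nat.cast_sum]
        exact Finset.sum_congr rfl (fun i _ => hbZd i)
      have e3 : ∑ i : Fin (r+1), u * (σ i : ℕ) = ∑ i : Fin (r+1), u * (i:ℕ) :=
        Equiv.sum_comp σ (fun i : Fin (r+1) => u * (i:ℕ))
      rw [e1, e2]
      have e4 : ∑ i, (nd i (σ i : ℕ) + u * (σ i : ℕ)) = (∑ i, nd i (σ i : ℕ)) + ∑ i : Fin (r+1), u * (σ i : ℕ) :=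
        Finset.sum_add_distrib
      have e5 : ∑ i, (nd i (i:ℕ) + u * (i:ℕ)) = (∑ i, nd i (i:ℕ)) + ∑ i : Fin (r+1), u * (i:ℕ) :=
        Finset.sum_add_distrib
      have : ∑ i, (nd i (σ i : ℕ) + u * (σ i : ℕ)) < ∑ i, (nd i (i:ℕ) + u * (i:ℕ)) := by
        rw [e4, e5, e3]
        omega
      exact_mod_cast this
    · push_neg at hz
      obtain ⟨i0, h0⟩ := hz
      have hA : bZ i0 (σ i0) = Mz := by rw [hbZdef]; exact if_pos h0
      have hsplit : ∑ i, bZ i (σ i) = bZ i0 (σ i0) + ∑ i ∈ univ.erase i0, bZ i (σ i) :=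
        (Finset.add_sum_erase univ (fun i => bZ i (σ i)) (mem_univ i0)).symm
      have hbound : ∑ i ∈ univ.erase i0, bZ i (σ i) ≤ ((univ.erase i0).card : ℤ) * (C0:ℤ) := by
        have := Finset.sum_le_card_nsmul (univ.erase i0) (fun i => bZ i (σ i)) (C0:ℤ)
          (fun i _ => hble i (σ i))
        simpa [nsmul_eq_mul] using this
      have hcard : (univ.erase i0).card = r + 1 - 1 := by
        rw [Finset.card_erase_of_mem (mem_univ i0), Finset.card_univ, Fintype.card_fin]
      have hlt0 : ∑ i, bZ i (σ i) < 0 := by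
        rw [hsplit, hA]
        have hC0 : (0:ℤ) ≤ (C0:ℤ) := Int.natCast_nonneg C0
        have : ((univ.erase i0).card : ℤ) = r := by rw [hcard]; push_cast; omega
        rw [this] at hbound
        rw [hMdef]
        push_cast
        nlinarith
      have hge : (0:ℤ) ≤ ∑ i, bZ i i := Finset.sum_nonneg (fun i _ => hbZd0 i)
      linarith
  -- key inequality from hdom applied to the transposition
  have hnzS : (g iS).coeff sN ≠ 0 := hnz iS
  have hswkey : ((g iS).coeff (r:ℕ)).degree + ((g iR).coeff sN).degree
      < ((g iS).coeff sN).degree + ((g iR).coeff (r:ℕ)).degree := by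
    have hsw := hdom (Equiv.swap iS iR) hne1
    have hswL : ∑ i, ((g i).coeff ((Equiv.swap iS iR) i : ℕ)).degree
        = (∑ i ∈ (univ.erase iS).erase iR, ((g i).coeff (i:ℕ)).degree)
          + (((g iS).coeff (r:ℕ)).degree + ((g iR).coeff sN).degree) := by
      rw [sum_split2 (fun i => ((g i).coeff ((Equiv.swap iS iR) i : ℕ)).degree) hiSR]
      rw [add_assoc]
      congr 1
      · apply Finset.sum_congr rfl
        intro i hi
        rcases Finset.mem_erase.mp hi with ⟨hiR2, hi2⟩
        rcases Finset.mem_erase.mp hi2 with ⟨hiS2, _⟩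
        simp only [Equiv.swap_apply_of_ne_of_ne hiS2 hiR2]
      · simp only [Equiv.swap_apply_left, Equiv.swap_apply_right]
        rfl
    have hswR : ∑ i, ((g i).coeff (i:ℕ)).degree
        = (∑ i ∈ (univ.erase iS).erase iR, ((g i).coeff (i:ℕ)).degree)
          + (((g iS).coeff sN).degree + ((g iR).coeff (r:ℕ)).degree) := by
      rw [sum_split2 (fun i => ((g i).coeff (i:ℕ)).degree) hiSR, add_assoc]
      rfl
    rw [hswL, hswR] at hsw
    have heev : (∑ i ∈ (univ.erase iS).erase iR, ((g i).coeff (i:ℕ)).degree)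
        = ((∑ i ∈ (univ.erase iS).erase iR, nd i (i:ℕ) : ℕ) : WithBot ℕ) := by
      rw [Nat.cast_sum]
      exact Finset.sum_congr rfl (fun i _ => degree_eq_natDegree (hnz i))
    rw [heev] at hsw
    exact lt_of_add_lt_add_left hsw
  have hswnat : (g iS).coeff (r:ℕ) ≠ 0 → nd iS (r:ℕ) + nd iR sN < nd iS sN + nd iR (r:ℕ) := by
    intro h1
    have h2 := hswkey
    rw [degree_eq_natDegree h1, degree_eq_natDegree hars, degree_eq_natDegree hnzS,
      degree_eq_natDegree hnzRr] at h2
    exact_mod_cast h2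
  have hDval : ∑ i, ((g i).coeff (i:ℕ)).degree
      = ((∑ i, nd i (i:ℕ) : ℕ) : WithBot ℕ) := by
    rw [Nat.cast_sum]
    exact Finset.sum_congr rfl (fun i _ => degree_eq_natDegree (hnz i))
  -- the constant
  set c0 : F := ((g iR).coeff sN).leadingCoeff / ((g iS).coeff sN).leadingCoeff with hc0def
  have hc0 : c0 ≠ 0 :=
    div_ne_zero (leadingCoeff_ne_zero.mpr hars) (leadingCoeff_ne_zero.mpr hnzS)
  set dz : ℤ := ((nd iR sN : ℤ) - (nd iS sN : ℤ)) with hdzdef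
  rcases le_or_gt 0 dz with hd | hd
  · -- CASE d ≥ 0
    have hstep : stepG F u r g = Function.update g iR
        (g iR - Polynomial.C (Polynomial.C c0 * (Polynomial.X : Polynomial F) ^ dz.toNat) * g iS) := by
      simp only [stepG]
      rw [dif_pos (show lmY F u (g (Fin.last r)) < r from hs),
        if_pos (show (0:ℤ) ≤ (((g (Fin.last r)).coeff (lmY F u (g (Fin.last r)))).natDegree : ℤ)
          - (((g ⟨lmY F u (g (Fin.last r)), Nat.lt_succ_of_lt hs⟩).coeff
              (lmY F u (g (Fin.last r)))).natDegree : ℤ) from hd)]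
    have hupR : ∀ k : ℕ, (stepG F u r g iR).coeff k
        = (g iR).coeff k - (Polynomial.C c0 * X ^ dz.toNat) * ((g iS).coeff k) := by
      intro k
      rw [hstep, Function.update_self, coeff_sub, coeff_C_mul]
    have hupO : ∀ i : Fin (r+1), i ≠ iR → stepG F u r g i = g i := by
      intro i hi; rw [hstep, Function.update_of_ne hi]
    have hdn : dz.toNat + nd iS sN = nd iR sN := by
      have h1 : (dz.toNat : ℤ) = dz := Int.toNat_of_nonneg hd
      have h2 : (dz.toNat : ℤ) + (nd iS sN : ℤ) = (nd iR sN : ℤ) := by rw [h1, hdzdef]; ring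
      exact_mod_cast h2
    have hdeg_mul : ∀ k : ℕ, ((Polynomial.C c0 * X ^ dz.toNat) * ((g iS).coeff k)).degree
        = (dz.toNat : WithBot ℕ) + ((g iS).coeff k).degree := by
      intro k
      rw [degree_mul, degree_C_mul_X_pow _ hc0]
    have hrowbound : ∀ k : ℕ, ((stepG F u r g iR).coeff k).degree
        ≤ max (((g iR).coeff k).degree) ((dz.toNat : WithBot ℕ) + ((g iS).coeff k).degree) := by
      intro k
      rw [hupR k]
      refine le_trans (degree_sub_le _ _) ?_
      rw [hdeg_mul k]
    have hrr_lt : ((Polynomial.C c0 * X ^ dz.toNat) * ((g iS).coeff (r:ℕ))).degree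
        < ((g iR).coeff (r:ℕ)).degree := by
      rw [hdeg_mul]
      by_cases h0 : (g iS).coeff (r:ℕ) = 0
      · rw [h0, degree_zero, WithBot.add_bot]
        rw [degree_eq_natDegree hnzRr]
        exact WithBot.bot_lt_coe _
      · rw [degree_eq_natDegree h0, degree_eq_natDegree hnzRr]
        have hn := hswnat h0
        have : dz.toNat + nd iS (r:ℕ) < nd iR (r:ℕ) := by omega
        exact_mod_cast this
    have hdiagR : ((stepG F u r g iR).coeff (r:ℕ)).degree = ((g iR).coeff (r:ℕ)).degree := by
      rw [hupR]
      exact degree_sub_eq_left_of_degree_lt hrr_lt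
    have hDeq : ∑ i, ((stepG F u r g i).coeff (i:ℕ)).degree
        = ∑ i, ((g i).coeff (i:ℕ)).degree := by
      apply Finset.sum_congr rfl
      intro i _
      by_cases hi : i = iR
      · rw [hi]; exact hdiagR
      · rw [hupO i hi]
    rw [hDeq, hDval]
    have hLsplit : ∑ i, ((stepG F u r g i).coeff (π i:ℕ)).degree
        = (∑ i ∈ univ.erase iR, ((g i).coeff (π i:ℕ)).degree)
          + ((stepG F u r g iR).coeff ((π iR):ℕ)).degree := by
      rw [← Finset.sum_erase_add univ _ (mem_univ iR)]
      congr 1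
      apply Finset.sum_congr rfl
      intro i hi
      rw [hupO i (Finset.mem_erase.mp hi).1]
    rw [hLsplit]
    have hold : ((stepG F u r g iR).coeff ((π iR):ℕ)).degree ≤ ((g iR).coeff ((π iR):ℕ)).degree →
        (∑ i ∈ univ.erase iR, ((g i).coeff (π i:ℕ)).degree)
          + ((stepG F u r g iR).coeff ((π iR):ℕ)).degree
          < ((∑ i, nd i (i:ℕ) : ℕ) : WithBot ℕ) := by
      intro hb
      have h1 : (∑ i ∈ univ.erase iR, ((g i).coeff (π i:ℕ)).degree)
          + ((stepG F u r g iR).coeff ((π iR):ℕ)).degree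
          ≤ ∑ i, ((g i).coeff (π i:ℕ)).degree := by
        rw [← Finset.sum_erase_add univ _ (mem_univ iR)]
        exact add_le_add_right hb _
      have h2 := hdom π hπ1
      rw [hDval] at h2
      exact lt_of_le_of_lt h1 h2
    rcases le_max_iff.mp (hrowbound ((π iR):ℕ)) with hb | hb
    · exact hold hb
    · by_cases hjs : π iR = iS
      · refine hold ?_
        refine le_trans hb (le_of_eq ?_)
        rw [hjs, hiSval]
        rw [degree_eq_natDegree hnzS, degree_eq_natDegree (show (g iR).coeff ((iS:ℕ)) ≠ 0 from harsS)]
        rw [hiSval]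
        exact_mod_cast congrArg (Nat.cast : ℕ → WithBot ℕ) hdn
      · -- the genuinely new branch : coreZ
        by_cases hzV : ((g iS).coeff ((π iR):ℕ) = 0) ∨ ∃ i ∈ univ.erase iR, (g i).coeff ((π i):ℕ) = 0
        · -- bottom case
          have hVbot : (∑ i ∈ univ.erase iR, ((g i).coeff (π i:ℕ)).degree)
              + ((dz.toNat : WithBot ℕ) + ((g iS).coeff ((π iR):ℕ)).degree) = ⊥ := by
            rcases hzV with h0 | ⟨i0, hi0, h0⟩
            · rw [h0, degree_zero, WithBot.add_bot, WithBot.add_bot]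
            · have : ∑ i ∈ univ.erase iR, ((g i).coeff (π i:ℕ)).degree = ⊥ := by
                rw [← Finset.add_sum_erase _ (fun i => ((g i).coeff (π i:ℕ)).degree) hi0]
                rw [h0, degree_zero, WithBot.bot_add]
              rw [this, WithBot.bot_add]
          calc (∑ i ∈ univ.erase iR, ((g i).coeff (π i:ℕ)).degree)
              + ((stepG F u r g iR).coeff ((π iR):ℕ)).degree
              ≤ (∑ i ∈ univ.erase iR, ((g i).coeff (π i:ℕ)).degree)
                + ((dz.toNat : WithBot ℕ) + ((g iS).coeff ((π iR):ℕ)).degree) :=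
                add_le_add_right hb _
            _ = ⊥ := hVbot
            _ < ((∑ i, nd i (i:ℕ) : ℕ) : WithBot ℕ) := WithBot.bot_lt_coe _
        · push_neg at hzV
          obtain ⟨h1, h2⟩ := hzV
          have hiSerase : iS ∈ univ.erase iR := Finset.mem_erase.mpr ⟨hiSR, mem_univ iS⟩
          have hcore := coreZ bZ iS iR hiSR hW' hWst' hP' hPst' hH' iS iR
            (Or.inl ⟨rfl, rfl⟩) π hjs (fun h => absurd h hiSR)
          have heesub : ∀ i, i ∈ (univ.erase iS).erase iR → i ∈ univ.erase iR := by
            intro i hi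
            rcases Finset.mem_erase.mp hi with ⟨hiR2, hi2⟩
            exact Finset.mem_erase.mpr ⟨hiR2, mem_univ i⟩
          rw [Finset.sum_congr rfl (fun i hi => hbZv i (π i) (h2 i (heesub i hi))),
            hbZv iS (π iS) (h2 iS hiSerase), hbZv iS (π iR) h1, hbZv iR iS harsS,
            Finset.sum_congr rfl (fun i (_ : i ∈ univ) => hbZd i), hbZd iS,
            ← Nat.cast_sum, ← Nat.cast_sum] at hcore
          have hcoreN : (∑ i ∈ (univ.erase iS).erase iR, (nd i ((π i):ℕ) + u * ((π i):ℕ)))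
              + (nd iS ((π iS):ℕ) + u * ((π iS):ℕ)) + (nd iS ((π iR):ℕ) + u * ((π iR):ℕ))
              + (nd iR (iS:ℕ) + u * (iS:ℕ))
              < (∑ i, (nd i (i:ℕ) + u * (i:ℕ))) + (nd iS (iS:ℕ) + u * (iS:ℕ)) := by
            exact_mod_cast hcore
          rw [hiSval] at hcoreN
          -- now reduce to ℕ inequality for the target
          have hsA : ∑ i ∈ univ.erase iR, nd i ((π i):ℕ)
              = (∑ i ∈ (univ.erase iS).erase iR, nd i ((π i):ℕ)) + nd iS ((π iS):ℕ) := by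
            rw [← Finset.add_sum_erase _ (fun i => nd i ((π i):ℕ)) hiSerase,
              Finset.erase_right_comm]
            ring
          have hsB : ∑ i ∈ univ.erase iR, (u * ((π i):ℕ))
              = (∑ i ∈ (univ.erase iS).erase iR, u * ((π i):ℕ)) + u * ((π iS):ℕ) := by
            rw [← Finset.add_sum_erase _ (fun i => u * ((π i):ℕ)) hiSerase,
              Finset.erase_right_comm]
            ring
          have hsC : (∑ i ∈ univ.erase iR, u * ((π i):ℕ)) + u * ((π iR):ℕ)
              = ∑ i : Fin (r+1), u * (i:ℕ) := by
            rw [Finset.sum_erase_add univ (fun i => u * ((π i):ℕ)) (mem_univ iR)]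
            exact Equiv.sum_comp π (fun i : Fin (r+1) => u * (i:ℕ))
          have hsD : ∑ i, (nd i (i:ℕ) + u * (i:ℕ))
              = (∑ i, nd i (i:ℕ)) + ∑ i : Fin (r+1), u * (i:ℕ) := Finset.sum_add_distrib
          have hsE : ∑ i ∈ (univ.erase iS).erase iR, (nd i ((π i):ℕ) + u * ((π i):ℕ))
              = (∑ i ∈ (univ.erase iS).erase iR, nd i ((π i):ℕ))
                + ∑ i ∈ (univ.erase iS).erase iR, u * ((π i):ℕ) := Finset.sum_add_distrib
          have htarget : (∑ i ∈ univ.erase iR, nd i ((π i):ℕ)) + (dz.toNat + nd iS ((π iR):ℕ))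
              < ∑ i, nd i (i:ℕ) := by omega
          -- assemble in WithBot
          have heefin : ∑ i ∈ univ.erase iR, ((g i).coeff (π i:ℕ)).degree
              = ((∑ i ∈ univ.erase iR, nd i ((π i):ℕ) : ℕ) : WithBot ℕ) := by
            rw [Nat.cast_sum]
            exact Finset.sum_congr rfl (fun i hi => degree_eq_natDegree (h2 i hi))
          calc (∑ i ∈ univ.erase iR, ((g i).coeff (π i:ℕ)).degree)
              + ((stepG F u r g iR).coeff ((π iR):ℕ)).degree
              ≤ (∑ i ∈ univ.erase iR, ((g i).coeff (π i:ℕ)).degree)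
                + ((dz.toNat : WithBot ℕ) + ((g iS).coeff ((π iR):ℕ)).degree) :=
                add_le_add_right hb _
            _ = (((∑ i ∈ univ.erase iR, nd i ((π i):ℕ)) + (dz.toNat + nd iS ((π iR):ℕ)) : ℕ) : WithBot ℕ) := by
                rw [heefin, degree_eq_natDegree h1]
                push_cast
                ring
            _ < ((∑ i, nd i (i:ℕ) : ℕ) : WithBot ℕ) := by exact_mod_cast htarget
  · -- CASE d < 0
    have hstep : stepG F u r g = Function.update (Function.update g iS (g iR)) iR
        (Polynomial.C ((Polynomial.X : Polynomial F) ^ (-dz).toNat) * g iR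
          - Polynomial.C (Polynomial.C c0) * g iS) := by
      simp only [stepG]
      rw [dif_pos (show lmY F u (g (Fin.last r)) < r from hs),
        if_neg (show ¬ (0:ℤ) ≤ (((g (Fin.last r)).coeff (lmY F u (g (Fin.last r)))).natDegree : ℤ)
          - (((g ⟨lmY F u (g (Fin.last r)), Nat.lt_succ_of_lt hs⟩).coeff
              (lmY F u (g (Fin.last r)))).natDegree : ℤ) from not_le.mpr hd)]
    set ez : ℕ := (-dz).toNat with hezdef
    have hezz : (ez:ℤ) = -dz := Int.toNat_of_nonneg (by omega)
    have hez1 : ez + nd iR sN = nd iS sN := by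
      have h2 : (ez:ℤ) + (nd iR sN : ℤ) = (nd iS sN : ℤ) := by rw [hezz, hdzdef]; ring
      exact_mod_cast h2
    have hupR : ∀ k : ℕ, (stepG F u r g iR).coeff k
        = X ^ ez * ((g iR).coeff k) - Polynomial.C c0 * ((g iS).coeff k) := by
      intro k
      rw [hstep, Function.update_self, coeff_sub, coeff_C_mul, coeff_C_mul]
    have hupS : ∀ k : ℕ, (stepG F u r g iS).coeff k = (g iR).coeff k := by
      intro k
      rw [hstep, Function.update_of_ne hiSR, Function.update_self]
    have hupO : ∀ i : Fin (r+1), i ≠ iR → i ≠ iS → stepG F u r g i = g i := by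
      intro i h1 h2
      rw [hstep, Function.update_of_ne h1, Function.update_of_ne h2]
    have hXdeg : ∀ p : Polynomial F, (X ^ ez * p).degree = (ez : WithBot ℕ) + p.degree := by
      intro p; rw [degree_mul, degree_X_pow]
    have hCdeg : ∀ p : Polynomial F, (Polynomial.C c0 * p).degree = p.degree := by
      intro p; rw [degree_mul, degree_C hc0, zero_add]
    have hrr_lt : (Polynomial.C c0 * ((g iS).coeff r)).degree
        < (X ^ ez * ((g iR).coeff r)).degree := by
      rw [hCdeg, hXdeg, degree_eq_natDegree hnzRr]
      by_cases h0 : (g iS).coeff r = 0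
      · rw [h0, degree_zero, ← Nat.cast_add]
        exact WithBot.bot_lt_coe _
      · rw [degree_eq_natDegree h0]
        have hn := hswnat h0
        have h3 : nd iS r < ez + nd iR r := by omega
        exact_mod_cast h3
    have hdiagR : ((stepG F u r g iR).coeff r).degree = ((ez + nd iR r : ℕ) : WithBot ℕ) := by
      rw [hupR, degree_sub_eq_left_of_degree_lt hrr_lt, hXdeg, degree_eq_natDegree hnzRr]
      exact (Nat.cast_add _ _).symm
    have hDeq : ∑ i, ((stepG F u r g i).coeff (i:ℕ)).degree
        = ∑ i, ((g i).coeff (i:ℕ)).degree := by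
      rw [sum_split2 (fun i => ((stepG F u r g i).coeff (i:ℕ)).degree) hiSR,
          sum_split2 (fun i => ((g i).coeff (i:ℕ)).degree) hiSR]
      have hee : ∑ i ∈ (univ.erase iS).erase iR, ((stepG F u r g i).coeff (i:ℕ)).degree
          = ∑ i ∈ (univ.erase iS).erase iR, ((g i).coeff (i:ℕ)).degree := by
        apply Finset.sum_congr rfl
        intro i hi
        rcases Finset.mem_erase.mp hi with ⟨hiR2, hi2⟩
        rcases Finset.mem_erase.mp hi2 with ⟨hiS2, _⟩
        rw [hupO i hiR2 hiS2]
      rw [hee, add_assoc, add_assoc]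
      congr 1
      have e1 : ((stepG F u r g iS).coeff (iS:ℕ)).degree = ((nd iR sN : ℕ) : WithBot ℕ) := by
        rw [hupS]
        exact degree_eq_natDegree hars
      have e2 : ((stepG F u r g iR).coeff (iR:ℕ)).degree = ((ez + nd iR r : ℕ) : WithBot ℕ) :=
        hdiagR
      have e3 : ((g iS).coeff (iS:ℕ)).degree = ((nd iS sN : ℕ) : WithBot ℕ) :=
        degree_eq_natDegree hnzS
      have e4 : ((g iR).coeff (iR:ℕ)).degree = ((nd iR r : ℕ) : WithBot ℕ) :=
        degree_eq_natDegree hnzRr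
      rw [e1, e2, e3, e4]
      have h5 : nd iR sN + (ez + nd iR r) = nd iS sN + nd iR r := by omega
      exact_mod_cast h5
    rw [hDeq, hDval]
    have hLsplit : ∑ i, ((stepG F u r g i).coeff (π i:ℕ)).degree
        = (∑ i ∈ (univ.erase iS).erase iR, ((g i).coeff (π i:ℕ)).degree)
          + ((g iR).coeff ((π iS):ℕ)).degree
          + ((stepG F u r g iR).coeff ((π iR):ℕ)).degree := by
      rw [sum_split2 (fun i => ((stepG F u r g i).coeff (π i:ℕ)).degree) hiSR]
      congr 1
      congr 1
      · apply Finset.sum_congr rfl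
        intro i hi
        rcases Finset.mem_erase.mp hi with ⟨hiR2, hi2⟩
        rcases Finset.mem_erase.mp hi2 with ⟨hiS2, _⟩
        rw [hupO i hiR2 hiS2]
      · rw [hupS]
    rw [hLsplit]
    have hrowbound : ∀ k : ℕ, ((stepG F u r g iR).coeff k).degree
        ≤ max ((ez : WithBot ℕ) + ((g iR).coeff k).degree) (((g iS).coeff k).degree) := by
      intro k
      rw [hupR k]
      refine le_trans (degree_sub_le _ _) ?_
      rw [hXdeg, hCdeg]
    by_cases hjs : π iR = iS
    · -- leading-term cancellation case
      have hcanc : ((stepG F u r g iR).coeff ((π iR):ℕ)).degree < ((nd iS sN : ℕ) : WithBot ℕ) := by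
        have h1 : ((π iR):ℕ) = sN := by rw [hjs]
        rw [h1, hupR sN]
        have hdegeq : (X ^ ez * ((g iR).coeff sN)).degree
            = (Polynomial.C c0 * ((g iS).coeff sN)).degree := by
          rw [hXdeg, hCdeg, degree_eq_natDegree hars, degree_eq_natDegree hnzS, ← Nat.cast_add]
          exact_mod_cast congrArg (Nat.cast : ℕ → WithBot ℕ) hez1
        have hne0 : X ^ ez * ((g iR).coeff sN) ≠ 0 :=
          mul_ne_zero (pow_ne_zero _ X_ne_zero) hars
        have hlc : (X ^ ez * ((g iR).coeff sN)).leadingCoeff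
            = (Polynomial.C c0 * ((g iS).coeff sN)).leadingCoeff := by
          rw [leadingCoeff_mul, leadingCoeff_mul, leadingCoeff_X_pow, one_mul, leadingCoeff_C,
            hc0def]
          exact (div_mul_cancel₀ _ (leadingCoeff_ne_zero.mpr hnzS)).symm
        have h2 := degree_sub_lt hdegeq hne0 hlc
        rw [hXdeg, degree_eq_natDegree hars, ← Nat.cast_add] at h2
        calc (X ^ ez * ((g iR).coeff sN) - Polynomial.C c0 * ((g iS).coeff sN)).degree
            < ((ez + nd iR sN : ℕ) : WithBot ℕ) := h2
          _ = ((nd iS sN : ℕ) : WithBot ℕ) := by exact_mod_cast congrArg (Nat.cast : ℕ → WithBot ℕ) hez1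
      have hEee : ∑ i ∈ (univ.erase iS).erase iR,
          ((g i).coeff (((π * Equiv.swap iS iR) i):ℕ)).degree
          = ∑ i ∈ (univ.erase iS).erase iR, ((g i).coeff (π i:ℕ)).degree :=
        Finset.sum_congr rfl (fun i hi => by
          rcases Finset.mem_erase.mp hi with ⟨hiR2, hi2⟩
          rcases Finset.mem_erase.mp hi2 with ⟨hiS2, _⟩
          rw [Equiv.Perm.mul_apply, Equiv.swap_apply_of_ne_of_ne hiS2 hiR2])
      have hSσ0 : ∑ i, ((g i).coeff (((π * Equiv.swap iS iR) i):ℕ)).degree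
          = (∑ i ∈ (univ.erase iS).erase iR, ((g i).coeff (π i:ℕ)).degree)
            + ((nd iS sN : ℕ) : WithBot ℕ) + ((g iR).coeff ((π iS):ℕ)).degree := by
        rw [sum_split2 (fun i => ((g i).coeff (((π * Equiv.swap iS iR) i):ℕ)).degree) hiSR]
        rw [hEee]
        have c1 : ((g iS).coeff (((π * Equiv.swap iS iR) iS):ℕ)).degree
            = ((nd iS sN : ℕ) : WithBot ℕ) := by
          rw [Equiv.Perm.mul_apply, Equiv.swap_apply_left, hjs]
          exact degree_eq_natDegree hnzS
        have c2 : ((g iR).coeff (((π * Equiv.swap iS iR) iR):ℕ)).degree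
            = ((g iR).coeff ((π iS):ℕ)).degree := by
          rw [Equiv.Perm.mul_apply, Equiv.swap_apply_right]
        rw [c1, c2]
      by_cases hEF : (∑ i ∈ (univ.erase iS).erase iR, ((g i).coeff (π i:ℕ)).degree)
          + ((g iR).coeff ((π iS):ℕ)).degree = ⊥
      · rw [hEF, WithBot.bot_add]
        exact WithBot.bot_lt_coe _
      · have h1 : (∑ i ∈ (univ.erase iS).erase iR, ((g i).coeff (π i:ℕ)).degree)
            + ((g iR).coeff ((π iS):ℕ)).degree
            + ((stepG F u r g iR).coeff ((π iR):ℕ)).degree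
            < (∑ i ∈ (univ.erase iS).erase iR, ((g i).coeff (π i:ℕ)).degree)
            + ((g iR).coeff ((π iS):ℕ)).degree
            + ((nd iS sN : ℕ) : WithBot ℕ) := WithBot.add_lt_add_left hEF hcanc
        refine lt_of_lt_of_le h1 ?_
        have hfinal : ∑ i, ((g i).coeff (((π * Equiv.swap iS iR) i):ℕ)).degree
            ≤ ((∑ i, nd i (i:ℕ) : ℕ) : WithBot ℕ) := by
          by_cases hone : π * Equiv.swap iS iR = 1
          · rw [← hDval]
            apply le_of_eq
            apply Finset.sum_congr rfl
            intro i _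
            rw [hone]
            rfl
          · rw [← hDval]
            exact (hdom _ hone).le
        rw [hSσ0] at hfinal
        calc (∑ i ∈ (univ.erase iS).erase iR, ((g i).coeff (π i:ℕ)).degree)
            + ((g iR).coeff ((π iS):ℕ)).degree + ((nd iS sN : ℕ) : WithBot ℕ)
            = (∑ i ∈ (univ.erase iS).erase iR, ((g i).coeff (π i:ℕ)).degree)
              + ((nd iS sN : ℕ) : WithBot ℕ) + ((g iR).coeff ((π iS):ℕ)).degree :=
            add_right_comm _ _ _
          _ ≤ ((∑ i, nd i (i:ℕ) : ℕ) : WithBot ℕ) := hfinal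
    · -- j ≠ s
      rcases le_max_iff.mp (hrowbound ((π iR):ℕ)) with hb | hb
      · -- branch x^e * a_{r,j} : coreZ
        by_cases hzV : ((g iR).coeff ((π iR):ℕ) = 0) ∨ ((g iR).coeff ((π iS):ℕ) = 0)
            ∨ ∃ i ∈ (univ.erase iS).erase iR, (g i).coeff ((π i):ℕ) = 0
        · have hbot : (∑ i ∈ (univ.erase iS).erase iR, ((g i).coeff (π i:ℕ)).degree)
              + ((g iR).coeff ((π iS):ℕ)).degree
              + ((ez : WithBot ℕ) + ((g iR).coeff ((π iR):ℕ)).degree) = ⊥ := by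
            rcases hzV with h0 | h0 | ⟨i0, hi0, h0⟩
            · rw [h0, degree_zero, WithBot.add_bot, WithBot.add_bot]
            · rw [h0, degree_zero, WithBot.add_bot, WithBot.bot_add]
            · have hb2 : ∑ i ∈ (univ.erase iS).erase iR, ((g i).coeff (π i:ℕ)).degree = ⊥ := by
                rw [← Finset.add_sum_erase _ (fun i => ((g i).coeff (π i:ℕ)).degree) hi0,
                  h0, degree_zero, WithBot.bot_add]
              rw [hb2, WithBot.bot_add, WithBot.bot_add]
          calc (∑ i ∈ (univ.erase iS).erase iR, ((g i).coeff (π i:ℕ)).degree)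
              + ((g iR).coeff ((π iS):ℕ)).degree
              + ((stepG F u r g iR).coeff ((π iR):ℕ)).degree
              ≤ (∑ i ∈ (univ.erase iS).erase iR, ((g i).coeff (π i:ℕ)).degree)
                + ((g iR).coeff ((π iS):ℕ)).degree
                + ((ez : WithBot ℕ) + ((g iR).coeff ((π iR):ℕ)).degree) := add_le_add_right hb _
            _ = ⊥ := hbot
            _ < ((∑ i, nd i (i:ℕ) : ℕ) : WithBot ℕ) := WithBot.bot_lt_coe _
        · push_neg at hzV
          obtain ⟨h1, h2, h3⟩ := hzV
          have hρq2 : (π * Equiv.swap iS iR) iS ≠ iS := by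
            intro h
            apply hjs
            rwa [Equiv.Perm.mul_apply, Equiv.swap_apply_left] at h
          have hswap2 : iR = iR → (π * Equiv.swap iS iR) ≠ Equiv.swap iS iR := by
            intro _ h
            exact hπ1 (mul_right_cancel (b := Equiv.swap iS iR) (by rw [h, one_mul]))
          have hcore := coreZ bZ iS iR hiSR hW' hWst' hP' hPst' hH' iR iS
            (Or.inr ⟨rfl, rfl⟩) (π * Equiv.swap iS iR) hρq2 hswap2
          have hswS : (π * Equiv.swap iS iR) iS = π iR := by
            rw [Equiv.Perm.mul_apply, Equiv.swap_apply_left]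
          have hswR2 : (π * Equiv.swap iS iR) iR = π iS := by
            rw [Equiv.Perm.mul_apply, Equiv.swap_apply_right]
          rw [hswS, hswR2] at hcore
          have heecong : ∀ i ∈ (univ.erase iS).erase iR,
              bZ i ((π * Equiv.swap iS iR) i) = ((nd i ((π i):ℕ) + u * ((π i):ℕ) : ℕ) : ℤ) := by
            intro i hi
            rcases Finset.mem_erase.mp hi with ⟨hiR2, hi2⟩
            rcases Finset.mem_erase.mp hi2 with ⟨hiS2, _⟩
            rw [Equiv.Perm.mul_apply, Equiv.swap_apply_of_ne_of_ne hiS2 hiR2]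
            exact hbZv i (π i) (h3 i hi)
          rw [Finset.sum_congr rfl heecong,
            hbZv iR (π iR) h1, hbZv iR (π iS) h2, hbZd iS, hbZv iR iS harsS,
            Finset.sum_congr rfl (fun i (_ : i ∈ univ) => hbZd i),
            ← Nat.cast_sum, ← Nat.cast_sum] at hcore
          have hcoreN : (∑ i ∈ (univ.erase iS).erase iR, (nd i ((π i):ℕ) + u * ((π i):ℕ)))
              + (nd iR ((π iR):ℕ) + u * ((π iR):ℕ)) + (nd iR ((π iS):ℕ) + u * ((π iS):ℕ))
              + (nd iS (iS:ℕ) + u * (iS:ℕ))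
              < (∑ i, (nd i (i:ℕ) + u * (i:ℕ))) + (nd iR (iS:ℕ) + u * (iS:ℕ)) := by
            exact_mod_cast hcore
          rw [hiSval] at hcoreN
          have hsC : (∑ i ∈ (univ.erase iS).erase iR, u * ((π i):ℕ)) + u * ((π iS):ℕ)
              + u * ((π iR):ℕ) = ∑ i : Fin (r+1), u * (i:ℕ) := by
            have h4 := sum_split2 (fun i => u * ((π i):ℕ)) hiSR
            have h5 : ∑ i : Fin (r+1), u * ((π i):ℕ) = ∑ i : Fin (r+1), u * (i:ℕ) :=
              Equiv.sum_comp π (fun i : Fin (r+1) => u * (i:ℕ))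
            omega
          have hsD : ∑ i, (nd i (i:ℕ) + u * (i:ℕ))
              = (∑ i, nd i (i:ℕ)) + ∑ i : Fin (r+1), u * (i:ℕ) := Finset.sum_add_distrib
          have hsE : ∑ i ∈ (univ.erase iS).erase iR, (nd i ((π i):ℕ) + u * ((π i):ℕ))
              = (∑ i ∈ (univ.erase iS).erase iR, nd i ((π i):ℕ))
                + ∑ i ∈ (univ.erase iS).erase iR, u * ((π i):ℕ) := Finset.sum_add_distrib
          have htarget : (∑ i ∈ (univ.erase iS).erase iR, nd i ((π i):ℕ))
              + nd iR ((π iS):ℕ) + (ez + nd iR ((π iR):ℕ)) < ∑ i, nd i (i:ℕ) := by omega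
          have heefin : ∑ i ∈ (univ.erase iS).erase iR, ((g i).coeff (π i:ℕ)).degree
              = ((∑ i ∈ (univ.erase iS).erase iR, nd i ((π i):ℕ) : ℕ) : WithBot ℕ) := by
            rw [Nat.cast_sum]
            exact Finset.sum_congr rfl (fun i hi => degree_eq_natDegree (h3 i hi))
          calc (∑ i ∈ (univ.erase iS).erase iR, ((g i).coeff (π i:ℕ)).degree)
              + ((g iR).coeff ((π iS):ℕ)).degree
              + ((stepG F u r g iR).coeff ((π iR):ℕ)).degree
              ≤ (∑ i ∈ (univ.erase iS).erase iR, ((g i).coeff (π i:ℕ)).degree)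
                + ((g iR).coeff ((π iS):ℕ)).degree
                + ((ez : WithBot ℕ) + ((g iR).coeff ((π iR):ℕ)).degree) := add_le_add_right hb _
            _ = (((∑ i ∈ (univ.erase iS).erase iR, nd i ((π i):ℕ))
                + nd iR ((π iS):ℕ) + (ez + nd iR ((π iR):ℕ)) : ℕ) : WithBot ℕ) := by
                rw [heefin, degree_eq_natDegree h2, degree_eq_natDegree h1]
                push_cast
                ring
            _ < ((∑ i, nd i (i:ℕ) : ℕ) : WithBot ℕ) := by exact_mod_cast htarget
      · -- branch a_{s,j} : direct hdom on π * swap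
        have hσ1 : (π * Equiv.swap iS iR) ≠ 1 := by
          intro h
          apply hjs
          have h2 : (π * Equiv.swap iS iR) iS = iS := by rw [h]; rfl
          rwa [Equiv.Perm.mul_apply, Equiv.swap_apply_left] at h2
        have hS := hdom (π * Equiv.swap iS iR) hσ1
        have hSsplit : ∑ i, ((g i).coeff (((π * Equiv.swap iS iR) i):ℕ)).degree
            = (∑ i ∈ (univ.erase iS).erase iR, ((g i).coeff (π i:ℕ)).degree)
              + (((g iS).coeff ((π iR):ℕ)).degree + ((g iR).coeff ((π iS):ℕ)).degree) := by
          rw [sum_split2 (fun i => ((g i).coeff (((π * Equiv.swap iS iR) i):ℕ)).degree) hiSR,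
            add_assoc]
          congr 1
          · apply Finset.sum_congr rfl
            intro i hi
            rcases Finset.mem_erase.mp hi with ⟨hiR2, hi2⟩
            rcases Finset.mem_erase.mp hi2 with ⟨hiS2, _⟩
            rw [Equiv.Perm.mul_apply, Equiv.swap_apply_of_ne_of_ne hiS2 hiR2]
          · rw [Equiv.Perm.mul_apply, Equiv.Perm.mul_apply, Equiv.swap_apply_left,
              Equiv.swap_apply_right]
        rw [hSsplit, hDval] at hS
        calc (∑ i ∈ (univ.erase iS).erase iR, ((g i).coeff (π i:ℕ)).degree)
            + ((g iR).coeff ((π iS):ℕ)).degree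
            + ((stepG F u r g iR).coeff ((π iR):ℕ)).degree
            ≤ (∑ i ∈ (univ.erase iS).erase iR, ((g i).coeff (π i:ℕ)).degree)
              + ((g iR).coeff ((π iS):ℕ)).degree
              + ((g iS).coeff ((π iR):ℕ)).degree := add_le_add_right hb _
          _ = (∑ i ∈ (univ.erase iS).erase iR, ((g i).coeff (π i:ℕ)).degree)
              + (((g iS).coeff ((π iR):ℕ)).degree + ((g iR).coeff ((π iS):ℕ)).degree) := by
              rw [add_assoc]
              congr 1
              exact add_comm _ _
          _ < ((∑ i, nd i (i:ℕ) : ℕ) : WithBot ℕ) := hS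
end

section
/- In Algorithm G, each update weakly decreases the defect deg_u(lt(g_r)) − deg_u(a_{rr} y^r), and if the defect is unchanged then the y-degree of lt(g_r) strictly decreases. -/
open Polynomial

lemma lmKey_le {F : Type*} [Field F] (u : ℕ) (f : Polynomial (Polynomial F)) {j : ℕ}
    (hj : f.coeff j ≠ 0) :
    toLex ((f.coeff j).natDegree + u * j, j) ≤ lmKey F u f := by
  unfold lmKey
  exact Finset.le_sup (f := fun j => toLex ((f.coeff j).natDegree + u * j, j))
    (Polynomial.mem_support_iff.mpr hj)

lemma lmKey_spec {F : Type*} [Field F] (u : ℕ) {f : Polynomial (Polynomial F)} (hf : f ≠ 0) :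
    f.coeff (lmY F u f) ≠ 0 ∧
      lmKey F u f = toLex ((f.coeff (lmY F u f)).natDegree + u * lmY F u f, lmY F u f) := by
  obtain ⟨j, hj, hsup⟩ := Finset.exists_mem_eq_sup f.support
    (Polynomial.nonempty_support_iff.mpr hf) (fun j => toLex ((f.coeff j).natDegree + u * j, j))
  have hk : lmKey F u f = toLex ((f.coeff j).natDegree + u * j, j) := hsup
  have hy : lmY F u f = j := by rw [lmY, hk]; rfl
  rw [hy, hk]
  exact ⟨Polynomial.mem_support_iff.mp hj, rfl⟩

lemma key_bound {F : Type*} [Field F] {u : ℕ} {f : Polynomial (Polynomial F)} {D s : ℕ}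
    (hk : lmKey F u f = toLex (D, s)) {j : ℕ} (hj : f.coeff j ≠ 0) :
    (f.coeff j).natDegree + u * j ≤ D ∧ (s < j → (f.coeff j).natDegree + u * j < D) := by
  have h := lmKey_le u f hj
  rw [hk, Prod.Lex.le_iff] at h
  simp only [ofLex_toLex] at h
  constructor
  · rcases h with h | ⟨h, _⟩ <;> omega
  · intro hsj
    rcases h with h | ⟨h, h2⟩
    · exact h
    · omega

lemma sub_bound_le {F : Type*} [Field F] {x y : Polynomial F} {j D : ℕ}
    (hx : x ≠ 0 → x.natDegree + j ≤ D) (hy : y ≠ 0 → y.natDegree + j ≤ D)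
    (h : x - y ≠ 0) : (x - y).natDegree + j ≤ D := by
  by_cases hx0 : x = 0
  · subst hx0
    rw [zero_sub, natDegree_neg]
    rw [zero_sub, neg_ne_zero] at h
    exact hy h
  by_cases hy0 : y = 0
  · subst hy0; rw [sub_zero]; exact hx hx0
  have h1 := hx hx0; have h2 := hy hy0
  have h3 : (x - y).natDegree ≤ max x.natDegree y.natDegree := Polynomial.natDegree_sub_le x y
  omega

lemma sub_bound_lt {F : Type*} [Field F] {x y : Polynomial F} {j D : ℕ}
    (hx : x ≠ 0 → x.natDegree + j < D) (hy : y ≠ 0 → y.natDegree + j < D)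
    (h : x - y ≠ 0) : (x - y).natDegree + j < D := by
  by_cases hx0 : x = 0
  · subst hx0
    rw [zero_sub, natDegree_neg]
    rw [zero_sub, neg_ne_zero] at h
    exact hy h
  by_cases hy0 : y = 0
  · subst hy0; rw [sub_zero]; exact hx hx0
  have h1 := hx hx0; have h2 := hy hy0
  have h3 : (x - y).natDegree ≤ max x.natDegree y.natDegree := Polynomial.natDegree_sub_le x y
  omega

lemma sum_ne_bot {ι : Type*} (s : Finset ι) (f : ι → WithBot ℕ)
    (h : ∀ i ∈ s, f i ≠ ⊥) : ∑ i ∈ s, f i ≠ ⊥ := by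
  classical
  induction s using Finset.induction with
  | empty => simp
  | insert a t hx ih =>
      rw [Finset.sum_insert hx]
      intro hbot
      rcases WithBot.add_eq_bot.mp hbot with hb | hb
      · exact h a (Finset.mem_insert_self a t) hb
      · exact ih (fun i hi => h i (Finset.mem_insert_of_mem hi)) hb

/-- Each update of Algorithm G weakly decreases the defect
`deg_u(lt(g_r)) − deg_u(a_{rr} y^r)`, and if the defect is unchanged then the
`y`-degree of `lt(g_r)` strictly decreases. (Assumes the diagonal dominance
inequalities and that an update occurs, i.e. `s = y-deg(lt(g_r)) < r`.) -/
theorem stmt15 {F : Type*} [Field F] (u r : ℕ)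
    (g : Fin (r + 1) → Polynomial (Polynomial F))
    (hlow : ∀ i : Fin (r + 1), (i : ℕ) < r → lmY F u (g i) = i)
    (hs : lmY F u (g (Fin.last r)) < r)
    (hdom : ∀ π : Equiv.Perm (Fin (r + 1)), π ≠ 1 →
      ∑ i, ((g i).coeff (π i : ℕ)).degree < ∑ i, ((g i).coeff (i : ℕ)).degree) :
    (((ofLex (lmKey F u (stepG F u r g (Fin.last r)))).1 : ℤ)
        - (((stepG F u r g (Fin.last r)).coeff r).natDegree + u * r)
      ≤ ((ofLex (lmKey F u (g (Fin.last r)))).1 : ℤ)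
        - (((g (Fin.last r)).coeff r).natDegree + u * r))
    ∧ ((((ofLex (lmKey F u (stepG F u r g (Fin.last r)))).1 : ℤ)
          - (((stepG F u r g (Fin.last r)).coeff r).natDegree + u * r)
        = ((ofLex (lmKey F u (g (Fin.last r)))).1 : ℤ)
          - (((g (Fin.last r)).coeff r).natDegree + u * r))
      → lmY F u (stepG F u r g (Fin.last r)) < lmY F u (g (Fin.last r))) := by
  classical
  set s := lmY F u (g (Fin.last r)) with hsdef
  set sbar : Fin (r + 1) := ⟨s, Nat.lt_succ_of_lt hs⟩ with hsbardef
  have hsbarval : (sbar : ℕ) = s := rfl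
  have hne : sbar ≠ Fin.last r := by
    intro h
    have h2 : (sbar : ℕ) = r := by rw [h, Fin.val_last]
    rw [hsbarval] at h2
    omega
  set σ : Equiv.Perm (Fin (r + 1)) := Equiv.swap sbar (Fin.last r) with hσdef
  have hσne : σ ≠ 1 := by
    intro h
    have h2 : σ sbar = sbar := by rw [h]; rfl
    rw [hσdef, Equiv.swap_apply_left] at h2
    exact hne h2.symm
  -- diagonal coefficients are nonzero
  have hdiag : ∀ i : Fin (r + 1), (g i).coeff (i : ℕ) ≠ 0 := by
    intro i hzero
    have h0 := hdom σ hσne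
    have hbot : ∑ i : Fin (r + 1), ((g i).coeff (i : ℕ)).degree = ⊥ := by
      rw [← Finset.add_sum_erase _ _ (Finset.mem_univ i),
        Polynomial.degree_eq_bot.mpr hzero, WithBot.bot_add]
    rw [hbot] at h0
    exact not_lt_bot h0
  -- splitting sums over Fin (r+1)
  have hsplit : ∀ f : Fin (r + 1) → WithBot ℕ,
      ∑ i, f i = (∑ i ∈ Finset.univ \ {sbar, Fin.last r}, f i + f sbar) + f (Fin.last r) := by
    intro f
    rw [Finset.sum_eq_sum_sdiff_singleton_add (Finset.mem_univ (Fin.last r)) f]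
    congr 1
    rw [Finset.sum_eq_sum_sdiff_singleton_add
      (i := sbar) (by simp [hne]) f]
    congr 2
    ext x
    simp only [Finset.mem_sdiff, Finset.mem_univ, Finset.mem_singleton, Finset.mem_insert,
      true_and]
    tauto
  -- the pairwise dominance inequality obtained from the swap permutation
  have hswap : ((g sbar).coeff r).degree + ((g (Fin.last r)).coeff s).degree <
      ((g sbar).coeff s).degree + ((g (Fin.last r)).coeff r).degree := by
    have h0 := hdom σ hσne
    rw [hsplit (fun i => ((g i).coeff ((σ i : Fin (r + 1)) : ℕ)).degree),
        hsplit (fun i => ((g i).coeff (i : ℕ)).degree)] at h0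
    have hfix : ∑ i ∈ Finset.univ \ {sbar, Fin.last r}, ((g i).coeff ((σ i : Fin (r + 1)) : ℕ)).degree
        = ∑ i ∈ Finset.univ \ {sbar, Fin.last r}, ((g i).coeff (i : ℕ)).degree := by
      apply Finset.sum_congr rfl
      intro i hi
      simp only [Finset.mem_sdiff, Finset.mem_univ, Finset.mem_insert, Finset.mem_singleton,
        true_and] at hi
      rw [hσdef]
      rw [Equiv.swap_apply_of_ne_of_ne (by tauto) (by tauto)]
    rw [hfix] at h0
    have hS : ∑ i ∈ Finset.univ \ {sbar, Fin.last r}, ((g i).coeff (i : ℕ)).degree ≠ ⊥ :=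
      sum_ne_bot _ _ (fun i _ hb => hdiag i (Polynomial.degree_eq_bot.mp hb))
    rw [add_assoc, add_assoc] at h0
    have h1 := (WithBot.add_lt_add_iff_left hS).mp h0
    have e1 : ((σ sbar : Fin (r + 1)) : ℕ) = r := by
      rw [hσdef, Equiv.swap_apply_left, Fin.val_last]
    have e2 : ((σ (Fin.last r) : Fin (r + 1)) : ℕ) = s := by
      rw [hσdef, Equiv.swap_apply_right, hsbarval]
    rw [e1, e2, Fin.val_last, hsbarval] at h1
    exact h1
  -- basic nonvanishing facts
  have harr : (g (Fin.last r)).coeff r ≠ 0 := by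
    have h := hdiag (Fin.last r); rwa [Fin.val_last] at h
  have hgr0 : g (Fin.last r) ≠ 0 := fun h => harr (by rw [h]; simp)
  have hbs : (g sbar).coeff s ≠ 0 := by
    have h := hdiag sbar; rwa [hsbarval] at h
  have hgs0 : g sbar ≠ 0 := fun h => hbs (by rw [h]; simp)
  obtain ⟨hars, hkey_r⟩ := lmKey_spec u hgr0
  rw [← hsdef] at hars hkey_r
  have hYs : lmY F u (g sbar) = s := by
    have h := hlow sbar (by rw [hsbarval]; exact hs)
    rwa [hsbarval] at h
  obtain ⟨hbs', hkey_s⟩ := lmKey_spec u hgs0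
  rw [hYs] at hkey_s hbs'
  have hswapN : (g sbar).coeff r ≠ 0 →
      ((g sbar).coeff r).natDegree + ((g (Fin.last r)).coeff s).natDegree
        < ((g sbar).coeff s).natDegree + ((g (Fin.last r)).coeff r).natDegree := by
    intro hbr
    rw [Polynomial.degree_eq_natDegree hbr, Polynomial.degree_eq_natDegree hars,
      Polynomial.degree_eq_natDegree hbs, Polynomial.degree_eq_natDegree harr] at hswap
    exact_mod_cast hswap
  have hkb_r := fun {j : ℕ} (hj : (g (Fin.last r)).coeff j ≠ 0) => key_bound hkey_r hj
  have hkb_s := fun {j : ℕ} (hj : (g sbar).coeff j ≠ 0) => key_bound hkey_s hj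
  have hc0 : ((g (Fin.last r)).coeff s).leadingCoeff / ((g sbar).coeff s).leadingCoeff ≠ 0 :=
    div_ne_zero (Polynomial.leadingCoeff_ne_zero.mpr hars) (Polynomial.leadingCoeff_ne_zero.mpr hbs)
  by_cases hd : ((g sbar).coeff s).natDegree ≤ ((g (Fin.last r)).coeff s).natDegree
  · -- Case d ≥ 0 : gᵣ ← gᵣ - c x^d g_s
    set c : F := ((g (Fin.last r)).coeff s).leadingCoeff / ((g sbar).coeff s).leadingCoeff
      with hcdef
    set m : Polynomial F := Polynomial.C c * (Polynomial.X : Polynomial F) ^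
        (((g (Fin.last r)).coeff s).natDegree - ((g sbar).coeff s).natDegree) with hmdef
    have hm0 : m ≠ 0 := mul_ne_zero (by simpa using hc0) (pow_ne_zero _ Polynomial.X_ne_zero)
    have hmdeg : m.natDegree
        = ((g (Fin.last r)).coeff s).natDegree - ((g sbar).coeff s).natDegree :=
      Polynomial.natDegree_C_mul_X_pow _ _ hc0
    have hmlc : m.leadingCoeff = c := Polynomial.leadingCoeff_C_mul_X_pow _ _
    have htoNat : ((((g (Fin.last r)).coeff s).natDegree : ℤ)
        - (((g sbar).coeff s).natDegree : ℤ)).toNat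
        = ((g (Fin.last r)).coeff s).natDegree - ((g sbar).coeff s).natDegree := by omega
    have hstep : stepG F u r g (Fin.last r) = g (Fin.last r) - Polynomial.C m * g sbar := by
      simp only [stepG]
      rw [← hsdef, dif_pos hs, ← hsbardef, ← hcdef]
      rw [if_pos (show (0:ℤ) ≤ (((g (Fin.last r)).coeff s).natDegree : ℤ)
        - (((g sbar).coeff s).natDegree : ℤ) by omega)]
      rw [Function.update_self, htoNat, ← hmdef]
    have hcoeff : ∀ j : ℕ, (stepG F u r g (Fin.last r)).coeff j
        = (g (Fin.last r)).coeff j - m * (g sbar).coeff j := by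
      intro j
      rw [hstep, Polynomial.coeff_sub, Polynomial.coeff_C_mul]
    have hmbr : (m * (g sbar).coeff r).degree < ((g (Fin.last r)).coeff r).degree := by
      by_cases hbr : (g sbar).coeff r = 0
      · rw [hbr, mul_zero, Polynomial.degree_zero, Polynomial.degree_eq_natDegree harr]
        exact WithBot.bot_lt_coe _
      · apply Polynomial.degree_lt_degree
        rw [Polynomial.natDegree_mul hm0 hbr, hmdeg]
        have h1 := hswapN hbr
        omega
    have hcrdeg : ((stepG F u r g (Fin.last r)).coeff r).degree
        = ((g (Fin.last r)).coeff r).degree := by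
      rw [hcoeff r]
      exact Polynomial.degree_sub_eq_left_of_degree_lt hmbr
    have hcr0 : (stepG F u r g (Fin.last r)).coeff r ≠ 0 := by
      intro h
      rw [h, Polynomial.degree_zero] at hcrdeg
      exact harr (Polynomial.degree_eq_bot.mp hcrdeg.symm)
    have hcrdeg' : ((stepG F u r g (Fin.last r)).coeff r).natDegree
        = ((g (Fin.last r)).coeff r).natDegree :=
      Polynomial.natDegree_eq_of_degree_eq hcrdeg
    have hmbs_deg : ((g (Fin.last r)).coeff s).degree = (m * (g sbar).coeff s).degree := by
      rw [Polynomial.degree_eq_natDegree (mul_ne_zero hm0 hbs),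
        Polynomial.degree_eq_natDegree hars, Polynomial.natDegree_mul hm0 hbs, hmdeg]
      norm_cast
      omega
    have hmbs_lc : ((g (Fin.last r)).coeff s).leadingCoeff
        = (m * (g sbar).coeff s).leadingCoeff := by
      rw [Polynomial.leadingCoeff_mul, hmlc, hcdef,
        div_mul_cancel₀ _ (Polynomial.leadingCoeff_ne_zero.mpr hbs)]
    have hdrop : ((stepG F u r g (Fin.last r)).coeff s).degree
        < (((g (Fin.last r)).coeff s).natDegree : WithBot ℕ) := by
      rw [hcoeff s, ← Polynomial.degree_eq_natDegree hars]
      exact Polynomial.degree_sub_lt hmbs_deg hars hmbs_lc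
    have hub : ∀ j : ℕ, (stepG F u r g (Fin.last r)).coeff j ≠ 0 →
        ((stepG F u r g (Fin.last r)).coeff j).natDegree + u * j
          ≤ ((g (Fin.last r)).coeff s).natDegree + u * s ∧
        (s ≤ j → ((stepG F u r g (Fin.last r)).coeff j).natDegree + u * j
          < ((g (Fin.last r)).coeff s).natDegree + u * s) := by
      intro j hj
      by_cases hjs : j = s
      · subst hjs
        have h1 : ((stepG F u r g (Fin.last r)).coeff s).natDegree
            < ((g (Fin.last r)).coeff s).natDegree :=
          (Polynomial.natDegree_lt_iff_degree_lt hj).mpr hdrop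
        exact ⟨by omega, fun _ => by omega⟩
      · rw [hcoeff j] at hj ⊢
        constructor
        · apply sub_bound_le ?_ ?_ hj
          · intro hx
            exact (hkb_r hx).1
          · intro hy
            have hb0 : (g sbar).coeff j ≠ 0 := right_ne_zero_of_mul hy
            have h2 := (hkb_s hb0).1
            rw [Polynomial.natDegree_mul hm0 hb0, hmdeg]
            omega
        · intro hsj
          have hsj' : s < j := lt_of_le_of_ne hsj (Ne.symm hjs)
          apply sub_bound_lt ?_ ?_ hj
          · intro hx
            exact (hkb_r hx).2 hsj'
          · intro hy
            have hb0 : (g sbar).coeff j ≠ 0 := right_ne_zero_of_mul hy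
            have h2 := (hkb_s hb0).2 hsj'
            rw [Polynomial.natDegree_mul hm0 hb0, hmdeg]
            omega
    have hstep0 : stepG F u r g (Fin.last r) ≠ 0 :=
      fun h => hcr0 (by rw [h, Polynomial.coeff_zero])
    obtain ⟨ht0, hkey'⟩ := lmKey_spec u hstep0
    have hXle := (hub _ ht0).1
    constructor
    · rw [hkey', hkey_r, hcrdeg']
      simp only [ofLex_toLex]
      omega
    · intro heq
      rw [hkey', hkey_r, hcrdeg'] at heq
      simp only [ofLex_toLex] at heq
      by_contra hcon
      push_neg at hcon
      have hlt := (hub _ ht0).2 hcon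
      omega
  · -- Case d < 0 : gᵣ ← x^(-d) gᵣ - c g_s
    push_neg at hd
    set c : F := ((g (Fin.last r)).coeff s).leadingCoeff / ((g sbar).coeff s).leadingCoeff
      with hcdef
    set e : ℕ := ((g sbar).coeff s).natDegree - ((g (Fin.last r)).coeff s).natDegree with hedef
    have hXe0 : (Polynomial.X : Polynomial F) ^ e ≠ 0 := pow_ne_zero _ Polynomial.X_ne_zero
    have htoNat : (-((((g (Fin.last r)).coeff s).natDegree : ℤ)
        - (((g sbar).coeff s).natDegree : ℤ))).toNat = e := by omega
    have hstep : stepG F u r g (Fin.last r)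
        = Polynomial.C ((Polynomial.X : Polynomial F) ^ e) * g (Fin.last r)
          - Polynomial.C (Polynomial.C c) * g sbar := by
      simp only [stepG]
      rw [← hsdef, dif_pos hs, ← hsbardef, ← hcdef]
      rw [if_neg (show ¬ (0:ℤ) ≤ (((g (Fin.last r)).coeff s).natDegree : ℤ)
        - (((g sbar).coeff s).natDegree : ℤ) by omega)]
      rw [Function.update_self, htoNat]
    have hcoeff : ∀ j : ℕ, (stepG F u r g (Fin.last r)).coeff j
        = (Polynomial.X : Polynomial F) ^ e * (g (Fin.last r)).coeff j
          - Polynomial.C c * (g sbar).coeff j := by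
      intro j
      rw [hstep, Polynomial.coeff_sub, Polynomial.coeff_C_mul, Polynomial.coeff_C_mul]
    have hXdeg : ∀ {p : Polynomial F}, p ≠ 0 →
        ((Polynomial.X : Polynomial F) ^ e * p).natDegree = e + p.natDegree := by
      intro p hp
      rw [Polynomial.natDegree_mul hXe0 hp, Polynomial.natDegree_X_pow]
    have hmbr : (Polynomial.C c * (g sbar).coeff r).degree
        < ((Polynomial.X : Polynomial F) ^ e * (g (Fin.last r)).coeff r).degree := by
      by_cases hbr : (g sbar).coeff r = 0
      · rw [hbr, mul_zero, Polynomial.degree_zero,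
          Polynomial.degree_eq_natDegree (mul_ne_zero hXe0 harr)]
        exact WithBot.bot_lt_coe _
      · apply Polynomial.degree_lt_degree
        rw [Polynomial.natDegree_C_mul hc0, hXdeg harr]
        have h1 := hswapN hbr
        omega
    have hcrdeg : ((stepG F u r g (Fin.last r)).coeff r).degree
        = ((Polynomial.X : Polynomial F) ^ e * (g (Fin.last r)).coeff r).degree := by
      rw [hcoeff r]
      exact Polynomial.degree_sub_eq_left_of_degree_lt hmbr
    have hcr0 : (stepG F u r g (Fin.last r)).coeff r ≠ 0 := by
      intro h
      rw [h, Polynomial.degree_zero] at hcrdeg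
      exact (mul_ne_zero hXe0 harr) (Polynomial.degree_eq_bot.mp hcrdeg.symm)
    have hcrdeg' : ((stepG F u r g (Fin.last r)).coeff r).natDegree
        = e + ((g (Fin.last r)).coeff r).natDegree := by
      rw [Polynomial.natDegree_eq_of_degree_eq hcrdeg, hXdeg harr]
    have hms_deg : ((Polynomial.X : Polynomial F) ^ e * (g (Fin.last r)).coeff s).degree
        = (Polynomial.C c * (g sbar).coeff s).degree := by
      rw [Polynomial.degree_eq_natDegree (mul_ne_zero hXe0 hars),
        Polynomial.degree_eq_natDegree (mul_ne_zero (by simpa using hc0) hbs),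
        hXdeg hars, Polynomial.natDegree_C_mul hc0]
      norm_cast
      omega
    have hms_lc : ((Polynomial.X : Polynomial F) ^ e * (g (Fin.last r)).coeff s).leadingCoeff
        = (Polynomial.C c * (g sbar).coeff s).leadingCoeff := by
      rw [Polynomial.leadingCoeff_mul, Polynomial.leadingCoeff_mul,
        Polynomial.leadingCoeff_X_pow, Polynomial.leadingCoeff_C, one_mul, hcdef,
        div_mul_cancel₀ _ (Polynomial.leadingCoeff_ne_zero.mpr hbs)]
    have hdrop : ((stepG F u r g (Fin.last r)).coeff s).degree
        < (((g sbar).coeff s).natDegree : WithBot ℕ) := by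
      rw [hcoeff s]
      have h2 := Polynomial.degree_sub_lt hms_deg (mul_ne_zero hXe0 hars) hms_lc
      rw [Polynomial.degree_eq_natDegree (mul_ne_zero hXe0 hars), hXdeg hars] at h2
      have h3 : ((e + ((g (Fin.last r)).coeff s).natDegree : ℕ) : WithBot ℕ)
          = (((g sbar).coeff s).natDegree : WithBot ℕ) := by
        norm_cast
        omega
      rwa [h3] at h2
    have hub : ∀ j : ℕ, (stepG F u r g (Fin.last r)).coeff j ≠ 0 →
        ((stepG F u r g (Fin.last r)).coeff j).natDegree + u * j
          ≤ ((g sbar).coeff s).natDegree + u * s ∧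
        (s ≤ j → ((stepG F u r g (Fin.last r)).coeff j).natDegree + u * j
          < ((g sbar).coeff s).natDegree + u * s) := by
      intro j hj
      by_cases hjs : j = s
      · subst hjs
        have h1 : ((stepG F u r g (Fin.last r)).coeff s).natDegree
            < ((g sbar).coeff s).natDegree :=
          (Polynomial.natDegree_lt_iff_degree_lt hj).mpr hdrop
        exact ⟨by omega, fun _ => by omega⟩
      · rw [hcoeff j] at hj ⊢
        constructor
        · apply sub_bound_le ?_ ?_ hj
          · intro hx
            have ha0 : (g (Fin.last r)).coeff j ≠ 0 := right_ne_zero_of_mul hx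
            have h2 := (hkb_r ha0).1
            rw [hXdeg ha0]
            omega
          · intro hy
            have hb0 : (g sbar).coeff j ≠ 0 := right_ne_zero_of_mul hy
            have h2 := (hkb_s hb0).1
            rw [Polynomial.natDegree_C_mul hc0]
            omega
        · intro hsj
          have hsj' : s < j := lt_of_le_of_ne hsj (Ne.symm hjs)
          apply sub_bound_lt ?_ ?_ hj
          · intro hx
            have ha0 : (g (Fin.last r)).coeff j ≠ 0 := right_ne_zero_of_mul hx
            have h2 := (hkb_r ha0).2 hsj'
            rw [hXdeg ha0]
            omega
          · intro hy
            have hb0 : (g sbar).coeff j ≠ 0 := right_ne_zero_of_mul hy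
            have h2 := (hkb_s hb0).2 hsj'
            rw [Polynomial.natDegree_C_mul hc0]
            omega
    have hstep0 : stepG F u r g (Fin.last r) ≠ 0 :=
      fun h => hcr0 (by rw [h, Polynomial.coeff_zero])
    obtain ⟨ht0, hkey'⟩ := lmKey_spec u hstep0
    have hXle := (hub _ ht0).1
    constructor
    · rw [hkey', hkey_r, hcrdeg']
      simp only [ofLex_toLex]
      omega
    · intro heq
      rw [hkey', hkey_r, hcrdeg'] at heq
      simp only [ofLex_toLex] at heq
      by_contra hcon
      push_neg at hcon
      have hlt := (hub _ ht0).2 hcon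
      omega
end

section
/- The minimal polynomial ay + b of the module I_v = I_{v,1,1} with respect to >_{k-1} satisfies deg_{k-1}(ay + b) ≤ k − 1 + ⌈(n−k)/2⌉. -/
open Polynomial

/-- The `(1,u)`-weighted degree of `f ∈ F[x][y]` (for `f ≠ 0`). -/
noncomputable def wdeg (F : Type*) [Field F] (u : ℕ) (f : Polynomial (Polynomial F)) : ℕ :=
  f.support.sup (fun j => (f.coeff j).natDegree + u * j)

lemma natDegree_le_of_mem_degreeLT {F : Type*} [Field F] {p : Polynomial F} {d : ℕ}
    (hp : p ∈ Polynomial.degreeLT F (d + 1)) : p.natDegree ≤ d := by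
  rw [Polynomial.mem_degreeLT] at hp
  by_cases h : p = 0
  · simp [h]
  · have := (Polynomial.natDegree_lt_iff_degree_lt h).mpr (by exact_mod_cast hp)
    omega

lemma exists_ab {F : Type*} [Field F] (n m w : ℕ) (hcard : n < (m + 1) + (w + 1))
    (α : Fin n → F) (v : Fin n → F) :
    ∃ a b : Polynomial F, ¬(a = 0 ∧ b = 0) ∧ a.natDegree ≤ m ∧ b.natDegree ≤ w ∧
      ∀ i, a.eval (α i) * v i + b.eval (α i) = 0 := by
  let φ : (Polynomial.degreeLT F (m + 1) × Polynomial.degreeLT F (w + 1)) →ₗ[F]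
      (Fin n → F) :=
    { toFun := fun p i => (p.1 : Polynomial F).eval (α i) * v i + (p.2 : Polynomial F).eval (α i)
      map_add' := by intro p q; funext i; simp; ring
      map_smul' := by intro c p; funext i; simp; ring }
  have : Module.Finite F (Polynomial.degreeLT F (m + 1)) :=
    Module.Finite.equiv (Polynomial.degreeLTEquiv F (m + 1)).symm
  have : Module.Finite F (Polynomial.degreeLT F (w + 1)) :=
    Module.Finite.equiv (Polynomial.degreeLTEquiv F (w + 1)).symm
  have hni : ¬ Function.Injective φ := by
    intro h
    have h1 := LinearMap.finrank_le_finrank_of_injective h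
    rw [Module.finrank_prod] at h1
    have e1 : Module.finrank F (Polynomial.degreeLT F (m + 1)) = m + 1 := by
      rw [(Polynomial.degreeLTEquiv F (m + 1)).finrank_eq]; simp
    have e2 : Module.finrank F (Polynomial.degreeLT F (w + 1)) = w + 1 := by
      rw [(Polynomial.degreeLTEquiv F (w + 1)).finrank_eq]; simp
    have e3 : Module.finrank F (Fin n → F) = n := by simp
    rw [e1, e2, e3] at h1
    omega
  rw [Function.not_injective_iff] at hni
  obtain ⟨x, y, hxy, hne⟩ := hni
  refine ⟨(x.1 : Polynomial F) - (y.1 : Polynomial F),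
          (x.2 : Polynomial F) - (y.2 : Polynomial F), ?_, ?_, ?_, ?_⟩
  · rintro ⟨h1, h2⟩
    apply hne
    have : (x.1 : Polynomial F) = y.1 := by linear_combination h1
    have : (x.2 : Polynomial F) = y.2 := by linear_combination h2
    ext <;> simp_all
  · exact natDegree_le_of_mem_degreeLT (Submodule.sub_mem _ x.1.2 y.1.2)
  · exact natDegree_le_of_mem_degreeLT (Submodule.sub_mem _ x.2.2 y.2.2)
  · intro i
    have := congrFun hxy i
    simp only [φ, LinearMap.coe_mk, AddHom.coe_mk] at this
    simp only [Polynomial.eval_sub]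
    linear_combination this

/-- The minimal polynomial `ay + b` of the module `I_v = I_{v,1,1}` (polynomials of
`y`-degree `≤ 1` vanishing at the `n` points `(αᵢ, vᵢ)`) with respect to `>_{k-1}`
satisfies `deg_{k-1}(ay + b) ≤ k − 1 + ⌈(n−k)/2⌉`. -/
theorem stmt18 {F : Type*} [Field F] (n k : ℕ) (hk : k < n) (hk1 : 1 ≤ k)
    (α : Fin n → F) (hα : Function.Injective α) (v : Fin n → F)
    (Q : Polynomial (Polynomial F)) (hQ0 : Q ≠ 0) (hQyDeg : Q.natDegree ≤ 1)
    (hQvan : ∀ i, Polynomial.eval (α i) (Polynomial.eval (Polynomial.C (v i)) Q) = 0)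
    (hQmin : ∀ f : Polynomial (Polynomial F), f ≠ 0 → f.natDegree ≤ 1 →
      (∀ i, Polynomial.eval (α i) (Polynomial.eval (Polynomial.C (v i)) f) = 0) →
      lmKey F (k - 1) Q ≤ lmKey F (k - 1) f) :
    wdeg F (k - 1) Q ≤ k - 1 + (n - k + 1) / 2 := by
  set u := k - 1 with hu
  set m := (n - k + 1) / 2 with hm
  obtain ⟨a, b, hab0, hadeg, hbdeg, hvan⟩ :=
    exists_ab n m (u + m) (by omega) α v
  set f : Polynomial (Polynomial F) := Polynomial.C b + Polynomial.C a * Polynomial.X with hf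
  have hcoeff0 : f.coeff 0 = b := by simp [hf]
  have hcoeff1 : f.coeff 1 = a := by simp [hf]
  have hfne : f ≠ 0 := by
    intro h
    exact hab0 ⟨by rw [← hcoeff1, h, Polynomial.coeff_zero],
                by rw [← hcoeff0, h, Polynomial.coeff_zero]⟩
  have hfdeg : f.natDegree ≤ 1 := by
    refine le_trans (Polynomial.natDegree_add_le _ _) ?_
    simp only [Polynomial.natDegree_C, max_le_iff]
    exact ⟨Nat.zero_le _, le_trans (Polynomial.natDegree_mul_le)
      (by simp [Polynomial.natDegree_C])⟩
  have hfvan : ∀ i, Polynomial.eval (α i) (Polynomial.eval (Polynomial.C (v i)) f) = 0 := by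
    intro i
    simp only [hf, Polynomial.eval_add, Polynomial.eval_mul, Polynomial.eval_C,
      Polynomial.eval_X]
    linear_combination hvan i
  have hkey : lmKey F u f ≤ toLex (u + m, 1) := by
    apply Finset.sup_le
    intro j hj
    have hj1 : j ≤ 1 := le_trans (Polynomial.le_natDegree_of_mem_supp j hj) hfdeg
    interval_cases j
    · rw [hcoeff0, Prod.Lex.le_iff]
      simp only [ofLex_toLex]
      omega
    · rw [hcoeff1, Prod.Lex.le_iff]
      simp only [ofLex_toLex]
      omega
  have hQkey := (hQmin f hfne hfdeg hfvan).trans hkey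
  have hfinal : wdeg F u Q ≤ u + m := by
    apply Finset.sup_le
    intro j hj
    have h1 : toLex ((Q.coeff j).natDegree + u * j, j) ≤ lmKey F u Q :=
      Finset.le_sup (f := fun j => toLex ((Q.coeff j).natDegree + u * j, j)) hj
    have h2 := h1.trans hQkey
    rw [Prod.Lex.le_iff] at h2
    simp only [ofLex_toLex] at h2
    omega
  exact hfinal
end
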